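/- arXiv:1910.04022 — 5 statements merged into one kernel-verified Lean document; each statement's English description precedes it below -/
import Mathlib

section
/- For a finite simple graph G on M vertices with adjacency matrix A, define the GBS polynomial GBS_G(x) = Σ_{S ⊆ V} (-1)^{|S|/2} haf(A_S)^2 x^{M-|S|}, where A_S is the submatrix indexed by S and haf denotes the hafnian (with haf of odd-sized or empty matrices being 0 and 1 respectively). Then for the disjoint union of two graphs, GBS_{G₁ ⊎ G₂}(x) = GBS_{G₁}(x) · GBS_{G₂}(x). -/
open Finset Polynomial

/-- The hafnian of an `n × n` matrix: `(1/((n/2)! 2^(n/2))) ∑_{σ} ∏_j A_{σ(2j), σ(2j+1)}`,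
taken to be `0` when `n` is odd and `1` for the empty matrix. -/
noncomputable def haf {F : Type*} [Field F] {n : ℕ} (A : Matrix (Fin n) (Fin n) F) : F :=
  if h : 2 ∣ n then
    (((n / 2).factorial * 2 ^ (n / 2) : ℕ) : F)⁻¹ *
      ∑ σ : Equiv.Perm (Fin n), ∏ j : Fin (n / 2),
        A (σ ⟨2 * j.1, by have h1 := Nat.div_mul_cancel h; have h2 := j.isLt; omega⟩)
          (σ ⟨2 * j.1 + 1, by have h1 := Nat.div_mul_cancel h; have h2 := j.isLt; omega⟩)
  else 0

/-- The principal submatrix of `A` indexed by the subset `S` of the rows/columns. -/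
def subm {F : Type*} {M : ℕ} (A : Matrix (Fin M) (Fin M) F) (S : Finset (Fin M)) :
    Matrix (Fin S.card) (Fin S.card) F :=
  fun i j => A (S.orderEmbOfFin rfl i) (S.orderEmbOfFin rfl j)

/-- The GBS polynomial `∑_{S ⊆ V} (-1)^{|S|/2} haf(A_S)² x^{M-|S|}`. -/
noncomputable def GBS {F : Type*} [Field F] {M : ℕ} (A : Matrix (Fin M) (Fin M) F) :
    Polynomial F :=
  ∑ S : Finset (Fin M),
    Polynomial.C ((-1 : F) ^ (S.card / 2) * (haf (subm A S)) ^ 2) * Polynomial.X ^ (M - S.card)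

/-- The signless GBS polynomial `∑_{S ⊆ V} haf(A_S)² x^{M-|S|}`. -/
noncomputable def GBSplus {F : Type*} [Field F] {M : ℕ} (A : Matrix (Fin M) (Fin M) F) :
    Polynomial F :=
  ∑ S : Finset (Fin M), Polynomial.C ((haf (subm A S)) ^ 2) * Polynomial.X ^ (M - S.card)

/-- The signless matching polynomial `μ⁺(A, z) = ∑_{T} haf(A_{T,T}) z^{M-|T|}`. -/
noncomputable def muPlus {F : Type*} [Field F] {M : ℕ} (A : Matrix (Fin M) (Fin M) F) :
    Polynomial F :=
  ∑ S : Finset (Fin M), Polynomial.C (haf (subm A S)) * Polynomial.X ^ (M - S.card)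

/-- The (signed) matching polynomial `μ(A, z) = ∑_{T} (-1)^{|T|/2} haf(A_{T,T}) z^{M-|T|}`. -/
noncomputable def matchPoly {F : Type*} [Field F] {M : ℕ} (A : Matrix (Fin M) (Fin M) F) :
    Polynomial F :=
  ∑ S : Finset (Fin M),
    Polynomial.C ((-1 : F) ^ (S.card / 2) * haf (subm A S)) * Polynomial.X ^ (M - S.card)

/-- The adjacency matrix `[[A, xI],[xI, A]]` of the prism `G □ P₂(x)` over the graph
with adjacency matrix `A`. -/
noncomputable def prism {F : Type*} [Field F] {M : ℕ} (A : Matrix (Fin M) (Fin M) F) (x : F) :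
    Matrix (Fin (M + M)) (Fin (M + M)) F :=
  Matrix.submatrix (Matrix.fromBlocks A (x • 1) (x • 1) A) finSumFinEquiv.symm finSumFinEquiv.symm

/-- The adjacency matrix `A₁ ⊕ A₂` of the disjoint union of two graphs. -/
def dsum {F : Type*} [Zero F] {M N : ℕ} (A : Matrix (Fin M) (Fin M) F)
    (B : Matrix (Fin N) (Fin N) F) : Matrix (Fin (M + N)) (Fin (M + N)) F :=
  Matrix.submatrix (Matrix.fromBlocks A 0 0 B) finSumFinEquiv.symm finSumFinEquiv.symm

section AuxHafnian

variable {F : Type*} [Field F]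


noncomputable def hafAux (τ : Type*) {ι : Type*} [Fintype τ] [DecidableEq τ] [Fintype ι] [DecidableEq ι]
    (A : Matrix ι ι F) : F :=
  ∑ f ∈ univ.filter (fun f : τ → ι × ι =>
      Function.Injective fun k : τ × Bool => cond k.2 (f k.1).1 (f k.1).2),
    ∏ j, A (f j).1 (f j).2

lemma hafAux_equiv {τ τ' ι ι' : Type*} [Fintype τ] [Fintype τ'] [DecidableEq τ] [DecidableEq τ'] [Fintype ι] [Fintype ι']
    [DecidableEq ι] [DecidableEq ι'] (e : τ' ≃ τ) (u : ι' ≃ ι) (A : Matrix ι ι F) :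
    hafAux τ' (A.submatrix u u) = hafAux τ A := by
  unfold hafAux
  refine Finset.sum_nbij' (fun f => fun t => (u (f (e.symm t)).1, u (f (e.symm t)).2))
    (fun g => fun t' => (u.symm (g (e t')).1, u.symm (g (e t')).2)) ?_ ?_ ?_ ?_ ?_
  · intro f hf
    simp only [mem_filter, mem_univ, true_and] at hf ⊢
    have : (fun k : τ × Bool => cond k.2 (u (f (e.symm k.1)).1) (u (f (e.symm k.1)).2))
        = (u ∘ fun k : τ' × Bool => cond k.2 (f k.1).1 (f k.1).2) ∘
          (Equiv.prodCongr e.symm (Equiv.refl Bool)) := by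
      funext k; cases k with
      | mk t b => cases b <;> rfl
    rw [this]
    exact ((u.injective.comp hf).comp (Equiv.prodCongr e.symm (Equiv.refl Bool)).injective)
  · intro g hg
    simp only [mem_filter, mem_univ, true_and] at hg ⊢
    have : (fun k : τ' × Bool => cond k.2 (u.symm (g (e k.1)).1) (u.symm (g (e k.1)).2))
        = (u.symm ∘ fun k : τ × Bool => cond k.2 (g k.1).1 (g k.1).2) ∘
          (Equiv.prodCongr e (Equiv.refl Bool)) := by
      funext k; cases k with
      | mk t b => cases b <;> rfl
    rw [this]
    exact ((u.symm.injective.comp hg).comp (Equiv.prodCongr e (Equiv.refl Bool)).injective)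
  · intro f _; funext t'; simp
  · intro g _; funext t; simp
  · intro f _
    rw [← Equiv.prod_comp e.symm]
    simp [Matrix.submatrix]

lemma hafAux_eq_zero {τ ι : Type*} [Fintype τ] [DecidableEq τ] [Fintype ι] [DecidableEq ι]
    (A : Matrix ι ι F) (h : Fintype.card ι < 2 * Fintype.card τ) :
    hafAux τ A = 0 := by
  unfold hafAux
  refine Finset.sum_eq_zero fun f hf => ?_
  simp only [mem_filter, mem_univ, true_and] at hf
  have := Fintype.card_le_of_injective _ hf
  simp [Fintype.card_prod] at this
  omega

lemma perm_sum_eq_hafAux {n : ℕ} (h : 2 ∣ n) (A : Matrix (Fin n) (Fin n) F) :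
    (∑ σ : Equiv.Perm (Fin n), ∏ j : Fin (n / 2),
        A (σ ⟨2 * j.1, by have h1 := Nat.div_mul_cancel h; have h2 := j.isLt; omega⟩)
          (σ ⟨2 * j.1 + 1, by have h1 := Nat.div_mul_cancel h; have h2 := j.isLt; omega⟩))
      = hafAux (Fin (n / 2)) A := by
  have hn : n / 2 * 2 = n := Nat.div_mul_cancel h
  unfold hafAux
  refine Finset.sum_bij
    (fun (σ : Equiv.Perm (Fin n)) _ => fun j : Fin (n / 2) =>
      (σ ⟨2 * j.1, by have := j.isLt; omega⟩, σ ⟨2 * j.1 + 1, by have := j.isLt; omega⟩))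
    ?_ ?_ ?_ ?_
  · intro σ _
    simp only [mem_filter, mem_univ, true_and]
    have : (fun k : Fin (n / 2) × Bool =>
        cond k.2 (σ ⟨2 * k.1.1, by have := k.1.isLt; omega⟩)
          (σ ⟨2 * k.1.1 + 1, by have := k.1.isLt; omega⟩))
        = σ ∘ (fun k : Fin (n / 2) × Bool =>
            (⟨2 * k.1.1 + cond k.2 0 1, by have := k.1.isLt; cases k.2 <;> simp <;> omega⟩ : Fin n)) := by
      funext k; cases k with
      | mk j b => cases b <;> rfl
    rw [this]
    refine σ.injective.comp ?_
    rintro ⟨j, b⟩ ⟨j', b'⟩ hkk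
    have hv : 2 * j.1 + cond b 0 1 = 2 * j'.1 + cond b' 0 1 := Fin.val_eq_of_eq hkk
    cases b <;> cases b' <;>
      simp only [Bool.cond_true, Bool.cond_false] at hv <;>
      [ exact Prod.ext (Fin.ext (show j.1 = j'.1 by omega)) rfl;
        exact absurd hv (by omega);
        exact absurd hv (by omega);
        exact Prod.ext (Fin.ext (show j.1 = j'.1 by omega)) rfl ]
  · intro σ₁ _ σ₂ _ hi
    refine Equiv.ext fun k => ?_
    have hj : k.1 / 2 < n / 2 := by have := k.isLt; omega
    have h1 := congrFun hi ⟨k.1 / 2, hj⟩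
    obtain ⟨ha, hb⟩ := Prod.ext_iff.mp h1
    show σ₁ k = σ₂ k
    rcases Nat.even_or_odd k.1 with he | ho
    · obtain ⟨m, hm⟩ := he
      have hk : k = (⟨2 * (k.1 / 2), by have := k.isLt; omega⟩ : Fin n) := by
        apply Fin.ext; show k.1 = 2 * (k.1 / 2); omega
      rw [hk]; exact ha
    · obtain ⟨m, hm⟩ := ho
      have hk : k = (⟨2 * (k.1 / 2) + 1, by have := k.isLt; omega⟩ : Fin n) := by
        apply Fin.ext; show k.1 = 2 * (k.1 / 2) + 1; omega
      rw [hk]; exact hb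
  · intro f hf
    simp only [mem_filter, mem_univ, true_and] at hf
    set dec : Fin n → Fin (n / 2) × Bool :=
      fun k => (⟨k.1 / 2, by have := k.isLt; omega⟩, decide (k.1 % 2 = 0)) with hdec
    have hdecinj : Function.Injective dec := by
      intro k k' hk
      obtain ⟨h1, h2⟩ := Prod.ext_iff.mp hk
      have h1' := Fin.val_eq_of_eq h1
      simp only [hdec, decide_eq_decide] at h2
      simp only [hdec] at h1'
      exact Fin.ext (by omega)
    have hginj : Function.Injective
        ((fun k : Fin (n / 2) × Bool => cond k.2 (f k.1).1 (f k.1).2) ∘ dec) :=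
      hf.comp hdecinj
    have hgbij := Finite.injective_iff_bijective.mp hginj
    refine ⟨Equiv.ofBijective _ hgbij, mem_univ _, ?_⟩
    funext j
    have e1 : dec ⟨2 * j.1, by have := j.isLt; omega⟩ = (j, true) := by
      refine Prod.ext (Fin.ext ?_) ?_
      · show 2 * j.1 / 2 = j.1; omega
      · show decide (2 * j.1 % 2 = 0) = true
        rw [decide_eq_true_eq]; omega
    have e2 : dec ⟨2 * j.1 + 1, by have := j.isLt; omega⟩ = (j, false) := by
      refine Prod.ext (Fin.ext ?_) ?_
      · show (2 * j.1 + 1) / 2 = j.1; omega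
      · show decide ((2 * j.1 + 1) % 2 = 0) = false
        simp only [decide_eq_false_iff_not]; omega
    refine Prod.ext ?_ ?_
    · show ((fun k : Fin (n / 2) × Bool => cond k.2 (f k.1).1 (f k.1).2) ∘ dec) _ = _
      rw [Function.comp_apply, e1]; rfl
    · show ((fun k : Fin (n / 2) × Bool => cond k.2 (f k.1).1 (f k.1).2) ∘ dec) _ = _
      rw [Function.comp_apply, e2]; rfl
  · intro σ _; rfl

lemma hafAux_fromBlocks {τ ι κ : Type*} [Fintype τ] [DecidableEq τ] [Fintype ι] [DecidableEq ι]
    [Fintype κ] [DecidableEq κ] (A : Matrix ι ι F) (B : Matrix κ κ F) :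
    hafAux τ (Matrix.fromBlocks A 0 0 B) =
      ∑ J : Finset τ, hafAux (↥J) A * hafAux (↥(Jᶜ : Finset τ)) B := by
  classical
  set D := Matrix.fromBlocks A (0 : Matrix ι κ F) (0 : Matrix κ ι F) B with hD
  set P : (τ → (ι ⊕ κ) × (ι ⊕ κ)) → Prop :=
    fun f => Function.Injective fun k : τ × Bool => cond k.2 (f k.1).1 (f k.1).2 with hP
  set Q : (τ → (ι ⊕ κ) × (ι ⊕ κ)) → Prop :=
    fun f => ∀ j, (f j).1.isLeft = (f j).2.isLeft with hQ
  set side : (τ → (ι ⊕ κ) × (ι ⊕ κ)) → Finset τ :=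
    fun f => univ.filter fun j => (f j).1.isLeft with hside
  have h1 : hafAux τ D = ∑ f ∈ univ.filter (fun f => P f ∧ Q f), ∏ j, D (f j).1 (f j).2 := by
    rw [hafAux]
    symm
    apply Finset.sum_subset
    · exact Finset.monotone_filter_right univ (fun f _ hf => hf.1)
    · intro f hfP hfn
      simp only [mem_filter, mem_univ, true_and] at hfP hfn
      have hnq : ¬ Q f := fun hq => hfn ⟨hfP, hq⟩
      rw [hQ] at hnq
      obtain ⟨j, hj⟩ := not_forall.mp hnq
      refine Finset.prod_eq_zero (mem_univ j) ?_
      rcases hx : (f j).1 with x | x <;> rcases hy : (f j).2 with y | y <;>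
        rw [hx, hy] at hj <;>
        [ exact absurd rfl hj; simp [hD]; simp [hD]; exact absurd rfl hj ]
  rw [h1, ← Finset.sum_fiberwise (univ.filter (fun f => P f ∧ Q f)) side
    (fun f => ∏ j, D (f j).1 (f j).2)]
  refine Finset.sum_congr rfl fun J _ => ?_
  rw [hafAux, hafAux, Finset.sum_mul_sum, ← Finset.sum_product']
  refine (Finset.sum_bij (fun gh _ => fun j : τ =>
      if hj : j ∈ J then
        ((Sum.inl (gh.1 ⟨j, hj⟩).1 : ι ⊕ κ), (Sum.inl (gh.1 ⟨j, hj⟩).2 : ι ⊕ κ))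
      else
        ((Sum.inr (gh.2 ⟨j, Finset.mem_compl.mpr hj⟩).1 : ι ⊕ κ),
         (Sum.inr (gh.2 ⟨j, Finset.mem_compl.mpr hj⟩).2 : ι ⊕ κ)))
    ?_ ?_ ?_ ?_).symm
  · -- membership
    rintro ⟨g, h⟩ hgh
    simp only [Finset.mem_product, mem_filter, mem_univ, true_and] at hgh
    obtain ⟨hg, hh⟩ := hgh
    set i0 : τ → (ι ⊕ κ) × (ι ⊕ κ) := fun j =>
      if hj : j ∈ J then
        ((Sum.inl (g ⟨j, hj⟩).1 : ι ⊕ κ), (Sum.inl (g ⟨j, hj⟩).2 : ι ⊕ κ))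
      else
        ((Sum.inr (h ⟨j, Finset.mem_compl.mpr hj⟩).1 : ι ⊕ κ),
         (Sum.inr (h ⟨j, Finset.mem_compl.mpr hj⟩).2 : ι ⊕ κ)) with hi0
    have key : ∀ (j : τ) (b : Bool), (fun k : τ × Bool => cond k.2 (i0 k.1).1 (i0 k.1).2) (j, b)
        = if hj : j ∈ J then Sum.inl (cond b (g ⟨j, hj⟩).1 (g ⟨j, hj⟩).2)
          else Sum.inr (cond b (h ⟨j, Finset.mem_compl.mpr hj⟩).1
            (h ⟨j, Finset.mem_compl.mpr hj⟩).2) := by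
      intro j b
      by_cases hj : j ∈ J <;> cases b <;> simp [hi0, hj]
    simp only [mem_filter, mem_univ, true_and]
    refine ⟨⟨?_, ?_⟩, ?_⟩
    · -- P
      rintro ⟨j, b⟩ ⟨j', b'⟩ heq
      rw [key, key] at heq
      by_cases hj : j ∈ J <;> by_cases hj' : j' ∈ J
      · rw [dif_pos hj, dif_pos hj'] at heq
        have := hg (a₁ := (⟨j, hj⟩, b)) (a₂ := (⟨j', hj'⟩, b')) (Sum.inl_injective heq)
        obtain ⟨h1', h2'⟩ := Prod.ext_iff.mp this
        exact Prod.ext (congrArg Subtype.val h1') h2'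
      · rw [dif_pos hj, dif_neg hj'] at heq; exact absurd heq (by simp)
      · rw [dif_neg hj, dif_pos hj'] at heq; exact absurd heq (by simp)
      · rw [dif_neg hj, dif_neg hj'] at heq
        have := hh (a₁ := (⟨j, Finset.mem_compl.mpr hj⟩, b))
          (a₂ := (⟨j', Finset.mem_compl.mpr hj'⟩, b')) (Sum.inr_injective heq)
        obtain ⟨h1', h2'⟩ := Prod.ext_iff.mp this
        exact Prod.ext (congrArg Subtype.val h1') h2'
    · -- Q
      intro j
      by_cases hj : j ∈ J <;> simp [hi0, hj]
    · -- side = J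
      ext j
      by_cases hj : j ∈ J <;> simp [hside, hi0, hj]
  · -- injectivity
    rintro ⟨g, h⟩ _ ⟨g', h'⟩ _ heq
    refine Prod.ext ?_ ?_
    · funext jj
      have := congrFun heq jj.1
      simp only at this
      rw [dif_pos jj.2, dif_pos jj.2] at this
      obtain ⟨h1', h2'⟩ := Prod.ext_iff.mp this
      exact Prod.ext (Sum.inl_injective h1') (Sum.inl_injective h2')
    · funext jj
      have hjj : jj.1 ∉ J := Finset.mem_compl.mp jj.2
      have := congrFun heq jj.1
      simp only at this
      rw [dif_neg hjj, dif_neg hjj] at this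
      obtain ⟨h1', h2'⟩ := Prod.ext_iff.mp this
      exact Prod.ext (Sum.inr_injective h1') (Sum.inr_injective h2')
  · -- surjectivity
    intro f hf
    simp only [mem_filter, mem_univ, true_and] at hf
    obtain ⟨⟨hfP, hfQ⟩, hfside⟩ := hf
    have hmemL : ∀ j : τ, j ∈ J → ((f j).1.isLeft ∧ (f j).2.isLeft) := by
      intro j hj
      rw [← hfside] at hj
      simp only [hside, mem_filter, mem_univ, true_and] at hj
      exact ⟨hj, (hfQ j) ▸ hj⟩
    have hmemR : ∀ j : τ, j ∉ J → ((f j).1.isRight ∧ (f j).2.isRight) := by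
      intro j hj
      rw [← hfside] at hj
      simp only [hside, mem_filter, mem_univ, true_and, Bool.not_eq_true] at hj
      exact ⟨Sum.not_isLeft.mp (by rw [hj]; exact Bool.false_ne_true),
             Sum.not_isLeft.mp (by rw [← hfQ j, hj]; exact Bool.false_ne_true)⟩
    refine ⟨(fun jj : ↥J => ((f jj.1).1.getLeft (hmemL jj.1 jj.2).1,
        (f jj.1).2.getLeft (hmemL jj.1 jj.2).2),
      fun jj : ↥(Jᶜ : Finset τ) =>
        ((f jj.1).1.getRight (hmemR jj.1 (Finset.mem_compl.mp jj.2)).1,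
         (f jj.1).2.getRight (hmemR jj.1 (Finset.mem_compl.mp jj.2)).2)), ?_, ?_⟩
    · simp only [Finset.mem_product, mem_filter, mem_univ, true_and]
      constructor
      · rintro ⟨jj, b⟩ ⟨jj', b'⟩ heq
        have h1' : (fun k : τ × Bool => cond k.2 (f k.1).1 (f k.1).2) (jj.1, b)
            = (fun k : τ × Bool => cond k.2 (f k.1).1 (f k.1).2) (jj'.1, b') := by
          simp only
          cases b <;> cases b' <;>
            simpa using congrArg (Sum.inl (β := κ)) heq
        have := hfP h1'
        obtain ⟨ha, hb⟩ := Prod.ext_iff.mp this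
        exact Prod.ext (Subtype.ext ha) hb
      · rintro ⟨jj, b⟩ ⟨jj', b'⟩ heq
        have h1' : (fun k : τ × Bool => cond k.2 (f k.1).1 (f k.1).2) (jj.1, b)
            = (fun k : τ × Bool => cond k.2 (f k.1).1 (f k.1).2) (jj'.1, b') := by
          simp only
          cases b <;> cases b' <;>
            simpa using congrArg (Sum.inr (α := ι)) heq
        have := hfP h1'
        obtain ⟨ha, hb⟩ := Prod.ext_iff.mp this
        exact Prod.ext (Subtype.ext ha) hb
    · funext j
      beta_reduce
      by_cases hj : j ∈ J
      · rw [dif_pos hj]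
        exact (Prod.ext (Sum.inl_getLeft _ _) (Sum.inl_getLeft _ _))
      · rw [dif_neg hj]
        exact (Prod.ext (Sum.inr_getRight _ _) (Sum.inr_getRight _ _))
  · -- values
    rintro ⟨g, h⟩ hgh
    rw [← Finset.prod_mul_prod_compl J (fun j : τ => D _ _)]
    congr 1
    · rw [← Finset.prod_attach J]
      rw [show (univ : Finset ↥J) = J.attach from Finset.univ_eq_attach J ▸ rfl]
      refine Finset.prod_congr rfl fun x _ => ?_
      beta_reduce
      rw [dif_pos x.2]
      simp [hD]
    · rw [← Finset.prod_attach Jᶜ]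
      rw [show (univ : Finset ↥(Jᶜ : Finset τ)) = Jᶜ.attach from rfl]
      refine Finset.prod_congr rfl fun x _ => ?_
      beta_reduce
      rw [dif_neg (Finset.mem_compl.mp x.2)]
      simp [hD]

noncomputable def hafG {ι : Type*} [Fintype ι] [DecidableEq ι] (A : Matrix ι ι F) : F :=
  if 2 ∣ Fintype.card ι then
    (((Fintype.card ι / 2).factorial * 2 ^ (Fintype.card ι / 2) : ℕ) : F)⁻¹ *
      hafAux (Fin (Fintype.card ι / 2)) A
  else 0

lemma haf_eq_hafG {n : ℕ} (A : Matrix (Fin n) (Fin n) F) : haf A = hafG A := by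
  unfold haf hafG
  by_cases h : 2 ∣ n
  · rw [dif_pos h, if_pos (show 2 ∣ Fintype.card (Fin n) by simpa using h)]
    rw [Fintype.card_fin]
    congr 1
    exact perm_sum_eq_hafAux h A
  · rw [dif_neg h, if_neg (by simpa using h)]

lemma hafG_reindex {ι ι' : Type*} [Fintype ι] [Fintype ι'] [DecidableEq ι] [DecidableEq ι']
    (e : ι' ≃ ι) (A : Matrix ι ι F) : hafG (A.submatrix e e) = hafG A := by
  have hc : Fintype.card ι' = Fintype.card ι := Fintype.card_congr e
  unfold hafG
  rw [hc]
  by_cases h : 2 ∣ Fintype.card ι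
  · rw [if_pos h, if_pos h]
    congr 1
    exact hafAux_equiv (Equiv.refl _) e A
  · rw [if_neg h, if_neg h]

lemma hafAux_card_eq {τ ι : Type*} [Fintype τ] [DecidableEq τ] [Fintype ι] [DecidableEq ι]
    (J : Finset τ) (A : Matrix ι ι F) : hafAux (↥J) A = hafAux (Fin J.card) A := by
  have h := hafAux_equiv (F := F) (τ' := ↥J) (τ := Fin J.card) J.equivFin (Equiv.refl ι) A
  simpa using h

lemma hafG_fromBlocks [CharZero F] {ι κ : Type*} [Fintype ι] [DecidableEq ι]
    [Fintype κ] [DecidableEq κ] (A : Matrix ι ι F) (B : Matrix κ κ F) :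
    hafG (Matrix.fromBlocks A 0 0 B) = hafG A * hafG B := by
  classical
  set a := Fintype.card ι with ha
  set b := Fintype.card κ with hb
  have hcard : Fintype.card (ι ⊕ κ) = a + b := by simp [ha, hb]
  by_cases hab : 2 ∣ (a + b)
  · set p := (a + b) / 2 with hp
    have hLHS : hafG (Matrix.fromBlocks A (0 : Matrix ι κ F) (0 : Matrix κ ι F) B)
        = (((p.factorial * 2 ^ p : ℕ)) : F)⁻¹ *
          ∑ J : Finset (Fin p), hafAux (Fin J.card) A * hafAux (Fin (p - J.card)) B := by
      rw [hafG, hcard, if_pos hab, hafAux_fromBlocks]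
      congr 1
      refine Finset.sum_congr rfl fun J _ => ?_
      rw [hafAux_card_eq, hafAux_card_eq,
        show (Jᶜ : Finset (Fin p)).card = p - J.card from by
          rw [Finset.card_compl, Fintype.card_fin]]
    by_cases hA : 2 ∣ a
    · have hB : 2 ∣ b := by omega
      set p₁ := a / 2 with hp₁
      set p₂ := b / 2 with hp₂
      have hpp : p = p₁ + p₂ := by omega
      have hzero : ∀ J : Finset (Fin p), J.card ≠ p₁ →
          hafAux (Fin J.card) A * hafAux (Fin (p - J.card)) (B : Matrix κ κ F) = 0 := by
        intro J hJ
        rcases lt_or_gt_of_ne hJ with hlt | hgt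
        · have : Fintype.card κ < 2 * Fintype.card (Fin (p - J.card)) := by
            rw [Fintype.card_fin, ← hb]; omega
          rw [hafAux_eq_zero _ this, mul_zero]
        · have : Fintype.card ι < 2 * Fintype.card (Fin J.card) := by
            rw [Fintype.card_fin, ← ha]; omega
          rw [hafAux_eq_zero _ this, zero_mul]
      have hsum : ∑ J : Finset (Fin p), hafAux (Fin J.card) A * hafAux (Fin (p - J.card)) B
          = (p.choose p₁ : ℕ) • (hafAux (Fin p₁) A * hafAux (Fin p₂) (B : Matrix κ κ F)) := by
        rw [← Finset.sum_filter_add_sum_filter_not Finset.univ (fun J : Finset (Fin p) => J.card = p₁)]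
        have hz2 : ∑ J ∈ Finset.univ.filter (fun J : Finset (Fin p) => ¬ J.card = p₁),
            (hafAux (Fin J.card) A * hafAux (Fin (p - J.card)) (B : Matrix κ κ F)) = 0 :=
          Finset.sum_eq_zero (fun J hJ => hzero J (Finset.mem_filter.mp hJ).2)
        rw [hz2, add_zero]
        have hconst : ∀ J ∈ Finset.univ.filter (fun J : Finset (Fin p) => J.card = p₁),
            hafAux (Fin J.card) A * hafAux (Fin (p - J.card)) (B : Matrix κ κ F)
              = hafAux (Fin p₁) A * hafAux (Fin p₂) B := by
          intro J hJ
          have hc : J.card = p₁ := (Finset.mem_filter.mp hJ).2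
          rw [hc, show p - p₁ = p₂ by omega]
        rw [Finset.sum_congr rfl hconst, Finset.sum_const]
        congr 1
        have : Finset.univ.filter (fun J : Finset (Fin p) => J.card = p₁)
            = Finset.powersetCard p₁ (Finset.univ : Finset (Fin p)) := by
          rw [Finset.powersetCard_eq_filter, Finset.powerset_univ]
        rw [this, Finset.card_powersetCard, Finset.card_univ, Fintype.card_fin]
      rw [hLHS, hsum, hafG, hafG, if_pos (ha ▸ hA), if_pos (hb ▸ hB)]
      rw [← ha, ← hb, ← hp₁, ← hp₂]
      have hne : ∀ m : ℕ, ((m.factorial * 2 ^ m : ℕ) : F) ≠ 0 := fun m =>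
        Nat.cast_ne_zero.mpr (Nat.mul_ne_zero (Nat.factorial_ne_zero _)
          (pow_ne_zero _ (by norm_num)))
      have h1 := hne p₁
      have h2 := hne p₂
      have h3 := hne p
      have hkey : (p.choose p₁ : ℕ) * (p₁.factorial * 2 ^ p₁) * (p₂.factorial * 2 ^ p₂)
          = p.factorial * 2 ^ p := by
        have := Nat.choose_mul_factorial_mul_factorial (show p₁ ≤ p by omega)
        have hsub : p - p₁ = p₂ := by omega
        rw [hsub] at this
        calc (p.choose p₁ : ℕ) * (p₁.factorial * 2 ^ p₁) * (p₂.factorial * 2 ^ p₂)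
            = (p.choose p₁ * p₁.factorial * p₂.factorial) * (2 ^ p₁ * 2 ^ p₂) := by ring
          _ = p.factorial * 2 ^ p := by rw [this, ← pow_add, show p₁ + p₂ = p by omega]
      have hkeyF : ((p.choose p₁ : ℕ) : F) * ((p₁.factorial * 2 ^ p₁ : ℕ) : F)
          * ((p₂.factorial * 2 ^ p₂ : ℕ) : F) = ((p.factorial * 2 ^ p : ℕ) : F) := by
        exact_mod_cast congrArg (Nat.cast (R := F)) hkey
      have hcp : ((p.choose p₁ : ℕ) : F) ≠ 0 :=
        Nat.cast_ne_zero.mpr (Nat.choose_pos (show p₁ ≤ p by omega)).ne'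
      have hinv : ((p.factorial * 2 ^ p : ℕ) : F)⁻¹ * ((p.choose p₁ : ℕ) : F)
          = ((p₁.factorial * 2 ^ p₁ : ℕ) : F)⁻¹ * ((p₂.factorial * 2 ^ p₂ : ℕ) : F)⁻¹ := by
        rw [← hkeyF]; field_simp
      rw [nsmul_eq_mul, ← mul_assoc, hinv]
      ring
    · -- a odd (and hence b odd)
      have hzero : ∀ J : Finset (Fin p),
          hafAux (Fin J.card) A * hafAux (Fin (p - J.card)) (B : Matrix κ κ F) = 0 := by
        intro J
        by_cases hgt : a < 2 * J.card
        · have : Fintype.card ι < 2 * Fintype.card (Fin J.card) := by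
            rw [Fintype.card_fin, ← ha]; omega
          rw [hafAux_eq_zero _ this, zero_mul]
        · have : Fintype.card κ < 2 * Fintype.card (Fin (p - J.card)) := by
            rw [Fintype.card_fin, ← hb]; omega
          rw [hafAux_eq_zero _ this, mul_zero]
      rw [hLHS, Finset.sum_eq_zero (fun J _ => hzero J), mul_zero]
      rw [hafG, if_neg (by rw [← ha]; exact hA), zero_mul]
  · rw [hafG, hcard, if_neg hab]
    have hor : ¬(2 ∣ a) ∨ ¬(2 ∣ b) := by omega
    unfold hafG
    rcases hor with h | h
    · rw [if_neg (show ¬ 2 ∣ Fintype.card ι by rw [← ha]; exact h), zero_mul]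
    · rw [if_neg (show ¬ 2 ∣ Fintype.card κ by rw [← hb]; exact h), mul_zero]

def restr {M : ℕ} (A : Matrix (Fin M) (Fin M) F) (S : Finset (Fin M)) : Matrix (↥S) (↥S) F :=
  Matrix.of fun i j => A i.1 j.1

lemma haf_subm_eq_hafG {M : ℕ} (A : Matrix (Fin M) (Fin M) F) (S : Finset (Fin M)) :
    haf (subm A S) = hafG (restr A S) := by
  rw [haf_eq_hafG]
  have h : subm A S = (restr A S).submatrix (S.orderIsoOfFin rfl).toEquiv
      (S.orderIsoOfFin rfl).toEquiv := by
    ext i j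
    simp [subm, restr, Matrix.submatrix_apply, Finset.coe_orderIsoOfFin_apply]
  rw [h, hafG_reindex]

variable {M₁ M₂ : ℕ}

def emba (M₁ M₂ : ℕ) : Fin M₁ ↪ Fin (M₁ + M₂) :=
  ⟨fun i => finSumFinEquiv (Sum.inl i), fun i j h => by
    simpa using finSumFinEquiv.injective h⟩

def embb (M₁ M₂ : ℕ) : Fin M₂ ↪ Fin (M₁ + M₂) :=
  ⟨fun i => finSumFinEquiv (Sum.inr i), fun i j h => by
    simpa using finSumFinEquiv.injective h⟩

def Fa (S : Finset (Fin (M₁ + M₂))) : Finset (Fin M₁) :=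
  univ.filter fun i => finSumFinEquiv (Sum.inl i) ∈ S

def Fb (S : Finset (Fin (M₁ + M₂))) : Finset (Fin M₂) :=
  univ.filter fun i => finSumFinEquiv (Sum.inr i) ∈ S

lemma mem_Fa {S : Finset (Fin (M₁ + M₂))} {i : Fin M₁} :
    i ∈ Fa S ↔ finSumFinEquiv (Sum.inl i) ∈ S := by
  unfold Fa; exact Finset.mem_filter.trans (and_iff_right (Finset.mem_univ _))

lemma mem_Fb {S : Finset (Fin (M₁ + M₂))} {i : Fin M₂} :
    i ∈ Fb S ↔ finSumFinEquiv (Sum.inr i) ∈ S := by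
  unfold Fb; exact Finset.mem_filter.trans (and_iff_right (Finset.mem_univ _))

noncomputable def usplit (S : Finset (Fin (M₁ + M₂))) : ↥(Fa S) ⊕ ↥(Fb S) ≃ ↥S := by
  refine Equiv.ofBijective (Sum.elim
    (fun i => (⟨finSumFinEquiv (Sum.inl i.1), mem_Fa.mp i.2⟩ : ↥S))
    (fun i => (⟨finSumFinEquiv (Sum.inr i.1), mem_Fb.mp i.2⟩ : ↥S))) ⟨?_, ?_⟩
  · rintro (x | x) (y | y) h <;> simp only [Sum.elim_inl, Sum.elim_inr, Subtype.mk.injEq] at h <;>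
      first
        | (exact congrArg Sum.inl (Subtype.ext (by simpa using finSumFinEquiv.injective h)))
        | (exact congrArg Sum.inr (Subtype.ext (by simpa using finSumFinEquiv.injective h)))
        | (exact absurd (finSumFinEquiv.injective h) (by simp))
  · rintro ⟨s, hs⟩
    rcases hx : finSumFinEquiv.symm s with x | x
    · have hk : finSumFinEquiv (Sum.inl x) = s := by
        rw [← hx, Equiv.apply_symm_apply]
      exact ⟨Sum.inl ⟨x, mem_Fa.mpr (hk ▸ hs)⟩, Subtype.ext hk⟩
    · have hk : finSumFinEquiv (Sum.inr x) = s := by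
        rw [← hx, Equiv.apply_symm_apply]
      exact ⟨Sum.inr ⟨x, mem_Fb.mpr (hk ▸ hs)⟩, Subtype.ext hk⟩

lemma card_split (S : Finset (Fin (M₁ + M₂))) : S.card = (Fa S).card + (Fb S).card := by
  have := Fintype.card_congr (usplit S)
  simpa [Fintype.card_sum, Fintype.card_coe] using this.symm

lemma haf_subm_dsum [CharZero F] (A : Matrix (Fin M₁) (Fin M₁) F)
    (B : Matrix (Fin M₂) (Fin M₂) F) (S : Finset (Fin (M₁ + M₂))) :
    haf (subm (dsum A B) S) = haf (subm A (Fa S)) * haf (subm B (Fb S)) := by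
  rw [haf_subm_eq_hafG, haf_subm_eq_hafG, haf_subm_eq_hafG]
  rw [← hafG_reindex (usplit S) (restr (dsum A B) S)]
  have hcompat : (restr (dsum A B) S).submatrix (usplit S) (usplit S)
      = Matrix.fromBlocks (restr A (Fa S)) 0 0 (restr B (Fb S)) := by
    ext x y
    rcases x with x | x <;> rcases y with y | y <;>
      simp [restr, Matrix.submatrix_apply, usplit, Equiv.ofBijective_apply, dsum,
        Equiv.symm_apply_apply]
  rw [hcompat, hafG_fromBlocks]

lemma haf_odd {n : ℕ} (h : ¬ 2 ∣ n) (A : Matrix (Fin n) (Fin n) F) : haf A = 0 :=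
  dif_neg h

theorem GBS_dsum [CharZero F] (A : Matrix (Fin M₁) (Fin M₁) F)
    (B : Matrix (Fin M₂) (Fin M₂) F) :
    GBS (dsum A B) = GBS A * GBS B := by
  rw [GBS, GBS, GBS, Finset.sum_mul_sum, ← Finset.sum_product']
  refine Finset.sum_nbij' (fun S => (Fa S, Fb S))
    (fun q => (q.1.map (emba M₁ M₂)) ∪ (q.2.map (embb M₁ M₂))) ?_ ?_ ?_ ?_ ?_
  · intro S _; exact Finset.mem_product.mpr ⟨mem_univ _, mem_univ _⟩
  · intro q _; exact mem_univ _
  · -- left inverse : j (i S) = S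
    intro S _
    ext k
    simp only [Finset.mem_union, Finset.mem_map, mem_Fa, mem_Fb, emba, embb,
      Function.Embedding.coeFn_mk]
    constructor
    · rintro (⟨a, haS, rfl⟩ | ⟨a, haS, rfl⟩)
      · exact haS
      · exact haS
    · intro hk
      rcases hx : finSumFinEquiv.symm k with x | x
      · have hk' : finSumFinEquiv (Sum.inl x) = k := by rw [← hx, Equiv.apply_symm_apply]
        exact Or.inl ⟨x, hk' ▸ hk, hk'⟩
      · have hk' : finSumFinEquiv (Sum.inr x) = k := by rw [← hx, Equiv.apply_symm_apply]
        exact Or.inr ⟨x, hk' ▸ hk, hk'⟩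
  · -- right inverse : i (j q) = q
    rintro ⟨q₁, q₂⟩ _
    refine Prod.ext ?_ ?_ <;> dsimp only
    · ext i
      rw [mem_Fa]
      simp only [Finset.mem_union, Finset.mem_map, emba, embb, Function.Embedding.coeFn_mk,
        finSumFinEquiv_apply_left, finSumFinEquiv_apply_right]
      constructor
      · rintro (⟨a, ha, h⟩ | ⟨a, ha, h⟩)
        · have hv := congrArg Fin.val h
          simp only [Fin.coe_castAdd] at hv
          rwa [show a = i from Fin.ext hv] at ha
        · have hv := congrArg Fin.val h
          simp only [Fin.coe_castAdd, Fin.coe_natAdd] at hv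
          exact absurd hv (by have := i.isLt; omega)
      · intro hi
        exact Or.inl ⟨i, hi, rfl⟩
    · ext i
      rw [mem_Fb]
      simp only [Finset.mem_union, Finset.mem_map, emba, embb, Function.Embedding.coeFn_mk,
        finSumFinEquiv_apply_left, finSumFinEquiv_apply_right]
      constructor
      · rintro (⟨a, ha, h⟩ | ⟨a, ha, h⟩)
        · have hv := congrArg Fin.val h
          simp only [Fin.coe_castAdd, Fin.coe_natAdd] at hv
          exact absurd hv (by have := a.isLt; omega)
        · have hv := congrArg Fin.val h
          simp only [Fin.coe_natAdd] at hv
          rwa [show a = i from Fin.ext (by omega)] at ha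
      · intro hi
        exact Or.inr ⟨i, hi, rfl⟩
  · -- values
    intro S _
    dsimp only
    rw [haf_subm_dsum A B S]
    have hc1 : (Fa S).card ≤ M₁ := by
      simpa using Finset.card_le_card (Finset.subset_univ (Fa S))
    have hc2 : (Fb S).card ≤ M₂ := by
      simpa using Finset.card_le_card (Finset.subset_univ (Fb S))
    have hcc := card_split S
    rw [mul_mul_mul_comm, ← Polynomial.C_mul, ← pow_add]
    have hpow : M₁ + M₂ - S.card = (M₁ - (Fa S).card) + (M₂ - (Fb S).card) := by omega
    rw [hpow]
    congr 2
    by_cases h1 : 2 ∣ (Fa S).card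
    · by_cases h2 : 2 ∣ (Fb S).card
      · have hdiv : S.card / 2 = (Fa S).card / 2 + (Fb S).card / 2 := by omega
        rw [hdiv, pow_add]
        ring
      · rw [haf_odd h2]
        ring
    · rw [haf_odd h1]
      ring

end AuxHafnian

/-- The GBS polynomial is multiplicative over disjoint unions of simple graphs. -/
theorem gbs_disjoint_union_mul {M₁ M₂ : ℕ}
    (G₁ : SimpleGraph (Fin M₁)) (G₂ : SimpleGraph (Fin M₂))
    [DecidableRel G₁.Adj] [DecidableRel G₂.Adj] :
    GBS (dsum (G₁.adjMatrix ℝ) (G₂.adjMatrix ℝ)) =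
      GBS (G₁.adjMatrix ℝ) * GBS (G₂.adjMatrix ℝ) := by
  exact GBS_dsum _ _
end

section
/- For a finite simple graph G on M vertices with vertex set V, the derivative of the GBS polynomial satisfies d/dx GBS_G(x) = Σ_{v ∈ V} GBS_{G∖{v}}(x), where G∖{v} is G with vertex v and all incident edges removed. -/
/-!
Differentiating `x ^ (M - |S|)` produces the factor `M - |S|`, which is the number of vertices
`v ∉ S`. For each such `v`, the principal submatrices of `A_{V∖v}` are exactly the `A_S` with
`v ∉ S`, and the term of `S` occurs in `GBS_{G∖v}` with exponent `(M - 1) - |S|`. So both sides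
are `∑_S (M - |S|) (-1)^{|S|/2} haf(A_S)² x^{M-|S|-1}`.
-/

open Finset Polynomial

section Hafnian

variable {F : Type*} [Field F] {M : ℕ}

theorem haf_submatrix_cast {n m : ℕ} (h : n = m) (A : Matrix (Fin m) (Fin m) F) :
    haf (A.submatrix (Fin.cast h) (Fin.cast h)) = haf A := by
  subst h; rfl

theorem haf_subm_subm (A : Matrix (Fin M) (Fin M) F) (S : Finset (Fin M))
    (T : Finset (Fin S.card)) :
    haf (subm (subm A S) T) = haf (subm A (T.map (S.orderEmbOfFin rfl).toEmbedding)) := by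
  set S' := T.map (S.orderEmbOfFin rfl).toEmbedding
  have hcard : T.card = S'.card := (T.card_map _).symm
  have hemb : (fun j => S.orderEmbOfFin rfl (T.orderEmbOfFin rfl (Fin.cast hcard.symm j))) =
      S'.orderEmbOfFin rfl :=
    Finset.orderEmbOfFin_unique rfl (fun _ => mem_map_of_mem _ (orderEmbOfFin_mem _ _ _))
      ((S.orderEmbOfFin rfl).strictMono.comp
        ((T.orderEmbOfFin rfl).strictMono.comp (Fin.castOrderIso hcard.symm).strictMono))
  rw [← haf_submatrix_cast hcard (subm A S')]
  congr 1
  ext i j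
  simp only [Matrix.submatrix_apply, subm, ← hemb, Fin.cast_cast, Fin.cast_eq_self]

end Hafnian

theorem Polynomial.derivative_sum_X_pow_card_compl {α R : Type*} [Fintype α] [DecidableEq α]
    [CommSemiring R] (c : Finset α → R) :
    derivative (∑ S : Finset α, C (c S) * X ^ (Fintype.card α - #S)) =
      ∑ v : α, ∑ S ∈ ({v}ᶜ : Finset α).powerset, C (c S) * X ^ (#({v}ᶜ : Finset α) - #S) := by
  have hswap : ∀ v S, (v ∈ univ ∧ S ∈ ({v}ᶜ : Finset α).powerset) ↔ (v ∈ Sᶜ ∧ S ∈ univ) := by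
    intro v S
    simp [subset_compl_singleton]
  rw [sum_comm' hswap, map_sum]
  refine sum_congr rfl fun S _ => ?_
  simp only [derivative_C_mul_X_pow, card_compl, card_singleton, sum_const, nsmul_eq_mul,
    Nat.sub_right_comm, C_mul, C_eq_natCast]
  ring

section GBS

variable {F : Type*} [Field F] {M : ℕ}

noncomputable def gbsCoeff (A : Matrix (Fin M) (Fin M) F) (S : Finset (Fin M)) : F :=
  (-1) ^ (#S / 2) * haf (subm A S) ^ 2

theorem GBS_eq_sum_gbsCoeff (A : Matrix (Fin M) (Fin M) F) :
    GBS A = ∑ S : Finset (Fin M), C (gbsCoeff A S) * X ^ (M - #S) :=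
  rfl

theorem gbsCoeff_subm (A : Matrix (Fin M) (Fin M) F) (S : Finset (Fin M))
    (T : Finset (Fin S.card)) :
    gbsCoeff (subm A S) T = gbsCoeff A (T.map (S.orderEmbOfFin rfl).toEmbedding) := by
  simp only [gbsCoeff, haf_subm_subm, card_map]

theorem GBS_subm (A : Matrix (Fin M) (Fin M) F) (S : Finset (Fin M)) :
    GBS (subm A S) = ∑ T ∈ S.powerset, C (gbsCoeff A T) * X ^ (#S - #T) := by
  set e := (S.orderEmbOfFin rfl).toEmbedding
  have hpowerset : S.powerset = univ.map (mapEmbedding e).toEmbedding := by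
    ext T
    conv_lhs => rw [mem_powerset, ← map_orderEmbOfFin_univ S rfl, subset_map_iff]
    simp [e, eq_comm]
  rw [GBS_eq_sum_gbsCoeff, hpowerset, sum_map]
  refine sum_congr rfl fun T _ => ?_
  rw [gbsCoeff_subm]
  simp [e]

theorem derivative_GBS (A : Matrix (Fin M) (Fin M) F) :
    derivative (GBS A) = ∑ v : Fin M, GBS (subm A ({v}ᶜ : Finset (Fin M))) := by
  have h := derivative_sum_X_pow_card_compl (gbsCoeff A)
  rw [Fintype.card_fin] at h
  rw [GBS_eq_sum_gbsCoeff, h]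
  simp only [GBS_subm]

end GBS

/-- The derivative of the GBS polynomial is the sum of the GBS polynomials of the
vertex-deleted subgraphs. -/
theorem gbs_derivative {M : ℕ} (G : SimpleGraph (Fin M)) [DecidableRel G.Adj] :
    Polynomial.derivative (GBS (G.adjMatrix ℝ)) =
      ∑ v : Fin M, GBS (subm (G.adjMatrix ℝ) ({v}ᶜ : Finset (Fin M))) :=
  derivative_GBS _
end

section
/- For a finite simple graph G on M vertices, the signless GBS polynomial equals the hafnian of the prism over G: GBS⁺_G(x) = haf(adjacency matrix of G □ P₂(x)), where G □ P₂(x) consists of two copies of G with each vertex joined to its copy by an edge of weight x. -/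
open Finset Polynomial

namespace GBSaux

variable {F : Type*} [Field F]

def matchings (n : ℕ) : Finset (Equiv.Perm (Fin n)) :=
  Finset.univ.filter fun f => f * f = 1 ∧ ∀ i, f i ≠ i

lemma mem_matchings {n : ℕ} {f : Equiv.Perm (Fin n)} :
    f ∈ matchings n ↔ (∀ i, f (f i) = i) ∧ ∀ i, f i ≠ i := by
  simp only [matchings, mem_filter, mem_univ, true_and]
  constructor
  · rintro ⟨h1, h2⟩
    refine ⟨fun i => ?_, h2⟩
    have := DFunLike.congr_fun h1 i
    simpa using this
  · rintro ⟨h1, h2⟩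
    exact ⟨Equiv.ext fun i => by simpa using h1 i, h2⟩

def mweight {n : ℕ} (B : Matrix (Fin n) (Fin n) F) (f : Equiv.Perm (Fin n)) : F :=
  ∏ i ∈ Finset.univ.filter fun i => i < f i, B i (f i)

lemma two_mul_card_matching {n : ℕ} {f : Equiv.Perm (Fin n)} (hf : f ∈ matchings n) :
    2 * (Finset.univ.filter fun i => i < f i).card = n := by
  obtain ⟨h1, h2⟩ := mem_matchings.mp hf
  have key : (Finset.univ.filter fun i => i < f i).card
      = (Finset.univ.filter fun i => f i < i).card := by
    apply Finset.card_bij (fun i _ => f i)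
    · intro a ha
      simp only [mem_filter, mem_univ, true_and] at *
      rw [h1]; exact ha
    · intro a _ b _ hab; exact f.injective hab
    · intro b hb
      simp only [mem_filter, mem_univ, true_and] at *
      exact ⟨f b, by rw [h1]; exact hb, h1 b⟩
  have hdisj : Disjoint (Finset.univ.filter fun i : Fin n => i < f i)
      (Finset.univ.filter fun i : Fin n => f i < i) := by
    rw [Finset.disjoint_left]
    intro i hi hj
    simp only [mem_filter, mem_univ, true_and] at hi hj
    exact absurd (hi.trans hj) (lt_irrefl _)
  have hunion : (Finset.univ.filter fun i : Fin n => i < f i)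
      ∪ (Finset.univ.filter fun i : Fin n => f i < i) = Finset.univ := by
    ext i
    simp only [mem_union, mem_filter, mem_univ, true_and, iff_true]
    rcases lt_trichotomy i (f i) with h | h | h
    · exact Or.inl h
    · exact absurd h.symm (h2 i)
    · exact Or.inr h
  have := Finset.card_union_of_disjoint hdisj
  rw [hunion, Finset.card_univ, Fintype.card_fin] at this
  omega

lemma matchings_eq_empty {n : ℕ} (h : ¬ 2 ∣ n) : matchings n = ∅ := by
  rw [Finset.eq_empty_iff_forall_notMem]
  intro f hf
  exact h ⟨_, (two_mul_card_matching hf).symm⟩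

/-- base involution swapping `2j ↔ 2j+1` -/
def s0fun {n : ℕ} (h : 2 ∣ n) : Fin n → Fin n := fun i =>
  if _ : i.1 % 2 = 0 then ⟨i.1 + 1, by have h2 := i.2; omega⟩
  else ⟨i.1 - 1, by have h2 := i.2; omega⟩

lemma s0fun_val {n : ℕ} (h : 2 ∣ n) (i : Fin n) :
    (s0fun h i).1 = if i.1 % 2 = 0 then i.1 + 1 else i.1 - 1 := by
  unfold s0fun; split_ifs <;> rfl

lemma s0fun_involutive {n : ℕ} (h : 2 ∣ n) : Function.Involutive (s0fun h) := by
  intro i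
  apply Fin.ext
  rw [s0fun_val, s0fun_val]
  have := i.2
  split_ifs <;> omega

def s0 {n : ℕ} (h : 2 ∣ n) : Equiv.Perm (Fin n) :=
  Function.Involutive.toPerm _ (s0fun_involutive h)

lemma s0_val {n : ℕ} (h : 2 ∣ n) (i : Fin n) :
    (s0 h i).1 = if i.1 % 2 = 0 then i.1 + 1 else i.1 - 1 := s0fun_val h i

lemma s0_ne {n : ℕ} (h : 2 ∣ n) (i : Fin n) : s0 h i ≠ i := by
  intro hc
  have := congrArg Fin.val hc
  rw [s0_val] at this
  split_ifs at this <;> omega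


lemma conj_apply {n : ℕ} (h : 2 ∣ n) (σ : Equiv.Perm (Fin n)) (k : Fin n) :
    (σ * s0 h * σ⁻¹) (σ k) = σ (s0 h k) := by
  simp [Equiv.Perm.mul_apply]

lemma conj_mem_matchings {n : ℕ} (h : 2 ∣ n) (σ : Equiv.Perm (Fin n)) :
    σ * s0 h * σ⁻¹ ∈ matchings n := by
  rw [mem_matchings]
  constructor
  · intro i
    simp only [Equiv.Perm.mul_apply, show ∀ y, σ⁻¹ (σ y) = y from σ.symm_apply_apply]
    rw [show (s0 h) ((s0 h) (σ⁻¹ i)) = σ⁻¹ i from s0fun_involutive h _]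
    exact σ.apply_symm_apply i
  · intro i hc
    have : s0 h (σ⁻¹ i) = σ⁻¹ i := by
      have := congrArg (fun z => σ⁻¹ z) hc
      simpa [Equiv.Perm.mul_apply] using this
    exact s0_ne h _ this

lemma pair_lt {n : ℕ} (h : 2 ∣ n) (j : Fin (n / 2)) : 2 * j.1 < n := by
  have := j.2; omega

lemma pair_lt' {n : ℕ} (h : 2 ∣ n) (j : Fin (n / 2)) : 2 * j.1 + 1 < n := by
  have := j.2; omega

lemma s0_pair {n : ℕ} (h : 2 ∣ n) (j : Fin (n / 2)) :
    s0 h ⟨2 * j.1, pair_lt h j⟩ = ⟨2 * j.1 + 1, pair_lt' h j⟩ := by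
  apply Fin.ext
  rw [s0_val]
  simp [Nat.mul_mod_right]

lemma s0_pair' {n : ℕ} (h : 2 ∣ n) (j : Fin (n / 2)) :
    s0 h ⟨2 * j.1 + 1, pair_lt' h j⟩ = ⟨2 * j.1, pair_lt h j⟩ := by
  rw [← s0_pair h j]
  exact s0fun_involutive h _

lemma prod_pairs_eq_mweight {n : ℕ} (h : 2 ∣ n) (B : Matrix (Fin n) (Fin n) F)
    (hB : ∀ i j, B i j = B j i) (σ : Equiv.Perm (Fin n)) :
    (∏ j : Fin (n / 2),
        B (σ ⟨2 * j.1, pair_lt h j⟩) (σ ⟨2 * j.1 + 1, pair_lt' h j⟩))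
      = mweight B (σ * s0 h * σ⁻¹) := by
  set f := σ * s0 h * σ⁻¹ with hfdef
  have hmem := conj_mem_matchings h σ
  obtain ⟨hinv, hne⟩ := mem_matchings.mp hmem
  -- notation for the pair endpoints
  set a : Fin (n / 2) → Fin n := fun j => σ ⟨2 * j.1, pair_lt h j⟩ with ha
  set b : Fin (n / 2) → Fin n := fun j => σ ⟨2 * j.1 + 1, pair_lt' h j⟩ with hb
  have hfa : ∀ j, f (a j) = b j := by
    intro j
    rw [ha, hb, hfdef]
    rw [conj_apply, s0_pair]
  have hfb : ∀ j, f (b j) = a j := by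
    intro j
    rw [ha, hb, hfdef]
    rw [conj_apply, s0_pair']
  have hab : ∀ j, a j ≠ b j := by
    intro j hc
    have := σ.injective hc
    have := congrArg Fin.val this
    simp at this
  rw [mweight]
  apply Finset.prod_nbij (fun j => min (a j) (b j))
  · -- maps to
    intro j _
    simp only [mem_coe, mem_filter, mem_univ, true_and]
    rcases lt_or_gt_of_ne (hab j) with hlt | hlt
    · rw [min_eq_left hlt.le, hfa]; exact hlt
    · rw [min_eq_right hlt.le, hfb]; exact hlt
  · -- injective
    intro j _ j' _ hjj'
    simp only at hjj'
    have key : ∀ (u v : Fin (n/2)), a u = a v ∨ a u = b v ∨ b u = a v ∨ b u = b v → u = v := by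
      intro u v huv
      rcases huv with e | e | e | e <;>
      · have := σ.injective e
        have := congrArg Fin.val this
        simp only [Fin.val] at this
        apply Fin.ext
        omega
    apply key
    rcases min_choice (a j) (b j) with e1 | e1 <;> rcases min_choice (a j') (b j') with e2 | e2 <;>
      rw [e1, e2] at hjj'
    · exact Or.inl hjj'
    · exact Or.inr (Or.inl hjj')
    · exact Or.inr (Or.inr (Or.inl hjj'))
    · exact Or.inr (Or.inr (Or.inr hjj'))
  · -- surjective
    intro i hi
    simp only [mem_coe, mem_filter, mem_univ, true_and] at hi
    set k := σ⁻¹ i with hk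
    have hkn := k.2
    refine ⟨⟨k.1 / 2, by omega⟩, Finset.mem_coe.mpr (mem_univ _), ?_⟩
    simp only
    by_cases hpar : k.1 % 2 = 0
    · have hA : a ⟨k.1/2, by omega⟩ = i := by
        rw [ha]
        simp only
        have : (⟨2 * (k.1/2), by omega⟩ : Fin n) = k := by apply Fin.ext; simp; omega
        rw [this, hk]
        exact σ.apply_symm_apply i
      have hBv : b ⟨k.1/2, by omega⟩ = f i := by
        have h2 := congrArg f hA
        rw [hfa] at h2
        exact h2
      rw [hA, hBv]
      exact min_eq_left hi.le
    · have hBv : b ⟨k.1/2, by omega⟩ = i := by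
        rw [hb]
        simp only
        have : (⟨2 * (k.1/2) + 1, by omega⟩ : Fin n) = k := by apply Fin.ext; simp; omega
        rw [this, hk]
        exact σ.apply_symm_apply i
      have hA : a ⟨k.1/2, by omega⟩ = f i := by
        have h2 := congrArg f hBv
        rw [hfb] at h2
        exact h2
      rw [hA, hBv]
      exact min_eq_right hi.le
  · -- values
    intro j _
    rcases lt_or_gt_of_ne (hab j) with hlt | hlt
    · rw [min_eq_left hlt.le, hfa]
    · rw [min_eq_right hlt.le, hfb, hB]


/-- flip a bit `t ∈ {0,1}` iff `b` -/
def xb (b : Bool) (t : ℕ) : ℕ := if b then 1 - t else t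

lemma xb_le (b : Bool) (t : ℕ) (ht : t ≤ 1) : xb b t ≤ 1 := by
  unfold xb; split_ifs <;> omega

lemma xb_flip (b : Bool) (t : ℕ) (ht : t ≤ 1) : xb b (1 - t) = 1 - xb b t := by
  unfold xb; split_ifs <;> omega

lemma xb_inj (b : Bool) (t t' : ℕ) (ht : t ≤ 1) (ht' : t' ≤ 1) (he : xb b t = xb b t') :
    t = t' := by
  unfold xb at he; split_ifs at he <;> omega

def psiFun {n : ℕ} (h : 2 ∣ n) (π : Equiv.Perm (Fin (n / 2))) (b : Fin (n / 2) → Bool) :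
    Fin n → Fin n := fun i =>
  have hi2 : i.1 / 2 < n / 2 := by have := i.2; omega
  ⟨2 * (π ⟨i.1 / 2, hi2⟩).1 + xb (b ⟨i.1 / 2, hi2⟩) (i.1 % 2), by
    have h1 := (π ⟨i.1 / 2, hi2⟩).2
    have h2 := xb_le (b ⟨i.1 / 2, hi2⟩) (i.1 % 2) (by omega)
    omega⟩

lemma psiFun_val {n : ℕ} (h : 2 ∣ n) (π : Equiv.Perm (Fin (n / 2))) (b : Fin (n / 2) → Bool)
    (i : Fin n) (j : Fin (n / 2)) (hj : i.1 / 2 = j.1) :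
    (psiFun h π b i).1 = 2 * (π j).1 + xb (b j) (i.1 % 2) := by
  have hi2 : i.1 / 2 < n / 2 := by have := i.2; omega
  have hje : (⟨i.1 / 2, hi2⟩ : Fin (n / 2)) = j := Fin.ext hj
  show (2 * (π ⟨i.1 / 2, hi2⟩).1 + xb (b ⟨i.1 / 2, hi2⟩) (i.1 % 2)) = _
  rw [hje]

lemma psiFun_injective {n : ℕ} (h : 2 ∣ n) (π : Equiv.Perm (Fin (n / 2)))
    (b : Fin (n / 2) → Bool) : Function.Injective (psiFun h π b) := by
  intro i i' he
  have hi2 : i.1 / 2 < n / 2 := by have := i.2; omega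
  have hi2' : i'.1 / 2 < n / 2 := by have := i'.2; omega
  have hv := congrArg Fin.val he
  rw [psiFun_val h π b i ⟨i.1 / 2, hi2⟩ rfl, psiFun_val h π b i' ⟨i'.1 / 2, hi2'⟩ rfl] at hv
  have hb1 := xb_le (b ⟨i.1 / 2, hi2⟩) (i.1 % 2) (by omega)
  have hb2 := xb_le (b ⟨i'.1 / 2, hi2'⟩) (i'.1 % 2) (by omega)
  have hdiv : (π ⟨i.1 / 2, hi2⟩).1 = (π ⟨i'.1 / 2, hi2'⟩).1 := by omega
  have hdd : (⟨i.1 / 2, hi2⟩ : Fin (n / 2)) = ⟨i'.1 / 2, hi2'⟩ := π.injective (Fin.ext hdiv)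
  have hdd' : i.1 / 2 = i'.1 / 2 := congrArg Fin.val hdd
  rw [hdd] at hv hb1
  have : i.1 % 2 = i'.1 % 2 :=
    xb_inj (b ⟨i'.1 / 2, hi2'⟩) _ _ (by omega) (by omega) (by omega)
  apply Fin.ext
  omega

noncomputable def psi {n : ℕ} (h : 2 ∣ n) (π : Equiv.Perm (Fin (n / 2))) (b : Fin (n / 2) → Bool) :
    Equiv.Perm (Fin n) :=
  Equiv.ofBijective _ (Finite.injective_iff_bijective.mp (psiFun_injective h π b))

lemma psi_apply {n : ℕ} (h : 2 ∣ n) (π : Equiv.Perm (Fin (n / 2))) (b : Fin (n / 2) → Bool)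
    (i : Fin n) : psi h π b i = psiFun h π b i := rfl

lemma s0_div {n : ℕ} (h : 2 ∣ n) (i : Fin n) : (s0 h i).1 / 2 = i.1 / 2 := by
  rw [s0_val]; have := i.2; split_ifs <;> omega

lemma s0_mod {n : ℕ} (h : 2 ∣ n) (i : Fin n) : (s0 h i).1 % 2 = 1 - i.1 % 2 := by
  rw [s0_val]; have := i.2; split_ifs <;> omega

lemma psi_comm {n : ℕ} (h : 2 ∣ n) (π : Equiv.Perm (Fin (n / 2))) (b : Fin (n / 2) → Bool) :
    psi h π b * s0 h = s0 h * psi h π b := by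
  apply Equiv.ext
  intro i
  have hi2 : i.1 / 2 < n / 2 := by have := i.2; omega
  set j : Fin (n / 2) := ⟨i.1 / 2, hi2⟩ with hjj
  apply Fin.ext
  simp only [Equiv.Perm.mul_apply]
  rw [psi_apply, psi_apply, s0_val,
    psiFun_val h π b (s0 h i) j (by rw [s0_div]),
    psiFun_val h π b i j rfl, s0_mod,
    xb_flip _ _ (by omega)]
  have h1 := xb_le (b j) (i.1 % 2) (by omega)
  split_ifs with hpar
  · omega
  · omega


def piFun {n : ℕ} (h : 2 ∣ n) (c : Equiv.Perm (Fin n)) : Fin (n / 2) → Fin (n / 2) := fun j =>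
  have hj : 2 * j.1 < n := by have := j.2; omega
  ⟨(c ⟨2 * j.1, hj⟩).1 / 2, by have := (c ⟨2 * j.1, hj⟩).2; omega⟩

lemma piFun_val {n : ℕ} (h : 2 ∣ n) (c : Equiv.Perm (Fin n)) (j : Fin (n / 2)) (k : Fin n)
    (hk : k.1 = 2 * j.1) : (piFun h c j).1 = (c k).1 / 2 := by
  have hj : 2 * j.1 < n := by have := j.2; omega
  have : (⟨2 * j.1, hj⟩ : Fin n) = k := Fin.ext hk.symm
  show (c ⟨2 * j.1, hj⟩).1 / 2 = _
  rw [this]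

def bOf {n : ℕ} (h : 2 ∣ n) (c : Equiv.Perm (Fin n)) : Fin (n / 2) → Bool := fun j =>
  have hj : 2 * j.1 < n := by have := j.2; omega
  decide ((c ⟨2 * j.1, hj⟩).1 % 2 = 1)

lemma bOf_eq {n : ℕ} (h : 2 ∣ n) (c : Equiv.Perm (Fin n)) (j : Fin (n / 2)) (k : Fin n)
    (hk : k.1 = 2 * j.1) : bOf h c j = decide ((c k).1 % 2 = 1) := by
  have hj : 2 * j.1 < n := by have := j.2; omega
  have : (⟨2 * j.1, hj⟩ : Fin n) = k := Fin.ext hk.symm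
  show decide ((c ⟨2 * j.1, hj⟩).1 % 2 = 1) = _
  rw [this]

lemma comm_pointwise {n : ℕ} (h : 2 ∣ n) {c : Equiv.Perm (Fin n)}
    (hc : c * s0 h = s0 h * c) (i : Fin n) : c (s0 h i) = s0 h (c i) := by
  have := DFunLike.congr_fun hc i
  simpa [Equiv.Perm.mul_apply] using this

lemma piFun_injective {n : ℕ} (h : 2 ∣ n) {c : Equiv.Perm (Fin n)}
    (hc : c * s0 h = s0 h * c) : Function.Injective (piFun h c) := by
  intro j j' he
  have hj : 2 * j.1 < n := by have := j.2; omega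
  have hj' : 2 * j'.1 < n := by have := j'.2; omega
  set u : Fin n := ⟨2 * j.1, hj⟩ with hu
  set u' : Fin n := ⟨2 * j'.1, hj'⟩ with hu'
  have hv := congrArg Fin.val he
  rw [piFun_val h c j u rfl, piFun_val h c j' u' rfl] at hv
  by_cases hcc : c u = c u'
  · have := c.injective hcc
    have := congrArg Fin.val this
    apply Fin.ext
    simp only [hu, hu'] at this
    omega
  · have hne : (c u).1 ≠ (c u').1 := fun hh => hcc (Fin.ext hh)
    have hs : s0 h (c u) = c u' := by
      apply Fin.ext
      rw [s0_val]
      have h1 := (c u).2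
      have h2 := (c u').2
      split_ifs <;> omega
    rw [← comm_pointwise h hc] at hs
    have := c.injective hs
    have := congrArg Fin.val this
    rw [s0_val] at this
    simp only [hu, hu'] at this
    have h4 := congrArg Fin.val (c.injective hs)
    rw [s0_val] at h4
    simp [hu, hu', Nat.mul_mod_right] at h4
    omega

noncomputable def piPerm {n : ℕ} (h : 2 ∣ n) (c : Equiv.Perm (Fin n))
    (hc : c * s0 h = s0 h * c) : Equiv.Perm (Fin (n / 2)) :=
  Equiv.ofBijective _ (Finite.injective_iff_bijective.mp (piFun_injective h hc))

lemma piPerm_apply {n : ℕ} (h : 2 ∣ n) (c : Equiv.Perm (Fin n))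
    (hc : c * s0 h = s0 h * c) (j : Fin (n / 2)) : piPerm h c hc j = piFun h c j := rfl

lemma card_centralizer {n : ℕ} (h : 2 ∣ n) :
    (Finset.univ.filter fun c : Equiv.Perm (Fin n) => c * s0 h = s0 h * c).card
      = (n / 2).factorial * 2 ^ (n / 2) := by
  have key : (Finset.univ : Finset (Equiv.Perm (Fin (n / 2)) × (Fin (n / 2) → Bool))).card
      = (Finset.univ.filter fun c : Equiv.Perm (Fin n) => c * s0 h = s0 h * c).card := by
    refine Finset.card_bij' (fun p _ => psi h p.1 p.2)
      (fun c hc => (piPerm h c (by simpa using (Finset.mem_filter.mp hc).2), bOf h c))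
      ?hi ?hj ?lft ?rgt
    case hi =>
      intro p _
      simp only [Finset.mem_filter, Finset.mem_univ, true_and]
      exact psi_comm h p.1 p.2
    case hj =>
      intro c hc
      exact Finset.mem_univ _
    case lft =>
      intro p _
      obtain ⟨π, b⟩ := p
      dsimp only
      refine Prod.ext ?_ ?_
      · apply Equiv.ext
        intro j
        apply Fin.ext
        dsimp only
        have hj : 2 * j.1 < n := by have := j.2; omega
        set u : Fin n := ⟨2 * j.1, hj⟩ with hu
        have hud : u.1 = 2 * j.1 := rfl
        rw [piPerm_apply, piFun_val h _ j u rfl, psi_apply,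
          psiFun_val h π b u j (by rw [hud]; omega)]
        have h1 := xb_le (b j) (u.1 % 2) (by omega)
        omega
      · funext j
        dsimp only
        have hj : 2 * j.1 < n := by have := j.2; omega
        set u : Fin n := ⟨2 * j.1, hj⟩ with hu
        have hud : u.1 = 2 * j.1 := rfl
        rw [bOf_eq h _ j u rfl, psi_apply, psiFun_val h π b u j (by rw [hud]; omega)]
        have hm : u.1 % 2 = 0 := by rw [hud]; exact Nat.mul_mod_right 2 _
        rw [hm]
        cases hb : b j <;> simp [xb, hb, Nat.add_mul_mod_self_left, Nat.mul_mod_right] <;> omega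
    case rgt =>
      intro c hc
      have hcomm : c * s0 h = s0 h * c := by simpa using (Finset.mem_filter.mp hc).2
      apply Equiv.ext
      intro i
      apply Fin.ext
      dsimp only
      have hi2 : i.1 / 2 < n / 2 := by have := i.2; omega
      set j : Fin (n / 2) := ⟨i.1 / 2, hi2⟩ with hjdef
      have hj : 2 * j.1 < n := by have := i.2; omega
      set u : Fin n := ⟨2 * j.1, hj⟩ with hu
      rw [psi_apply, psiFun_val h _ _ i j rfl, piPerm_apply, piFun_val h c j u rfl,
        bOf_eq h c j u rfl]
      have hcu2 := (c u).2
      have hud : u.1 = 2 * j.1 := rfl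
      have hjd : j.1 = i.1 / 2 := rfl
      rcases Nat.mod_two_eq_zero_or_one i.1 with hpar | hpar
      · have hui : u = i := by apply Fin.ext; rw [hud, hjd]; omega
        rw [hui]
        rcases Nat.mod_two_eq_zero_or_one (c i).1 with h2 | h2 <;> simp [xb, h2, hpar] <;> omega
      · have hsu : s0 h u = i := by
          apply Fin.ext
          rw [s0_val, if_pos (by rw [hud]; exact Nat.mul_mod_right 2 _), hud, hjd]
          omega
        have hci : c i = s0 h (c u) := by rw [← hsu, comm_pointwise h hcomm]
        have hciv : (c i).1 = if (c u).1 % 2 = 0 then (c u).1 + 1 else (c u).1 - 1 := by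
          rw [hci, s0_val]
        rcases Nat.mod_two_eq_zero_or_one (c u).1 with h2 | h2 <;>
          simp [xb, h2, hpar, hciv] <;> omega
  rw [← key]
  simp [Fintype.card_perm]


def secFun {n : ℕ} (h : 2 ∣ n) (f : Equiv.Perm (Fin n)) (e : Fin (n / 2) → Fin n) :
    Fin n → Fin n := fun i =>
  have hi2 : i.1 / 2 < n / 2 := by have := i.2; omega
  if i.1 % 2 = 0 then e ⟨i.1 / 2, hi2⟩ else f (e ⟨i.1 / 2, hi2⟩)

lemma secFun_even {n : ℕ} (h : 2 ∣ n) (f : Equiv.Perm (Fin n)) (e : Fin (n / 2) → Fin n)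
    (i : Fin n) (j : Fin (n / 2)) (hj : i.1 / 2 = j.1) (hp : i.1 % 2 = 0) :
    secFun h f e i = e j := by
  have hi2 : i.1 / 2 < n / 2 := by have := i.2; omega
  have hje : (⟨i.1 / 2, hi2⟩ : Fin (n / 2)) = j := Fin.ext hj
  show (if i.1 % 2 = 0 then e ⟨i.1 / 2, hi2⟩ else f (e ⟨i.1 / 2, hi2⟩)) = e j
  rw [if_pos hp, hje]

lemma secFun_odd {n : ℕ} (h : 2 ∣ n) (f : Equiv.Perm (Fin n)) (e : Fin (n / 2) → Fin n)
    (i : Fin n) (j : Fin (n / 2)) (hj : i.1 / 2 = j.1) (hp : i.1 % 2 = 1) :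
    secFun h f e i = f (e j) := by
  have hi2 : i.1 / 2 < n / 2 := by have := i.2; omega
  have hje : (⟨i.1 / 2, hi2⟩ : Fin (n / 2)) = j := Fin.ext hj
  show (if i.1 % 2 = 0 then e ⟨i.1 / 2, hi2⟩ else f (e ⟨i.1 / 2, hi2⟩)) = f (e j)
  rw [if_neg (by omega), hje]

lemma exists_conj {n : ℕ} (h : 2 ∣ n) {f : Equiv.Perm (Fin n)} (hf : f ∈ matchings n) :
    ∃ σ : Equiv.Perm (Fin n), σ * s0 h * σ⁻¹ = f := by
  obtain ⟨hinv, hne⟩ := mem_matchings.mp hf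
  have hT : (Finset.univ.filter fun i => i < f i).card = n / 2 := by
    have := two_mul_card_matching hf; omega
  set e : Fin (n / 2) → Fin n :=
    fun j => (Finset.univ.filter fun i => i < f i).orderEmbOfFin hT j with hedef
  have heT : ∀ j, e j < f (e j) := by
    intro j
    have := Finset.orderEmbOfFin_mem (Finset.univ.filter fun i => i < f i) hT j
    simp only [Finset.mem_filter, Finset.mem_univ, true_and] at this
    exact this
  have heinj : Function.Injective e :=
    fun a b hab => (Finset.orderEmbOfFin (Finset.univ.filter fun i => i < f i) hT).injective hab
  have hginj : Function.Injective (secFun h f e) := by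
    intro i i' he'
    have hi2 : i.1 / 2 < n / 2 := by have := i.2; omega
    have hi2' : i'.1 / 2 < n / 2 := by have := i'.2; omega
    set j : Fin (n / 2) := ⟨i.1 / 2, hi2⟩
    set j' : Fin (n / 2) := ⟨i'.1 / 2, hi2'⟩
    rcases Nat.mod_two_eq_zero_or_one i.1 with hp | hp <;>
      rcases Nat.mod_two_eq_zero_or_one i'.1 with hp' | hp'
    · rw [secFun_even h f e i j rfl hp, secFun_even h f e i' j' rfl hp'] at he'
      have h7 : i.1 / 2 = i'.1 / 2 := congrArg Fin.val (heinj he')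
      apply Fin.ext; omega
    · rw [secFun_even h f e i j rfl hp, secFun_odd h f e i' j' rfl hp'] at he'
      exfalso
      have h1 : f (e j) = e j' := by rw [he', hinv]
      have h2 := heT j
      have h3 := heT j'
      rw [h1] at h2
      rw [← he'] at h3
      exact absurd (h2.trans h3) (lt_irrefl _)
    · rw [secFun_odd h f e i j rfl hp, secFun_even h f e i' j' rfl hp'] at he'
      exfalso
      have h1 : f (e j') = e j := by rw [← he', hinv]
      have h2 := heT j'
      have h3 := heT j
      rw [h1] at h2
      rw [he'] at h3
      exact absurd (h2.trans h3) (lt_irrefl _)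
    · rw [secFun_odd h f e i j rfl hp, secFun_odd h f e i' j' rfl hp'] at he'
      have h7 : i.1 / 2 = i'.1 / 2 := congrArg Fin.val (heinj (f.injective he'))
      apply Fin.ext; omega
  set σ : Equiv.Perm (Fin n) :=
    Equiv.ofBijective _ (Finite.injective_iff_bijective.mp hginj) with hσdef
  have hσ : ∀ i, σ i = secFun h f e i := fun i => rfl
  refine ⟨σ, ?_⟩
  apply Equiv.ext
  intro i
  obtain ⟨k, rfl⟩ := σ.surjective i
  rw [conj_apply]
  have hk2 : k.1 / 2 < n / 2 := by have := k.2; omega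
  set j : Fin (n / 2) := ⟨k.1 / 2, hk2⟩
  rcases Nat.mod_two_eq_zero_or_one k.1 with hp | hp
  · rw [hσ, hσ, secFun_even h f e k j rfl hp,
      secFun_odd h f e (s0 h k) j (by rw [s0_div]) (by rw [s0_mod]; omega)]
  · rw [hσ, hσ, secFun_odd h f e k j rfl hp,
      secFun_even h f e (s0 h k) j (by rw [s0_div]) (by rw [s0_mod]; omega), hinv]

lemma fiber_card {n : ℕ} (h : 2 ∣ n) {f : Equiv.Perm (Fin n)} (hf : f ∈ matchings n) :
    (Finset.univ.filter fun σ : Equiv.Perm (Fin n) => σ * s0 h * σ⁻¹ = f).card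
      = (n / 2).factorial * 2 ^ (n / 2) := by
  obtain ⟨σf, hσf⟩ := exists_conj h hf
  rw [← card_centralizer h]
  apply Finset.card_nbij' (fun σ => σf⁻¹ * σ) (fun c => σf * c)
  · intro σ hσ
    have hσ' : σ * s0 h * σ⁻¹ = f := by
      have := Finset.mem_filter.mp hσ
      exact this.2
    simp only [Finset.mem_coe, Finset.mem_filter, Finset.mem_univ, true_and]
    have h1 : σ * s0 h = f * σ := by
      calc σ * s0 h = σ * s0 h * σ⁻¹ * σ := by rw [mul_assoc, inv_mul_cancel, mul_one]
        _ = f * σ := by rw [hσ']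
    have h2 : s0 h * σf⁻¹ = σf⁻¹ * f := by
      calc s0 h * σf⁻¹ = σf⁻¹ * (σf * s0 h * σf⁻¹) := by
            rw [mul_assoc, ← mul_assoc σf⁻¹ σf, inv_mul_cancel, one_mul]
        _ = σf⁻¹ * f := by rw [hσf]
    calc σf⁻¹ * σ * s0 h = σf⁻¹ * (σ * s0 h) := by rw [mul_assoc]
      _ = σf⁻¹ * (f * σ) := by rw [h1]
      _ = σf⁻¹ * f * σ := by rw [mul_assoc]
      _ = s0 h * σf⁻¹ * σ := by rw [h2]
      _ = s0 h * (σf⁻¹ * σ) := by rw [mul_assoc]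
  · intro c hc
    have hc' : c * s0 h = s0 h * c := by
      have := Finset.mem_filter.mp hc
      exact this.2
    simp only [Finset.mem_coe, Finset.mem_filter, Finset.mem_univ, true_and]
    have h1 : c * s0 h * c⁻¹ = s0 h := by rw [hc', mul_assoc, mul_inv_cancel, mul_one]
    calc σf * c * s0 h * (σf * c)⁻¹ = σf * (c * s0 h * c⁻¹) * σf⁻¹ := by
          rw [mul_inv_rev]
          simp only [mul_assoc]
      _ = f := by rw [h1, hσf]
  · intro σ _
    simp [mul_assoc, ← mul_assoc σf σf⁻¹]
  · intro c _
    simp [← mul_assoc, inv_mul_cancel]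

lemma sum_perm_eq {n : ℕ} (h : 2 ∣ n) (B : Matrix (Fin n) (Fin n) F)
    (hB : ∀ i j, B i j = B j i) :
    ∑ σ : Equiv.Perm (Fin n), (∏ j : Fin (n / 2),
        B (σ ⟨2 * j.1, pair_lt h j⟩) (σ ⟨2 * j.1 + 1, pair_lt' h j⟩))
      = ((n / 2).factorial * 2 ^ (n / 2) : ℕ) * ∑ f ∈ matchings n, mweight B f := by
  have step1 : ∀ σ : Equiv.Perm (Fin n), (∏ j : Fin (n / 2),
      B (σ ⟨2 * j.1, pair_lt h j⟩) (σ ⟨2 * j.1 + 1, pair_lt' h j⟩))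
        = mweight B (σ * s0 h * σ⁻¹) := fun σ => prod_pairs_eq_mweight h B hB σ
  calc ∑ σ : Equiv.Perm (Fin n), (∏ j : Fin (n / 2),
        B (σ ⟨2 * j.1, pair_lt h j⟩) (σ ⟨2 * j.1 + 1, pair_lt' h j⟩))
      = ∑ σ : Equiv.Perm (Fin n), mweight B (σ * s0 h * σ⁻¹) := by
        exact Finset.sum_congr rfl fun σ _ => step1 σ
    _ = ∑ f ∈ matchings n, ∑ σ ∈ Finset.univ.filter
          (fun σ : Equiv.Perm (Fin n) => σ * s0 h * σ⁻¹ = f), mweight B (σ * s0 h * σ⁻¹) := by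
        rw [Finset.sum_fiberwise_of_maps_to (fun σ _ => conj_mem_matchings h σ)]
    _ = ∑ f ∈ matchings n, ∑ σ ∈ Finset.univ.filter
          (fun σ : Equiv.Perm (Fin n) => σ * s0 h * σ⁻¹ = f), mweight B f := by
        refine Finset.sum_congr rfl fun f hf => Finset.sum_congr rfl fun σ hσ => ?_
        rw [(Finset.mem_filter.mp hσ).2]
    _ = ∑ f ∈ matchings n, ((n / 2).factorial * 2 ^ (n / 2) : ℕ) * mweight B f := by
        refine Finset.sum_congr rfl fun f hf => ?_
        rw [Finset.sum_const, fiber_card h hf, nsmul_eq_mul]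
    _ = ((n / 2).factorial * 2 ^ (n / 2) : ℕ) * ∑ f ∈ matchings n, mweight B f := by
        rw [Finset.mul_sum]

lemma haf_eq_matchings {n : ℕ} [CharZero F] (B : Matrix (Fin n) (Fin n) F)
    (hB : ∀ i j, B i j = B j i) :
    haf B = ∑ f ∈ matchings n, mweight B f := by
  by_cases h : 2 ∣ n
  · unfold haf
    rw [dif_pos h]
    have := sum_perm_eq h B hB
    rw [show (∑ σ : Equiv.Perm (Fin n), ∏ j : Fin (n / 2),
        B (σ ⟨2 * j.1, by have h1 := Nat.div_mul_cancel h; have h2 := j.isLt; omega⟩)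
          (σ ⟨2 * j.1 + 1, by have h1 := Nat.div_mul_cancel h; have h2 := j.isLt; omega⟩))
        = ((n / 2).factorial * 2 ^ (n / 2) : ℕ) * ∑ f ∈ matchings n, mweight B f from this]
    rw [inv_mul_cancel_left₀]
    exact Nat.cast_ne_zero.mpr (by positivity)
  · unfold haf
    rw [dif_neg h, matchings_eq_empty h, Finset.sum_empty]


section PartB

variable {M : ℕ}

lemma prism_ll (A : Matrix (Fin M) (Fin M) F) (x : F) (i j : Fin M) :
    prism A x (Fin.castAdd M i) (Fin.castAdd M j) = A i j := by
  simp [prism, Matrix.submatrix_apply]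

lemma prism_rr (A : Matrix (Fin M) (Fin M) F) (x : F) (i j : Fin M) :
    prism A x (Fin.natAdd M i) (Fin.natAdd M j) = A i j := by
  rw [prism, Matrix.submatrix_apply, finSumFinEquiv_symm_apply_natAdd,
    finSumFinEquiv_symm_apply_natAdd, Matrix.fromBlocks_apply₂₂]

lemma prism_lr (A : Matrix (Fin M) (Fin M) F) (x : F) (i j : Fin M) :
    prism A x (Fin.castAdd M i) (Fin.natAdd M j) = if i = j then x else 0 := by
  rw [prism, Matrix.submatrix_apply, finSumFinEquiv_symm_apply_natAdd,
    finSumFinEquiv_symm_apply_castAdd, Matrix.fromBlocks_apply₁₂]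
  rw [Matrix.smul_apply, Matrix.one_apply]
  split_ifs <;> simp

lemma prism_rl (A : Matrix (Fin M) (Fin M) F) (x : F) (i j : Fin M) :
    prism A x (Fin.natAdd M i) (Fin.castAdd M j) = if i = j then x else 0 := by
  rw [prism, Matrix.submatrix_apply, finSumFinEquiv_symm_apply_natAdd,
    finSumFinEquiv_symm_apply_castAdd, Matrix.fromBlocks_apply₂₁]
  rw [Matrix.smul_apply, Matrix.one_apply]
  split_ifs <;> simp

lemma prism_symm {A : Matrix (Fin M) (Fin M) F} (hA : ∀ i j, A i j = A j i) (x : F) :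
    ∀ k l, prism A x k l = prism A x l k := by
  intro k l
  refine Fin.addCases (fun i => ?_) (fun i => ?_) k <;> clear k
  · refine Fin.addCases (fun j => ?_) (fun j => ?_) l
    · rw [prism_ll, prism_ll, hA]
    · rw [prism_lr, prism_rl]
      simp [eq_comm]
  · refine Fin.addCases (fun j => ?_) (fun j => ?_) l
    · rw [prism_rl, prism_lr]
      simp [eq_comm]
    · rw [prism_rr, prism_rr, hA]

lemma castAdd_lt_natAdd (i j : Fin M) : Fin.castAdd M i < Fin.natAdd M j := by
  rw [Fin.lt_def]
  simp only [Fin.coe_castAdd, Fin.coe_natAdd]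
  have := i.2
  omega

lemma castAdd_ne_natAdd (i j : Fin M) : Fin.castAdd M i ≠ Fin.natAdd M j :=
  Fin.ne_of_lt (castAdd_lt_natAdd i j)

/-- good permutations: those whose left-right pairs are rungs -/
def good (M : ℕ) : Finset (Equiv.Perm (Fin (M + M))) :=
  (matchings (M + M)).filter fun f =>
    ∀ i j : Fin M, f (Fin.castAdd M i) = Fin.natAdd M j → j = i

lemma sum_matchings_eq_sum_good (A : Matrix (Fin M) (Fin M) F) (x : F) :
    ∑ f ∈ matchings (M + M), mweight (prism A x) f
      = ∑ f ∈ good M, mweight (prism A x) f := by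
  refine (Finset.sum_subset (Finset.filter_subset _ _) ?_).symm
  intro f hf hnot
  unfold good at hnot
  rw [Finset.mem_filter] at hnot
  push_neg at hnot
  obtain ⟨i, j, hij, hne⟩ := hnot hf
  apply Finset.prod_eq_zero (i := Fin.castAdd M i)
  · simp only [Finset.mem_filter, Finset.mem_univ, true_and]
    rw [hij]
    exact castAdd_lt_natAdd i j
  · rw [hij, prism_lr, if_neg (fun hc => hne hc.symm)]

/-- the set of vertices not matched by a rung -/
def Sof (f : Equiv.Perm (Fin (M + M))) : Finset (Fin M) :=
  Finset.univ.filter fun i => f (Fin.castAdd M i) ≠ Fin.natAdd M i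

lemma sum_good_eq_sum_fibers (A : Matrix (Fin M) (Fin M) F) (x : F) :
    ∑ f ∈ good M, mweight (prism A x) f
      = ∑ S : Finset (Fin M), ∑ f ∈ (good M).filter (fun f => Sof f = S),
          mweight (prism A x) f := by
  rw [Finset.sum_fiberwise_of_maps_to (fun f _ => Finset.mem_univ (Sof f))]


/-- index-level embedding helpers -/
lemma embIsoSymm (S : Finset (Fin M)) (i : Fin M) (h : i ∈ S) :
    S.orderEmbOfFin rfl ((S.orderIsoOfFin rfl).symm ⟨i, h⟩) = i := by
  rw [← Finset.coe_orderIsoOfFin_apply, OrderIso.apply_symm_apply]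

lemma isoSymmEmb (S : Finset (Fin M)) (b : Fin S.card)
    (h : S.orderEmbOfFin rfl b ∈ S) :
    (S.orderIsoOfFin rfl).symm ⟨S.orderEmbOfFin rfl b, h⟩ = b := by
  rw [OrderIso.symm_apply_eq]
  exact Subtype.ext (Finset.coe_orderIsoOfFin_apply S rfl b).symm ▸ rfl

def restrictPerm (S : Finset (Fin M)) (u : Fin M → Fin M) : Fin S.card → Fin S.card := fun a =>
  if h : u (S.orderEmbOfFin rfl a) ∈ S
  then (S.orderIsoOfFin rfl).symm ⟨u (S.orderEmbOfFin rfl a), h⟩ else a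

lemma restrictPerm_eq {S : Finset (Fin M)} {u : Fin M → Fin M} {a b : Fin S.card}
    (hu : u (S.orderEmbOfFin rfl a) = S.orderEmbOfFin rfl b) : restrictPerm S u a = b := by
  unfold restrictPerm
  rw [dif_pos (hu ▸ Finset.orderEmbOfFin_mem S rfl b)]
  rw [OrderIso.symm_apply_eq]
  apply Subtype.ext
  rw [Finset.coe_orderIsoOfFin_apply]
  exact hu

lemma emb_restrictPerm {S : Finset (Fin M)} {u : Fin M → Fin M} {a : Fin S.card}
    (h : u (S.orderEmbOfFin rfl a) ∈ S) :
    S.orderEmbOfFin rfl (restrictPerm S u a) = u (S.orderEmbOfFin rfl a) := by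
  unfold restrictPerm
  rw [dif_pos h, embIsoSymm]

lemma restrictPerm_involutive {S : Finset (Fin M)} {u : Fin M → Fin M}
    (hu : ∀ i ∈ S, u i ∈ S ∧ u (u i) = i) : Function.Involutive (restrictPerm S u) := by
  intro a
  have hmem := Finset.orderEmbOfFin_mem S rfl a
  obtain ⟨h1, h2⟩ := hu _ hmem
  apply restrictPerm_eq
  rw [emb_restrictPerm h1, h2]

lemma restrictPerm_ne {S : Finset (Fin M)} {u : Fin M → Fin M} (a : Fin S.card)
    (h1 : u (S.orderEmbOfFin rfl a) ∈ S) (h2 : u (S.orderEmbOfFin rfl a) ≠ S.orderEmbOfFin rfl a) :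
    restrictPerm S u a ≠ a := by
  intro hc
  apply h2
  rw [← emb_restrictPerm h1, hc]

def lowOf (f : Equiv.Perm (Fin (M + M))) (i : Fin M) : Fin M :=
  if h : (f (Fin.castAdd M i)).1 < M then ⟨(f (Fin.castAdd M i)).1, h⟩ else i

def highOf (f : Equiv.Perm (Fin (M + M))) (i : Fin M) : Fin M :=
  if h : M ≤ (f (Fin.natAdd M i)).1
  then ⟨(f (Fin.natAdd M i)).1 - M, by have := (f (Fin.natAdd M i)).2; omega⟩ else i

lemma lowOf_eq {f : Equiv.Perm (Fin (M + M))} {i j : Fin M}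
    (h : f (Fin.castAdd M i) = Fin.castAdd M j) : lowOf f i = j := by
  unfold lowOf
  have hv : (f (Fin.castAdd M i)).1 = j.1 := by rw [h]; rfl
  rw [dif_pos (by rw [hv]; exact j.2)]
  exact Fin.ext hv

lemma highOf_eq {f : Equiv.Perm (Fin (M + M))} {i j : Fin M}
    (h : f (Fin.natAdd M i) = Fin.natAdd M j) : highOf f i = j := by
  unfold highOf
  have hv : (f (Fin.natAdd M i)).1 = M + j.1 := by rw [h]; rfl
  rw [dif_pos (by omega)]
  apply Fin.ext
  simp only [hv]
  omega

/-- every Fin (M+M) is a castAdd or natAdd -/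
lemma split_cases (k : Fin (M + M)) :
    (∃ i : Fin M, k = Fin.castAdd M i) ∨ ∃ i : Fin M, k = Fin.natAdd M i := by
  by_cases h : k.1 < M
  · exact Or.inl ⟨⟨k.1, h⟩, Fin.ext rfl⟩
  · exact Or.inr ⟨⟨k.1 - M, by have := k.2; omega⟩, Fin.ext (by simp [Fin.coe_natAdd]; have := k.2; omega)⟩

section Structure

variable {f : Equiv.Perm (Fin (M + M))} {S : Finset (Fin M)}
  (hinv : ∀ k, f (f k) = k) (hne : ∀ k, f k ≠ k)
  (hg : ∀ i j : Fin M, f (Fin.castAdd M i) = Fin.natAdd M j → j = i)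
  (hS : ∀ i : Fin M, i ∈ S ↔ f (Fin.castAdd M i) ≠ Fin.natAdd M i)

include hinv hne hg hS

lemma left_pair {i : Fin M} (hi : i ∈ S) :
    ∃ j : Fin M, f (Fin.castAdd M i) = Fin.castAdd M j := by
  rcases split_cases (f (Fin.castAdd M i)) with ⟨j, hj⟩ | ⟨j, hj⟩
  · exact ⟨j, hj⟩
  · exfalso
    have h5 := hg i j hj
    rw [h5] at hj
    exact (hS i).mp hi hj

lemma left_pair_spec {i : Fin M} (hi : i ∈ S) :
    lowOf f i ∈ S ∧ f (Fin.castAdd M (lowOf f i)) = Fin.castAdd M i ∧ lowOf f i ≠ i := by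
  obtain ⟨j, hj⟩ := left_pair hinv hne hg hS hi
  have hlow : lowOf f i = j := lowOf_eq hj
  rw [hlow]
  have hback : f (Fin.castAdd M j) = Fin.castAdd M i := by
    rw [← hj, hinv]
  refine ⟨?_, hback, ?_⟩
  · rw [hS, hback]
    intro hc
    exact castAdd_ne_natAdd i j hc
  · intro hc
    subst hc
    exact hne _ hj

lemma right_pair {i : Fin M} (hi : i ∈ S) :
    ∃ j : Fin M, f (Fin.natAdd M i) = Fin.natAdd M j := by
  rcases split_cases (f (Fin.natAdd M i)) with ⟨j, hj⟩ | ⟨j, hj⟩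
  · exfalso
    have hb : f (Fin.castAdd M j) = Fin.natAdd M i := by rw [← hj, hinv]
    have h5 := hg j i hb
    rw [← h5] at hb
    exact (hS i).mp hi hb
  · exact ⟨j, hj⟩

lemma right_pair_spec {i : Fin M} (hi : i ∈ S) :
    highOf f i ∈ S ∧ f (Fin.natAdd M (highOf f i)) = Fin.natAdd M i ∧ highOf f i ≠ i := by
  obtain ⟨j, hj⟩ := right_pair hinv hne hg hS hi
  have hhigh : highOf f i = j := highOf_eq hj
  rw [hhigh]
  have hback : f (Fin.natAdd M j) = Fin.natAdd M i := by rw [← hj, hinv]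
  refine ⟨?_, hback, ?_⟩
  · rw [hS]
    intro hc
    have : f (Fin.natAdd M j) = Fin.castAdd M j := by rw [← hc, hinv]
    rw [hback] at this
    exact castAdd_ne_natAdd j i this.symm
  · intro hc
    subst hc
    exact hne _ hj

lemma lowOf_invol : ∀ i ∈ S, lowOf f i ∈ S ∧ lowOf f (lowOf f i) = i := by
  intro i hi
  obtain ⟨h1, h2, _⟩ := left_pair_spec hinv hne hg hS hi
  exact ⟨h1, lowOf_eq h2⟩

lemma highOf_invol : ∀ i ∈ S, highOf f i ∈ S ∧ highOf f (highOf f i) = i := by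
  intro i hi
  obtain ⟨h1, h2, _⟩ := right_pair_spec hinv hne hg hS hi
  exact ⟨h1, highOf_eq h2⟩

lemma fL_involutive : Function.Involutive (restrictPerm S (lowOf f)) :=
  restrictPerm_involutive (lowOf_invol hinv hne hg hS)

lemma fR_involutive : Function.Involutive (restrictPerm S (highOf f)) :=
  restrictPerm_involutive (highOf_invol hinv hne hg hS)

lemma fR_mem :
    (fR_involutive hinv hne hg hS (S := S)).toPerm ∈ matchings S.card := by
  rw [mem_matchings]
  constructor
  · intro a
    exact (fR_involutive hinv hne hg hS (S := S)) a
  · intro a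
    have hmem := Finset.orderEmbOfFin_mem S rfl a
    obtain ⟨h1, _, h3⟩ := right_pair_spec hinv hne hg hS hmem
    exact restrictPerm_ne a h1 h3

lemma fL_mem :
    (fL_involutive hinv hne hg hS (S := S)).toPerm ∈ matchings S.card := by
  rw [mem_matchings]
  constructor
  · intro a
    exact (fL_involutive hinv hne hg hS (S := S)) a
  · intro a
    have hmem := Finset.orderEmbOfFin_mem S rfl a
    obtain ⟨h1, _, h3⟩ := left_pair_spec hinv hne hg hS hmem
    exact restrictPerm_ne a h1 h3


lemma mem_S_of_left {k : Fin (M + M)} (hk2 : k.1 < M) (hk3 : (f k).1 < M) :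
    (⟨k.1, hk2⟩ : Fin M) ∈ S := by
  rw [hS]
  have hk : Fin.castAdd M (⟨k.1, hk2⟩ : Fin M) = k := Fin.ext rfl
  rw [hk]
  have hfk : f k = Fin.castAdd M ⟨(f k).1, hk3⟩ := Fin.ext rfl
  rw [hfk]
  exact castAdd_ne_natAdd _ _

lemma mem_S_of_right {k : Fin (M + M)} (hk2 : ¬ k.1 < M) (hk3 : ¬ (f k).1 < M) :
    (⟨k.1 - M, by have := k.2; omega⟩ : Fin M) ∈ S := by
  set i0 : Fin M := ⟨k.1 - M, by have := k.2; omega⟩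
  have hk : Fin.natAdd M i0 = k := Fin.ext (by simp [Fin.coe_natAdd, i0]; omega)
  by_contra hc
  rw [hS] at hc
  push_neg at hc
  have h2 : f (Fin.natAdd M i0) = Fin.castAdd M i0 := by
    rw [← hc, hinv]
  rw [hk] at h2
  rw [h2] at hk3
  exact hk3 i0.2

omit hinv hne hg hS in
lemma isoSymm_congr (p q : {y // y ∈ S}) (h : p.1 = q.1) :
    (S.orderIsoOfFin rfl).symm p = (S.orderIsoOfFin rfl).symm q := by
  congr 1
  exact Subtype.ext h

lemma weight_split (A : Matrix (Fin M) (Fin M) F) (x : F) :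
    mweight (prism A x) f
      = x ^ (M - S.card)
        * mweight (subm A S) (Function.Involutive.toPerm _ (fL_involutive hinv hne hg hS))
        * mweight (subm A S) (Function.Involutive.toPerm _ (fR_involutive hinv hne hg hS)) := by
  classical
  unfold mweight
  set P := prism A x with hP
  set F0 := Finset.univ.filter (fun k : Fin (M + M) => k < f k) with hF0
  have hsplit1 : ∏ k ∈ F0, P k (f k)
      = (∏ k ∈ F0.filter (fun k => k.1 < M), P k (f k))
        * ∏ k ∈ F0.filter (fun k => ¬ k.1 < M), P k (f k) :=
    (Finset.prod_filter_mul_prod_filter_not F0 _ _).symm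
  have hsplit2 : ∏ k ∈ F0.filter (fun k => k.1 < M), P k (f k)
      = (∏ k ∈ (F0.filter (fun k => k.1 < M)).filter (fun k => (f k).1 < M), P k (f k))
        * ∏ k ∈ (F0.filter (fun k => k.1 < M)).filter (fun k => ¬ (f k).1 < M), P k (f k) :=
    (Finset.prod_filter_mul_prod_filter_not _ _ _).symm
  -- rung part
  have e1 : ∏ k ∈ (F0.filter (fun k => k.1 < M)).filter (fun k => ¬ (f k).1 < M), P k (f k)
      = x ^ (M - S.card) := by
    have hval : ∀ k ∈ (F0.filter (fun k => k.1 < M)).filter (fun k => ¬ (f k).1 < M),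
        P k (f k) = x := by
      intro k hk
      simp only [Finset.mem_filter, Finset.mem_univ, true_and, hF0] at hk
      obtain ⟨⟨hk1, hk2⟩, hk3⟩ := hk
      have hfk2 := (f k).2
      set i0 : Fin M := ⟨k.1, hk2⟩ with hi0
      set j0 : Fin M := ⟨(f k).1 - M, by omega⟩ with hj0
      have hki : Fin.castAdd M i0 = k := Fin.ext rfl
      have hfkj : f k = Fin.natAdd M j0 := Fin.ext (by simp [Fin.coe_natAdd, j0]; omega)
      have hji := hg i0 j0 (by rw [hki]; exact hfkj)
      rw [hfkj, ← hki, hP, prism_lr, if_pos hji.symm]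
    rw [Finset.prod_congr rfl hval, Finset.prod_const]
    congr 1
    have hcard : ((F0.filter (fun k => k.1 < M)).filter (fun k => ¬ (f k).1 < M)).card
        = (Finset.univ \ S).card := by
      refine Finset.card_bij' (fun k hk => (⟨k.1, by
          simp only [Finset.mem_filter, hF0] at hk; exact hk.1.2⟩ : Fin M))
        (fun i _ => Fin.castAdd M i) ?hi ?hj ?li ?ri
      case hi =>
        intro k hk
        simp only [Finset.mem_filter, Finset.mem_univ, true_and, hF0] at hk
        obtain ⟨⟨hk1, hk2⟩, hk3⟩ := hk
        have hfk2 := (f k).2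
        set i0 : Fin M := ⟨k.1, hk2⟩ with hi0
        set j0 : Fin M := ⟨(f k).1 - M, by omega⟩ with hj0
        have hki : Fin.castAdd M i0 = k := Fin.ext rfl
        have hfkj : f k = Fin.natAdd M j0 := Fin.ext (by simp [Fin.coe_natAdd, j0]; omega)
        have hji := hg i0 j0 (by rw [hki]; exact hfkj)
        rw [Finset.mem_sdiff]
        refine ⟨Finset.mem_univ _, fun hc => ?_⟩
        rw [hS] at hc
        apply hc
        rw [hki, hfkj, hji]
      case hj =>
        intro i hi
        rw [Finset.mem_sdiff] at hi
        have hfi : f (Fin.castAdd M i) = Fin.natAdd M i := by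
          by_contra hc
          exact hi.2 ((hS i).mpr hc)
        simp only [Finset.mem_filter, Finset.mem_univ, true_and, hF0]
        refine ⟨⟨?_, i.2⟩, ?_⟩
        · rw [hfi]; exact castAdd_lt_natAdd i i
        · rw [hfi]
          simp only [Fin.coe_natAdd]
          omega
      case li =>
        intro k _
        exact Fin.ext rfl
      case ri =>
        intro i _
        exact Fin.ext rfl
    rw [hcard, Finset.card_sdiff_of_subset (Finset.subset_univ S), Finset.card_univ, Fintype.card_fin]
  -- left-pairs part
  have e2 : ∏ k ∈ (F0.filter (fun k => k.1 < M)).filter (fun k => (f k).1 < M), P k (f k)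
      = mweight (subm A S) (Function.Involutive.toPerm _ (fL_involutive hinv hne hg hS)) := by
    unfold mweight
    refine Finset.prod_bij' (fun k hk => (S.orderIsoOfFin rfl).symm ⟨⟨k.1, by
        simp only [Finset.mem_filter, hF0] at hk; exact hk.1.2⟩,
        mem_S_of_left hinv hne hg hS
          (by simp only [Finset.mem_filter, hF0] at hk; exact hk.1.2)
          (by simp only [Finset.mem_filter, hF0] at hk; exact hk.2)⟩)
      (fun a _ => Fin.castAdd M (S.orderEmbOfFin rfl a)) ?hi ?hj ?li ?ri ?val
    case hi =>
      intro k hk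
      simp only [Finset.mem_filter, Finset.mem_univ, true_and, hF0] at hk
      obtain ⟨⟨hk1, hk2⟩, hk3⟩ := hk
      set i0 : Fin M := ⟨k.1, hk2⟩ with hi0
      set j0 : Fin M := ⟨(f k).1, hk3⟩ with hj0
      have hki : Fin.castAdd M i0 = k := Fin.ext rfl
      have hfkj : f (Fin.castAdd M i0) = Fin.castAdd M j0 := by
        rw [hki]; exact Fin.ext rfl
      have hmi : i0 ∈ S := mem_S_of_left hinv hne hg hS hk2 hk3
      have hmj : j0 ∈ S := by
        have := (left_pair_spec hinv hne hg hS hmi).1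
        rwa [lowOf_eq hfkj] at this
      have hL : (Function.Involutive.toPerm _ (fL_involutive hinv hne hg hS))
          ((S.orderIsoOfFin rfl).symm ⟨i0, hmi⟩) = (S.orderIsoOfFin rfl).symm ⟨j0, hmj⟩ := by
        show restrictPerm S (lowOf f) _ = _
        apply restrictPerm_eq
        rw [embIsoSymm, embIsoSymm]
        exact lowOf_eq hfkj
      have hfin : (S.orderIsoOfFin rfl).symm ⟨i0, hmi⟩ <
          (Function.Involutive.toPerm _ (fL_involutive hinv hne hg hS))
            ((S.orderIsoOfFin rfl).symm ⟨i0, hmi⟩) := by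
        rw [hL]
        have hlt : (⟨i0, hmi⟩ : {y // y ∈ S}) < ⟨j0, hmj⟩ :=
          Subtype.mk_lt_mk.mpr (by rw [Fin.lt_def] at hk1 ⊢; exact hk1)
        exact (OrderIso.lt_iff_lt _).mpr hlt
      refine Finset.mem_filter.mpr ⟨Finset.mem_univ _, ?_⟩
      exact hfin
    case hj =>
      intro a ha
      rw [Finset.mem_filter] at ha
      have ha2 := ha.2
      have hmem := Finset.orderEmbOfFin_mem S rfl a
      obtain ⟨j, hj⟩ := left_pair hinv hne hg hS hmem
      have hlow : lowOf f (S.orderEmbOfFin rfl a) = j := lowOf_eq hj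
      have hfLa : S.orderEmbOfFin rfl
          ((Function.Involutive.toPerm _ (fL_involutive hinv hne hg hS)) a) = j := by
        show S.orderEmbOfFin rfl (restrictPerm S (lowOf f) a) = j
        rw [emb_restrictPerm ((lowOf_invol hinv hne hg hS _ hmem).1), hlow]
      have hej : S.orderEmbOfFin rfl a < j := by
        rw [← hfLa]
        exact (S.orderEmbOfFin rfl).strictMono ha2
      simp only [Finset.mem_filter, Finset.mem_univ, true_and, hF0]
      refine ⟨⟨?_, (S.orderEmbOfFin rfl a).2⟩, ?_⟩
      · rw [hj]
        rw [Fin.lt_def] at hej ⊢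
        exact hej
      · rw [hj]
        exact j.2
    case li =>
      intro k hk
      rw [embIsoSymm]
      exact Fin.ext rfl
    case ri =>
      intro a ha
      refine ((isoSymm_congr _ ⟨S.orderEmbOfFin rfl a,
        Finset.orderEmbOfFin_mem S rfl a⟩ ?_).trans
          (isoSymmEmb S a (Finset.orderEmbOfFin_mem S rfl a)))
      exact rfl
    case val =>
      intro k hk
      simp only [Finset.mem_filter, Finset.mem_univ, true_and, hF0] at hk
      obtain ⟨⟨hk1, hk2⟩, hk3⟩ := hk
      set i0 : Fin M := ⟨k.1, hk2⟩ with hi0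
      set j0 : Fin M := ⟨(f k).1, hk3⟩ with hj0
      have hki : Fin.castAdd M i0 = k := Fin.ext rfl
      have hfkj : f (Fin.castAdd M i0) = Fin.castAdd M j0 := by
        rw [hki]; exact Fin.ext rfl
      have hmi : i0 ∈ S := mem_S_of_left hinv hne hg hS hk2 hk3
      have hmj : j0 ∈ S := by
        have := (left_pair_spec hinv hne hg hS hmi).1
        rwa [lowOf_eq hfkj] at this
      have hL : (Function.Involutive.toPerm _ (fL_involutive hinv hne hg hS))
          ((S.orderIsoOfFin rfl).symm ⟨i0, hmi⟩) = (S.orderIsoOfFin rfl).symm ⟨j0, hmj⟩ := by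
        show restrictPerm S (lowOf f) _ = _
        apply restrictPerm_eq
        rw [embIsoSymm, embIsoSymm]
        exact lowOf_eq hfkj
      have hcalc : P k (f k) = subm A S ((S.orderIsoOfFin rfl).symm ⟨i0, hmi⟩)
          ((Function.Involutive.toPerm _ (fL_involutive hinv hne hg hS))
            ((S.orderIsoOfFin rfl).symm ⟨i0, hmi⟩)) := by
        rw [hL]
        unfold subm
        rw [embIsoSymm, embIsoSymm, ← hki, hfkj, hP, prism_ll]
      exact hcalc
  -- right-pairs part
  have e3 : ∏ k ∈ F0.filter (fun k => ¬ k.1 < M), P k (f k)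
      = mweight (subm A S) (Function.Involutive.toPerm _ (fR_involutive hinv hne hg hS)) := by
    unfold mweight
    refine Finset.prod_bij' (fun k hk => (S.orderIsoOfFin rfl).symm ⟨⟨k.1 - M, by
        have := k.2; omega⟩,
        mem_S_of_right hinv hne hg hS
          (by simp only [Finset.mem_filter, hF0] at hk; exact hk.2)
          (by simp only [Finset.mem_filter, Finset.mem_univ, true_and, hF0] at hk
              rw [Fin.lt_def] at hk
              omega)⟩)
      (fun a _ => Fin.natAdd M (S.orderEmbOfFin rfl a)) ?hi ?hj ?li ?ri ?val
    case hi =>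
      intro k hk
      simp only [Finset.mem_filter, Finset.mem_univ, true_and, hF0] at hk
      obtain ⟨hk1, hk2⟩ := hk
      have hk3 : ¬ (f k).1 < M := by rw [Fin.lt_def] at hk1; omega
      have hfk2 := (f k).2
      have hki2 := k.2
      set i0 : Fin M := ⟨k.1 - M, by omega⟩ with hi0
      set j0 : Fin M := ⟨(f k).1 - M, by omega⟩ with hj0
      have hki : Fin.natAdd M i0 = k := Fin.ext (by simp [Fin.coe_natAdd, i0]; omega)
      have hfkj : f (Fin.natAdd M i0) = Fin.natAdd M j0 := by
        rw [hki]; exact Fin.ext (by simp [Fin.coe_natAdd, j0]; omega)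
      have hmi : i0 ∈ S := mem_S_of_right hinv hne hg hS hk2 hk3
      have hmj : j0 ∈ S := by
        have := (right_pair_spec hinv hne hg hS hmi).1
        rwa [highOf_eq hfkj] at this
      have hL : (Function.Involutive.toPerm _ (fR_involutive hinv hne hg hS))
          ((S.orderIsoOfFin rfl).symm ⟨i0, hmi⟩) = (S.orderIsoOfFin rfl).symm ⟨j0, hmj⟩ := by
        show restrictPerm S (highOf f) _ = _
        apply restrictPerm_eq
        rw [embIsoSymm, embIsoSymm]
        exact highOf_eq hfkj
      have hfin : (S.orderIsoOfFin rfl).symm ⟨i0, hmi⟩ <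
          (Function.Involutive.toPerm _ (fR_involutive hinv hne hg hS))
            ((S.orderIsoOfFin rfl).symm ⟨i0, hmi⟩) := by
        rw [hL]
        have hlt : (⟨i0, hmi⟩ : {y // y ∈ S}) < ⟨j0, hmj⟩ :=
          Subtype.mk_lt_mk.mpr (by rw [Fin.lt_def] at hk1 ⊢; simp only [hi0, hj0]; omega)
        exact (OrderIso.lt_iff_lt _).mpr hlt
      refine Finset.mem_filter.mpr ⟨Finset.mem_univ _, ?_⟩
      exact hfin
    case hj =>
      intro a ha
      rw [Finset.mem_filter] at ha
      have ha2 := ha.2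
      have hmem := Finset.orderEmbOfFin_mem S rfl a
      obtain ⟨j, hj⟩ := right_pair hinv hne hg hS hmem
      have hhigh : highOf f (S.orderEmbOfFin rfl a) = j := highOf_eq hj
      have hfRa : S.orderEmbOfFin rfl
          ((Function.Involutive.toPerm _ (fR_involutive hinv hne hg hS)) a) = j := by
        show S.orderEmbOfFin rfl (restrictPerm S (highOf f) a) = j
        rw [emb_restrictPerm ((highOf_invol hinv hne hg hS _ hmem).1), hhigh]
      have hej : S.orderEmbOfFin rfl a < j := by
        rw [← hfRa]
        exact (S.orderEmbOfFin rfl).strictMono ha2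
      simp only [Finset.mem_filter, Finset.mem_univ, true_and, hF0]
      refine ⟨?_, ?_⟩
      · rw [hj]
        rw [Fin.lt_def] at hej ⊢
        simp only [Fin.coe_natAdd]
        omega
      · simp only [Fin.coe_natAdd]
        omega
    case li =>
      intro k hk
      rw [embIsoSymm]
      apply Fin.ext
      simp only [Fin.coe_natAdd]
      simp only [Finset.mem_filter, Finset.mem_univ, true_and, hF0] at hk
      have := k.2
      omega
    case ri =>
      intro a ha
      refine ((isoSymm_congr _ ⟨S.orderEmbOfFin rfl a,
        Finset.orderEmbOfFin_mem S rfl a⟩ ?_).trans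
          (isoSymmEmb S a (Finset.orderEmbOfFin_mem S rfl a)))
      apply Fin.ext
      show (Fin.natAdd M (S.orderEmbOfFin rfl a)).1 - M = _
      simp only [Fin.coe_natAdd]
      omega
    case val =>
      intro k hk
      simp only [Finset.mem_filter, Finset.mem_univ, true_and, hF0] at hk
      obtain ⟨hk1, hk2⟩ := hk
      have hk3 : ¬ (f k).1 < M := by rw [Fin.lt_def] at hk1; omega
      have hfk2 := (f k).2
      have hki2 := k.2
      set i0 : Fin M := ⟨k.1 - M, by omega⟩ with hi0
      set j0 : Fin M := ⟨(f k).1 - M, by omega⟩ with hj0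
      have hki : Fin.natAdd M i0 = k := Fin.ext (by simp [Fin.coe_natAdd, i0]; omega)
      have hfkj : f (Fin.natAdd M i0) = Fin.natAdd M j0 := by
        rw [hki]; exact Fin.ext (by simp [Fin.coe_natAdd, j0]; omega)
      have hmi : i0 ∈ S := mem_S_of_right hinv hne hg hS hk2 hk3
      have hmj : j0 ∈ S := by
        have := (right_pair_spec hinv hne hg hS hmi).1
        rwa [highOf_eq hfkj] at this
      have hL : (Function.Involutive.toPerm _ (fR_involutive hinv hne hg hS))
          ((S.orderIsoOfFin rfl).symm ⟨i0, hmi⟩) = (S.orderIsoOfFin rfl).symm ⟨j0, hmj⟩ := by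
        show restrictPerm S (highOf f) _ = _
        apply restrictPerm_eq
        rw [embIsoSymm, embIsoSymm]
        exact highOf_eq hfkj
      have hcalc : P k (f k) = subm A S ((S.orderIsoOfFin rfl).symm ⟨i0, hmi⟩)
          ((Function.Involutive.toPerm _ (fR_involutive hinv hne hg hS))
            ((S.orderIsoOfFin rfl).symm ⟨i0, hmi⟩)) := by
        rw [hL]
        unfold subm
        rw [embIsoSymm, embIsoSymm, ← hki, hfkj, hP, prism_rr]
      exact hcalc
  rw [hsplit1, hsplit2, e1, e2, e3]
  unfold mweight
  ring

end Structure


section Assemble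

variable {S : Finset (Fin M)}

/-- assemble a good permutation from two matchings on `S` -/
def asmFun (S : Finset (Fin M)) (g g' : Equiv.Perm (Fin S.card)) : Fin (M + M) → Fin (M + M) :=
  Fin.addCases
    (fun i => if h : i ∈ S
      then Fin.castAdd M (S.orderEmbOfFin rfl (g ((S.orderIsoOfFin rfl).symm ⟨i, h⟩)))
      else Fin.natAdd M i)
    (fun i => if h : i ∈ S
      then Fin.natAdd M (S.orderEmbOfFin rfl (g' ((S.orderIsoOfFin rfl).symm ⟨i, h⟩)))
      else Fin.castAdd M i)

variable {g g' : Equiv.Perm (Fin S.card)}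

lemma asmFun_left_mem {i : Fin M} (h : i ∈ S) :
    asmFun S g g' (Fin.castAdd M i)
      = Fin.castAdd M (S.orderEmbOfFin rfl (g ((S.orderIsoOfFin rfl).symm ⟨i, h⟩))) := by
  unfold asmFun
  rw [Fin.addCases_left, dif_pos h]

lemma asmFun_left_not {i : Fin M} (h : i ∉ S) :
    asmFun S g g' (Fin.castAdd M i) = Fin.natAdd M i := by
  unfold asmFun
  rw [Fin.addCases_left, dif_neg h]

lemma asmFun_right_mem {i : Fin M} (h : i ∈ S) :
    asmFun S g g' (Fin.natAdd M i)
      = Fin.natAdd M (S.orderEmbOfFin rfl (g' ((S.orderIsoOfFin rfl).symm ⟨i, h⟩))) := by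
  unfold asmFun
  rw [Fin.addCases_right, dif_pos h]

lemma asmFun_right_not {i : Fin M} (h : i ∉ S) :
    asmFun S g g' (Fin.natAdd M i) = Fin.castAdd M i := by
  unfold asmFun
  rw [Fin.addCases_right, dif_neg h]

lemma asmFun_left_mem' {i : Fin M} (h : i ∈ S) (a : Fin S.card)
    (ha : S.orderEmbOfFin rfl a = i) :
    asmFun S g g' (Fin.castAdd M i) = Fin.castAdd M (S.orderEmbOfFin rfl (g a)) := by
  subst ha
  rw [asmFun_left_mem h, isoSymmEmb]

lemma asmFun_right_mem' {i : Fin M} (h : i ∈ S) (a : Fin S.card)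
    (ha : S.orderEmbOfFin rfl a = i) :
    asmFun S g g' (Fin.natAdd M i) = Fin.natAdd M (S.orderEmbOfFin rfl (g' a)) := by
  subst ha
  rw [asmFun_right_mem h, isoSymmEmb]

lemma asmFun_involutive (hg : ∀ a, g (g a) = a) (hg' : ∀ a, g' (g' a) = a) :
    Function.Involutive (asmFun S g g') := by
  intro k
  rcases split_cases k with ⟨i, rfl⟩ | ⟨i, rfl⟩
  · by_cases h : i ∈ S
    · rw [asmFun_left_mem h,
        asmFun_left_mem' (Finset.orderEmbOfFin_mem S rfl _) _ rfl, hg, embIsoSymm]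
    · rw [asmFun_left_not h, asmFun_right_not h]
  · by_cases h : i ∈ S
    · rw [asmFun_right_mem h,
        asmFun_right_mem' (Finset.orderEmbOfFin_mem S rfl _) _ rfl, hg', embIsoSymm]
    · rw [asmFun_right_not h, asmFun_left_not h]

noncomputable def asmPerm (S : Finset (Fin M)) (g g' : Equiv.Perm (Fin S.card))
    (hg : ∀ a, g (g a) = a) (hg' : ∀ a, g' (g' a) = a) : Equiv.Perm (Fin (M + M)) :=
  Function.Involutive.toPerm _ (asmFun_involutive hg hg')

lemma asmPerm_apply {hg : ∀ a, g (g a) = a} {hg' : ∀ a, g' (g' a) = a} (k : Fin (M + M)) :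
    asmPerm S g g' hg hg' k = asmFun S g g' k := rfl

lemma asmPerm_mem_good (hgm : g ∈ matchings S.card) (hg'm : g' ∈ matchings S.card)
    (hg : ∀ a, g (g a) = a) (hg' : ∀ a, g' (g' a) = a) :
    asmPerm S g g' hg hg' ∈ good M := by
  obtain ⟨hg1, hg2⟩ := mem_matchings.mp hgm
  obtain ⟨hg'1, hg'2⟩ := mem_matchings.mp hg'm
  unfold good
  rw [Finset.mem_filter]
  constructor
  · rw [mem_matchings]
    refine ⟨fun k => asmFun_involutive hg hg' k, fun k => ?_⟩
    rw [asmPerm_apply]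
    rcases split_cases k with ⟨i, rfl⟩ | ⟨i, rfl⟩
    · by_cases h : i ∈ S
      · rw [asmFun_left_mem h]
        intro hc
        have h2 : S.orderEmbOfFin rfl (g ((S.orderIsoOfFin rfl).symm ⟨i, h⟩)) = i :=
          Fin.ext (by simpa using congrArg Fin.val hc)
        have h3 : g ((S.orderIsoOfFin rfl).symm ⟨i, h⟩) = (S.orderIsoOfFin rfl).symm ⟨i, h⟩ := by
          apply_fun (S.orderEmbOfFin rfl) using (S.orderEmbOfFin rfl).injective
          rw [h2, embIsoSymm]
        exact hg2 _ h3
      · rw [asmFun_left_not h]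
        exact fun hc => castAdd_ne_natAdd i i hc.symm
    · by_cases h : i ∈ S
      · rw [asmFun_right_mem h]
        intro hc
        have h2 : S.orderEmbOfFin rfl (g' ((S.orderIsoOfFin rfl).symm ⟨i, h⟩)) = i := by
          have := congrArg Fin.val hc
          simp only [Fin.coe_natAdd] at this
          exact Fin.ext (by omega)
        have h3 : g' ((S.orderIsoOfFin rfl).symm ⟨i, h⟩) = (S.orderIsoOfFin rfl).symm ⟨i, h⟩ := by
          apply_fun (S.orderEmbOfFin rfl) using (S.orderEmbOfFin rfl).injective
          rw [h2, embIsoSymm]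
        exact hg'2 _ h3
      · rw [asmFun_right_not h]
        exact castAdd_ne_natAdd i i
  · intro i j hc
    rw [asmPerm_apply] at hc
    by_cases h : i ∈ S
    · rw [asmFun_left_mem h] at hc
      exact absurd hc (castAdd_ne_natAdd _ _)
    · rw [asmFun_left_not h] at hc
      have := congrArg Fin.val hc
      simp only [Fin.coe_natAdd] at this
      exact Fin.ext (by omega)

lemma asmPerm_Sof (hg : ∀ a, g (g a) = a) (hg' : ∀ a, g' (g' a) = a) :
    Sof (asmPerm S g g' hg hg') = S := by
  ext i
  unfold Sof
  rw [Finset.mem_filter]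
  simp only [Finset.mem_univ, true_and]
  by_cases h : i ∈ S
  · rw [asmPerm_apply, asmFun_left_mem h]
    simp only [h, iff_true]
    exact castAdd_ne_natAdd _ _
  · rw [asmPerm_apply, asmFun_left_not h]
    simp only [h, iff_false, ne_eq, not_not]

end Assemble

section RoundTrip

variable {f : Equiv.Perm (Fin (M + M))} {S : Finset (Fin M)}
  (hinv : ∀ k, f (f k) = k) (hne : ∀ k, f k ≠ k)
  (hg : ∀ i j : Fin M, f (Fin.castAdd M i) = Fin.natAdd M j → j = i)
  (hS : ∀ i : Fin M, i ∈ S ↔ f (Fin.castAdd M i) ≠ Fin.natAdd M i)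

include hinv hne hg hS

/-- round trip : assembling the two extracted matchings gives back `f` -/
lemma asm_roundtrip (k : Fin (M + M)) :
    asmFun S (Function.Involutive.toPerm _ (fL_involutive hinv hne hg hS))
      (Function.Involutive.toPerm _ (fR_involutive hinv hne hg hS)) k = f k := by
  rcases split_cases k with ⟨i, rfl⟩ | ⟨i, rfl⟩
  · by_cases h : i ∈ S
    · rw [asmFun_left_mem h]
      have hmem2 : lowOf f (S.orderEmbOfFin rfl ((S.orderIsoOfFin rfl).symm ⟨i, h⟩)) ∈ S := by
        rw [embIsoSymm]
        exact (lowOf_invol hinv hne hg hS i h).1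
      rw [show (Function.Involutive.toPerm _ (fL_involutive hinv hne hg hS))
          ((S.orderIsoOfFin rfl).symm ⟨i, h⟩)
          = restrictPerm S (lowOf f) ((S.orderIsoOfFin rfl).symm ⟨i, h⟩) from rfl]
      rw [emb_restrictPerm hmem2, embIsoSymm]
      obtain ⟨j, hj⟩ := left_pair hinv hne hg hS h
      rw [lowOf_eq hj, hj]
    · rw [asmFun_left_not h]
      rw [hS] at h
      push_neg at h
      exact h.symm
  · by_cases h : i ∈ S
    · rw [asmFun_right_mem h]
      have hmem2 : highOf f (S.orderEmbOfFin rfl ((S.orderIsoOfFin rfl).symm ⟨i, h⟩)) ∈ S := by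
        rw [embIsoSymm]
        exact (highOf_invol hinv hne hg hS i h).1
      rw [show (Function.Involutive.toPerm _ (fR_involutive hinv hne hg hS))
          ((S.orderIsoOfFin rfl).symm ⟨i, h⟩)
          = restrictPerm S (highOf f) ((S.orderIsoOfFin rfl).symm ⟨i, h⟩) from rfl]
      rw [emb_restrictPerm hmem2, embIsoSymm]
      obtain ⟨j, hj⟩ := right_pair hinv hne hg hS h
      rw [highOf_eq hj, hj]
    · rw [asmFun_right_not h]
      rw [hS] at h
      push_neg at h
      rw [← h, hinv]

end RoundTrip

lemma goodS_unpack {f : Equiv.Perm (Fin (M + M))} {S : Finset (Fin M)}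
    (hf : f ∈ (good M).filter (fun f => Sof f = S)) :
    (∀ k, f (f k) = k) ∧ (∀ k, f k ≠ k)
      ∧ (∀ i j : Fin M, f (Fin.castAdd M i) = Fin.natAdd M j → j = i)
      ∧ (∀ i : Fin M, i ∈ S ↔ f (Fin.castAdd M i) ≠ Fin.natAdd M i) := by
  rw [Finset.mem_filter] at hf
  obtain ⟨hgd, hSof⟩ := hf
  unfold good at hgd
  rw [Finset.mem_filter] at hgd
  obtain ⟨hm, hgood⟩ := hgd
  obtain ⟨h1, h2⟩ := mem_matchings.mp hm
  refine ⟨h1, h2, hgood, fun i => ?_⟩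
  rw [← hSof]
  unfold Sof
  rw [Finset.mem_filter]
  simp

lemma rp2L {S : Finset (Fin M)} {g g' : Equiv.Perm (Fin S.card)}
    (hg1 : ∀ a, g (g a) = a) (hg2 : ∀ a, g' (g' a) = a) (a : Fin S.card) :
    restrictPerm S (lowOf (asmPerm S g g' hg1 hg2)) a = g a := by
  apply restrictPerm_eq
  apply lowOf_eq
  rw [asmPerm_apply]
  exact asmFun_left_mem' (Finset.orderEmbOfFin_mem S rfl a) a rfl

lemma rp2R {S : Finset (Fin M)} {g g' : Equiv.Perm (Fin S.card)}
    (hg1 : ∀ a, g (g a) = a) (hg2 : ∀ a, g' (g' a) = a) (a : Fin S.card) :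
    restrictPerm S (highOf (asmPerm S g g' hg1 hg2)) a = g' a := by
  apply restrictPerm_eq
  apply highOf_eq
  rw [asmPerm_apply]
  exact asmFun_right_mem' (Finset.orderEmbOfFin_mem S rfl a) a rfl

lemma sum_goodS (A : Matrix (Fin M) (Fin M) F) (x : F) (S : Finset (Fin M)) :
    ∑ f ∈ (good M).filter (fun f => Sof f = S), mweight (prism A x) f
      = ∑ p ∈ (matchings S.card) ×ˢ (matchings S.card),
          x ^ (M - S.card) * (mweight (subm A S) p.1 * mweight (subm A S) p.2) := by
  refine Finset.sum_bij'
    (fun f hf =>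
      (Function.Involutive.toPerm _ (fL_involutive (goodS_unpack hf).1 (goodS_unpack hf).2.1
          (goodS_unpack hf).2.2.1 (goodS_unpack hf).2.2.2),
       Function.Involutive.toPerm _ (fR_involutive (goodS_unpack hf).1 (goodS_unpack hf).2.1
          (goodS_unpack hf).2.2.1 (goodS_unpack hf).2.2.2)))
    (fun p hp => asmPerm S p.1 p.2
      (mem_matchings.mp (Finset.mem_product.mp hp).1).1
      (mem_matchings.mp (Finset.mem_product.mp hp).2).1)
    ?hi ?hj ?li ?ri ?val
  case hi =>
    intro f hf
    rw [Finset.mem_product]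
    obtain ⟨h1, h2, h3, h4⟩ := goodS_unpack hf
    exact ⟨fL_mem h1 h2 h3 h4, fR_mem h1 h2 h3 h4⟩
  case hj =>
    intro p hp
    rw [Finset.mem_filter]
    have hp1 := (Finset.mem_product.mp hp).1
    have hp2 := (Finset.mem_product.mp hp).2
    exact ⟨asmPerm_mem_good hp1 hp2 _ _, asmPerm_Sof _ _⟩
  case li =>
    intro f hf
    obtain ⟨h1, h2, h3, h4⟩ := goodS_unpack hf
    apply Equiv.ext
    intro k
    exact asm_roundtrip h1 h2 h3 h4 k
  case ri =>
    intro p hp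
    have hg1 := (mem_matchings.mp (Finset.mem_product.mp hp).1).1
    have hg2 := (mem_matchings.mp (Finset.mem_product.mp hp).2).1
    refine Prod.ext ?_ ?_
    · apply Equiv.ext
      intro a
      exact rp2L hg1 hg2 a
    · apply Equiv.ext
      intro a
      exact rp2R hg1 hg2 a
  case val =>
    intro f hf
    obtain ⟨h1, h2, h3, h4⟩ := goodS_unpack hf
    rw [weight_split h1 h2 h3 h4 A x]
    ring

lemma haf_prism_eq [CharZero F] {A : Matrix (Fin M) (Fin M) F}
    (hA : ∀ i j, A i j = A j i) (x : F) :
    haf (prism A x)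
      = ∑ S : Finset (Fin M), haf (subm A S) ^ 2 * x ^ (M - S.card) := by
  rw [haf_eq_matchings _ (prism_symm hA x), sum_matchings_eq_sum_good,
    sum_good_eq_sum_fibers]
  refine Finset.sum_congr rfl fun S _ => ?_
  rw [sum_goodS, ← Finset.mul_sum, Finset.sum_product, ← Finset.sum_mul_sum,
    haf_eq_matchings (subm A S) (fun a b => hA _ _)]
  ring

end PartB
end GBSaux


/-- The signless GBS polynomial equals the hafnian of the prism over `G`. -/
theorem gbsPlus_eq_haf_prism {M : ℕ} (G : SimpleGraph (Fin M)) [DecidableRel G.Adj]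
    (x : ℝ) :
    Polynomial.eval x (GBSplus (G.adjMatrix ℝ)) = haf (prism (G.adjMatrix ℝ) x) := by
  have hA : ∀ i j, (G.adjMatrix ℝ) i j = (G.adjMatrix ℝ) j i := by
    intro i j
    simp only [SimpleGraph.adjMatrix_apply]
    by_cases h : G.Adj i j
    · rw [if_pos h, if_pos (G.adj_comm i j |>.mp h)]
    · rw [if_neg h, if_neg (fun hc => h ((G.adj_comm j i).mp hc))]
  rw [GBSaux.haf_prism_eq hA x]
  unfold GBSplus
  simp only [Polynomial.eval_finset_sum, Polynomial.eval_mul, Polynomial.eval_pow,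
    Polynomial.eval_C, Polynomial.eval_X]
end

section
/- For a finite simple graph G on M vertices, GBS_G(x) = (−i)^M · haf(adjacency matrix of G □ P₂(ix)), i.e., the signed GBS polynomial is obtained from the hafnian of the prism over G with edge weight ix, multiplied by (−i)^M. -/
open Finset Polynomial

namespace GbsAux

open Equiv

variable {n M : ℕ}

variable {n : ℕ}

def FPF (τ : Equiv.Perm (Fin n)) : Prop := (∀ a, τ (τ a) = a) ∧ ∀ a, τ a ≠ a
instance : DecidablePred (@FPF n) := fun τ => by unfold FPF; infer_instance

def flipFun (n : ℕ) : Fin n → Fin n := fun a =>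
  if h : 2 ∣ n then ⟨2 * (a.1 / 2) + (1 - a.1 % 2), by have := a.isLt; omega⟩ else a

lemma flipFun_involutive (n : ℕ) : Function.Involutive (flipFun n) := by
  intro a; unfold flipFun; split
  · apply Fin.ext; simp only; omega
  · rfl

def flip (n : ℕ) : Equiv.Perm (Fin n) := (flipFun_involutive n).toPerm

lemma flip_val (h : 2 ∣ n) (a : Fin n) : (flip n a).1 = 2 * (a.1 / 2) + (1 - a.1 % 2) := by
  show (flipFun n a).1 = _
  unfold flipFun; rw [dif_pos h]

lemma FPF_flip (h : 2 ∣ n) : FPF (flip n) := by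
  constructor
  · exact flipFun_involutive n
  · intro a hc
    have := congrArg Fin.val hc
    rw [flip_val h] at this; omega

lemma FPF_conj {τ σ : Equiv.Perm (Fin n)} (hτ : FPF τ) : FPF (σ * τ * σ⁻¹) := by
  obtain ⟨h1, h2⟩ := hτ
  constructor
  · intro a; simp [h1]
  · intro a hc
    simp only [Equiv.Perm.mul_apply] at hc
    exact h2 (σ⁻¹ a) (σ.injective (hc.trans (σ.apply_symm_apply a).symm))

lemma card_pairs {τ : Equiv.Perm (Fin n)} (hτ : FPF τ) :
    (univ.filter (fun a => a < τ a)).card * 2 = n := by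
  have hsplit := Finset.card_filter_add_card_filter_not
    (s := (univ : Finset (Fin n))) (p := fun a => a < τ a)
  rw [Finset.card_univ, Fintype.card_fin] at hsplit
  have h2 : (univ.filter (fun a => ¬ a < τ a)) = (univ.filter (fun a => τ a < a)) := by
    apply Finset.filter_congr
    intro a _
    simp only [not_lt, eq_iff_iff]
    exact ⟨fun hle => lt_of_le_of_ne hle (hτ.2 a), fun hlt => hlt.le⟩
  have h3 : (univ.filter (fun a => τ a < a)).card = (univ.filter (fun a => a < τ a)).card := by
    apply Finset.card_bij (fun a _ => τ a)
    · intro a ha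
      simp only [Finset.mem_filter, Finset.mem_univ, true_and] at ha ⊢
      rw [hτ.1 a]; exact ha
    · intro a ha b hb hab; exact τ.injective hab
    · intro b hb
      simp only [Finset.mem_filter, Finset.mem_univ, true_and] at hb ⊢
      exact ⟨τ b, by rw [hτ.1 b]; exact ⟨hb, rfl⟩⟩
  rw [h2, h3] at hsplit
  omega

lemma image_conj_flip (h : 2 ∣ n) :
    (univ : Finset (Equiv.Perm (Fin n))).image (fun σ => σ * flip n * σ⁻¹) =
      univ.filter (fun τ => FPF τ) := by
  apply Finset.Subset.antisymm
  · intro τ hτ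
    simp only [Finset.mem_image, Finset.mem_univ, true_and] at hτ
    obtain ⟨σ, rfl⟩ := hτ
    simp only [Finset.mem_filter, Finset.mem_univ, true_and]
    exact FPF_conj (FPF_flip h)
  · intro τ hτ
    simp only [Finset.mem_filter, Finset.mem_univ, true_and] at hτ
    simp only [Finset.mem_image, Finset.mem_univ, true_and]
    have hcard : (univ.filter (fun a => a < τ a)).card = n / 2 := by
      have := card_pairs hτ; omega
    set P := univ.filter (fun a => a < τ a) with hP
    have hmem : ∀ a : Fin n, a ∈ P ↔ a < τ a := by
      intro a; rw [hP]; simp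
    set e := P.orderIsoOfFin hcard with he
    set idx : Fin n → Fin (n/2) := fun a => ⟨a.1/2, by have := a.isLt; omega⟩ with hidx
    set g : Fin n → Fin n := fun a =>
      if a.1 % 2 = 0 then (e (idx a) : Fin n) else τ (e (idx a)) with hg
    have hePlt : ∀ j, (e j : Fin n) < τ (e j) := fun j => (hmem _).mp (e j).2
    have hginj : Function.Injective g := by
      intro a a' hgaa
      simp only [hg] at hgaa
      split_ifs at hgaa with h1 h2 h2
      · have h3 : idx a = idx a' := e.injective (Subtype.ext hgaa)
        have h4 := congrArg Fin.val h3
        simp only [hidx] at h4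
        apply Fin.ext; omega
      · exfalso
        have h5 := hePlt (idx a)
        have h6 := hePlt (idx a')
        rw [← hgaa] at h6
        have h7 : τ ((e (idx a) : Fin n)) = (e (idx a') : Fin n) := by
          rw [hgaa, hτ.1]
        rw [h7] at h5
        exact absurd (h5.trans h6) (lt_irrefl _)
      · exfalso
        have h5 := hePlt (idx a)
        have h6 := hePlt (idx a')
        rw [hgaa] at h5
        have h7 : τ ((e (idx a') : Fin n)) = (e (idx a) : Fin n) := by
          rw [← hgaa, hτ.1]
        rw [h7] at h6
        exact absurd (h5.trans h6) (lt_irrefl _)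
      · have h3 : idx a = idx a' := e.injective (Subtype.ext (τ.injective hgaa))
        have h4 := congrArg Fin.val h3
        simp only [hidx] at h4
        apply Fin.ext; omega
    have hgbij : Function.Bijective g := Finite.injective_iff_bijective.mp hginj
    refine ⟨Equiv.ofBijective g hgbij, ?_⟩
    have hkey : ∀ a : Fin n, g (flip n a) = τ (g a) := by
      intro a
      have hia : idx (flip n a) = idx a := by
        apply Fin.ext; simp only [hidx]; rw [flip_val h]; omega
      by_cases hpar : a.1 % 2 = 0
      · have hpar' : ¬ (flip n a).1 % 2 = 0 := by rw [flip_val h]; omega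
        simp only [hg, hia, if_pos hpar, if_neg hpar']
      · have hpar' : (flip n a).1 % 2 = 0 := by rw [flip_val h]; omega
        simp only [hg, hia, if_pos hpar', if_neg hpar]
        rw [hτ.1]
    apply Equiv.ext
    intro b
    simp only [Equiv.Perm.mul_apply]
    show g (flip n ((Equiv.ofBijective g hgbij)⁻¹ b)) = τ b
    rw [hkey]
    show τ ((Equiv.ofBijective g hgbij) ((Equiv.ofBijective g hgbij)⁻¹ b)) = τ b
    rw [Equiv.Perm.inv_def, Equiv.apply_symm_apply]

noncomputable def wt (B : Matrix (Fin n) (Fin n) ℂ) (τ : Equiv.Perm (Fin n)) : ℂ :=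
  ∏ a ∈ univ.filter (fun a => a < τ a), B a (τ a)

lemma wt_conj (h : 2 ∣ n) {B : Matrix (Fin n) (Fin n) ℂ} (hB : ∀ i j, B i j = B j i)
    (σ : Equiv.Perm (Fin n)) :
    (∏ j : Fin (n / 2),
        B (σ ⟨2 * j.1, by have h1 := Nat.div_mul_cancel h; have h2 := j.isLt; omega⟩)
          (σ ⟨2 * j.1 + 1, by have h1 := Nat.div_mul_cancel h; have h2 := j.isLt; omega⟩)) =
      wt B (σ * flip n * σ⁻¹) := by
  have hp : n / 2 * 2 = n := Nat.div_mul_cancel h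
  set τ := σ * flip n * σ⁻¹ with hτdef
  have hflip2 : ∀ y : Fin n, flip n (flip n y) = y := flipFun_involutive n
  have hστ : ∀ y : Fin n, τ (σ y) = σ (flip n y) := by
    intro y; simp [hτdef, Equiv.Perm.mul_apply]
  have hτ2 : ∀ c : Fin n, τ (τ c) = c := by
    intro c
    have := hστ (σ⁻¹ c)
    simp only [Equiv.Perm.inv_def, Equiv.apply_symm_apply] at this
    rw [this, hστ, hflip2]
    simp
  set a0 : Fin (n/2) → Fin n := fun j => ⟨2*j.1, by have := j.isLt; omega⟩ with ha0
  set b0 : Fin (n/2) → Fin n := fun j => ⟨2*j.1+1, by have := j.isLt; omega⟩ with hb0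
  have hflipa : ∀ j, flip n (a0 j) = b0 j := by
    intro j; apply Fin.ext; rw [flip_val h]; simp only [ha0, hb0]; omega
  have hflipb : ∀ j, flip n (b0 j) = a0 j := by
    intro j; rw [← hflipa, hflip2]
  have hne : ∀ j, σ (a0 j) ≠ σ (b0 j) := by
    intro j hc
    have := σ.injective hc
    have := congrArg Fin.val this
    simp only [ha0, hb0] at this
    omega
  have hτa : ∀ j, τ (σ (a0 j)) = σ (b0 j) := by intro j; rw [hστ, hflipa]
  have hτb : ∀ j, τ (σ (b0 j)) = σ (a0 j) := by intro j; rw [hστ, hflipb]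
  show (∏ j : Fin (n/2), B (σ (a0 j)) (σ (b0 j))) = _
  unfold wt
  apply Finset.prod_bij (fun (j : Fin (n/2)) (_ : j ∈ univ) => min (σ (a0 j)) (σ (b0 j)))
  · intro j _
    simp only [Finset.mem_filter, Finset.mem_univ, true_and]
    rcases lt_or_gt_of_ne (hne j) with hlt | hgt
    · rw [min_eq_left hlt.le, hτa]; exact hlt
    · rw [min_eq_right hgt.le, hτb]; exact hgt
  · intro j _ j' _ hjj'
    have key : ∀ k : Fin (n/2), (σ.symm (min (σ (a0 k)) (σ (b0 k)))).1 / 2 = k.1 := by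
      intro k
      rcases min_cases (σ (a0 k)) (σ (b0 k)) with ⟨h1, _⟩ | ⟨h1, _⟩ <;>
      · rw [h1, Equiv.symm_apply_apply]
        simp only [ha0, hb0]
        omega
    have h2 : j.1 = j'.1 := by rw [← key j, hjj', key j']
    exact Fin.ext h2
  · intro c hc
    simp only [Finset.mem_filter, Finset.mem_univ, true_and] at hc
    set y := σ.symm c with hy
    have hyc : σ y = c := σ.apply_symm_apply c
    have hj0 : y.1 / 2 < n / 2 := by have := y.isLt; omega
    set j0 : Fin (n/2) := ⟨y.1/2, hj0⟩ with hj0def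
    refine ⟨j0, Finset.mem_univ _, ?_⟩
    by_cases hpar : y.1 % 2 = 0
    · have hay : a0 j0 = y := by apply Fin.ext; simp only [ha0, hj0def]; omega
      have h2 : σ (b0 j0) = τ c := by rw [← hflipa, hay, ← hστ, hyc]
      rw [hay, hyc, h2]
      exact min_eq_left hc.le
    · have hby : b0 j0 = y := by apply Fin.ext; simp only [hb0, hj0def]; omega
      have h2 : σ (a0 j0) = τ c := by
        have h3 : τ (σ (a0 j0)) = c := by rw [hτa, hby, hyc]
        have := congrArg τ h3
        rw [hτ2] at this
        rw [this]
      rw [hby, hyc, h2]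
      exact min_eq_right hc.le
  · intro j _
    rcases min_cases (σ (a0 j)) (σ (b0 j)) with ⟨h1, _⟩ | ⟨h1, _⟩
    · rw [h1, hτa]
    · rw [h1, hτb, hB]


lemma card_centralizer (h : 2 ∣ n) :
    (univ.filter (fun c : Equiv.Perm (Fin n) => c * flip n = flip n * c)).card =
      (n / 2).factorial * 2 ^ (n / 2) := by
  have hp : n / 2 * 2 = n := Nat.div_mul_cancel h
  set idx : Fin n → Fin (n/2) := fun a => ⟨a.1/2, by have := a.isLt; omega⟩ with hidx
  have haj : ∀ j : Fin (n/2), 2 * j.1 < n := fun j => by have := j.isLt; omega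
  set aj : Fin (n/2) → Fin n := fun j => ⟨2*j.1, haj j⟩ with haj'
  have hidxaj : ∀ j, idx (aj j) = j := by
    intro j; apply Fin.ext; simp only [hidx, haj']; omega
  have hajval : ∀ j, (aj j).1 % 2 = 0 := by intro j; simp only [haj']; omega
  set gf : Equiv.Perm (Fin (n/2)) → (Fin (n/2) → Bool) → Fin n → Fin n := fun π ε a =>
    ⟨2 * (π (idx a)).1 + (if ε (idx a) then 1 - a.1 % 2 else a.1 % 2), by
      have h1 := (π (idx a)).isLt
      have h2 : (if ε (idx a) then 1 - a.1 % 2 else a.1 % 2) ≤ 1 := by split <;> omega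
      omega⟩ with hgf
  have hgfval : ∀ π ε a, (gf π ε a).1 =
      2 * (π (idx a)).1 + (if ε (idx a) then 1 - a.1 % 2 else a.1 % 2) := fun _ _ _ => rfl
  have hgfinj : ∀ π ε, Function.Injective (gf π ε) := by
    intro π ε a a' hv
    have hv := congrArg Fin.val hv
    rw [hgfval, hgfval] at hv
    have hb : (if ε (idx a) then 1 - a.1 % 2 else a.1 % 2) ≤ 1 := by split <;> omega
    have hb' : (if ε (idx a') then 1 - a'.1 % 2 else a'.1 % 2) ≤ 1 := by split <;> omega
    have hπ : (π (idx a)).1 = (π (idx a')).1 := by omega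
    have hidxeq : idx a = idx a' := π.injective (Fin.ext hπ)
    rw [← hidxeq] at hv
    have hdiv : a.1 / 2 = a'.1 / 2 := by
      have := congrArg Fin.val hidxeq; simpa [hidx] using this
    apply Fin.ext
    rcases hε : ε (idx a) <;> rw [hε] at hv <;> simp at hv <;> omega
  have hgfbij : ∀ π ε, Function.Bijective (gf π ε) :=
    fun π ε => Finite.injective_iff_bijective.mp (hgfinj π ε)
  have hidxflip : ∀ a, idx (flip n a) = idx a := by
    intro a; apply Fin.ext; simp only [hidx]; rw [flip_val h]; omega
  have hcomm : ∀ π ε a, gf π ε (flip n a) = flip n (gf π ε a) := by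
    intro π ε a
    apply Fin.ext
    rw [hgfval π ε (flip n a), hidxflip, flip_val h a, flip_val h (gf π ε a), hgfval π ε a]
    rcases hε : ε (idx a) <;> simp only [hε, if_true, if_false, Bool.false_eq_true] <;> omega
  have key : (univ : Finset (Equiv.Perm (Fin (n/2)) × (Fin (n/2) → Bool))).card =
      (univ.filter (fun c : Equiv.Perm (Fin n) => c * flip n = flip n * c)).card := by
    apply Finset.card_bij (fun pr _ => Equiv.ofBijective (gf pr.1 pr.2) (hgfbij pr.1 pr.2))
    · intro pr _
      simp only [Finset.mem_filter, Finset.mem_univ, true_and]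
      apply Equiv.ext
      intro a
      exact hcomm pr.1 pr.2 a
    · intro pr _ pr' _ hc
      obtain ⟨π₁, ε₁⟩ := pr
      obtain ⟨π₂, ε₂⟩ := pr'
      have h3 : ∀ j : Fin (n/2), gf π₁ ε₁ (aj j) = gf π₂ ε₂ (aj j) :=
        fun j => Equiv.ext_iff.mp hc (aj j)
      have h4 : ∀ j : Fin (n/2), (π₁ j).1 = (π₂ j).1 ∧ ε₁ j = ε₂ j := by
        intro j
        have h5 := congrArg Fin.val (h3 j)
        rw [hgfval, hgfval, hidxaj] at h5
        have h6 := hajval j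
        rcases hε₁ : ε₁ j <;> rcases hε₂ : ε₂ j <;>
          rw [hε₁, hε₂] at h5 <;>
          simp only [if_true, if_false, Bool.false_eq_true] at h5 <;>
          first
            | exact ⟨by omega, rfl⟩
            | (exfalso; omega)
      simp only [Prod.mk.injEq]
      exact ⟨Equiv.ext (fun j => Fin.ext (h4 j).1), funext (fun j => (h4 j).2)⟩
    · intro c hc
      simp only [Finset.mem_filter, Finset.mem_univ, true_and] at hc
      have hccomm : ∀ a, c (flip n a) = flip n (c a) := fun a => Equiv.ext_iff.mp hc a
      set πf : Fin (n/2) → Fin (n/2) := fun j => idx (c (aj j)) with hπf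
      have hπinj : Function.Injective πf := by
        intro j j' hjj
        simp only [hπf] at hjj
        have hdiv : (c (aj j)).1 / 2 = (c (aj j')).1 / 2 := by
          have := congrArg Fin.val hjj; simpa [hidx] using this
        by_cases hvu : (c (aj j)).1 = (c (aj j')).1
        · have := c.injective (Fin.ext hvu)
          have := congrArg Fin.val this
          simp only [haj'] at this
          apply Fin.ext; omega
        · exfalso
          have hflipeq : c (aj j') = flip n (c (aj j)) := by
            apply Fin.ext
            rw [flip_val h]
            omega
          rw [← hccomm] at hflipeq
          have := c.injective hflipeq.symm
          have := congrArg Fin.val this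
          rw [flip_val h] at this
          simp only [haj'] at this
          omega
      set π : Equiv.Perm (Fin (n/2)) :=
        Equiv.ofBijective πf (Finite.injective_iff_bijective.mp hπinj) with hπ
      set εf : Fin (n/2) → Bool := fun j => decide ((c (aj j)).1 % 2 = 1) with hεf
      refine ⟨(π, εf), Finset.mem_univ _, ?_⟩
      apply Equiv.ext
      intro a
      show gf π εf a = c a
      have hπval : (π (idx a)).1 = (c (aj (idx a))).1 / 2 := by
        show (πf (idx a)).1 = _
        simp [hπf, hidx]
      set j := idx a with hj
      set v := (c (aj j)).1 with hv
      have hjval : j.1 = a.1 / 2 := by simp [hj, hidx]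
      by_cases hpar : a.1 % 2 = 0
      · have haa : a = aj j := by apply Fin.ext; simp only [haj']; omega
        rw [haa]
        apply Fin.ext
        rw [hgfval, hidxaj]
        rw [hπval]
        by_cases hv2 : v % 2 = 1 <;>
          simp only [hεf, hv2, decide_eq_true_eq, if_pos, if_neg, decide_true, decide_false,
            Bool.false_eq_true, if_true, if_false, hajval j, ← hv] <;> omega
      · have haa : a = flip n (aj j) := by
          apply Fin.ext; rw [flip_val h]; simp only [haj']; omega
        rw [haa, hccomm]
        apply Fin.ext
        rw [hgfval, hidxflip, hidxaj, hπval, flip_val h (c (aj j))]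
        have hfv : (flip n (aj j)).1 % 2 = 1 := by rw [flip_val h]; simp only [haj']; omega
        rw [hfv]
        by_cases hv2 : v % 2 = 1 <;>
          simp only [hεf, hv2, decide_eq_true_eq, decide_true, decide_false,
            Bool.false_eq_true, if_true, if_false, ← hv] <;> omega
  rw [← key, Finset.card_univ, Fintype.card_prod, Fintype.card_perm, Fintype.card_fun]
  simp [Fintype.card_fin]

noncomputable def matchSum (B : Matrix (Fin n) (Fin n) ℂ) : ℂ :=
  ∑ τ ∈ univ.filter (fun τ : Equiv.Perm (Fin n) => FPF τ), wt B τ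

lemma filter_FPF_empty (h : ¬ 2 ∣ n) :
    (univ.filter (fun τ : Equiv.Perm (Fin n) => FPF τ)) = ∅ := by
  rw [Finset.filter_eq_empty_iff]
  intro τ _ hτ
  have := card_pairs hτ
  omega

lemma card_fiber (h : 2 ∣ n) {τ : Equiv.Perm (Fin n)} (hτ : FPF τ) :
    (univ.filter (fun σ : Equiv.Perm (Fin n) => σ * flip n * σ⁻¹ = τ)).card =
      (n / 2).factorial * 2 ^ (n / 2) := by
  have hτim : τ ∈ (univ : Finset (Equiv.Perm (Fin n))).image (fun σ => σ * flip n * σ⁻¹) := by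
    rw [image_conj_flip h]
    simp [hτ]
  rw [Finset.mem_image] at hτim
  obtain ⟨σ₀, _, hσ₀⟩ := hτim
  rw [← card_centralizer h]
  apply Finset.card_bij' (fun σ _ => σ₀⁻¹ * σ) (fun c _ => σ₀ * c)
  · intro σ hσ
    simp only [Finset.mem_filter, Finset.mem_univ, true_and] at hσ ⊢
    have hστ : σ * flip n = τ * σ := by
      rw [← hσ]; group
    have hσ₀τ : σ₀ * flip n = τ * σ₀ := by
      rw [← hσ₀]; group
    have : σ₀⁻¹ * σ * flip n = σ₀⁻¹ * (τ * σ) := by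
      rw [mul_assoc, hστ]
    rw [this]
    have : flip n * (σ₀⁻¹ * σ) = σ₀⁻¹ * (τ * σ) := by
      rw [show flip n * (σ₀⁻¹ * σ) = (σ₀⁻¹ * (σ₀ * flip n * σ₀⁻¹)) * σ by group,
        hσ₀]
      group
    rw [this]
  · intro c hc
    simp only [Finset.mem_filter, Finset.mem_univ, true_and] at hc ⊢
    rw [show σ₀ * c * flip n * (σ₀ * c)⁻¹ = σ₀ * (c * flip n * c⁻¹) * σ₀⁻¹ by group,
      show c * flip n * c⁻¹ = flip n by rw [hc]; group]
    exact hσ₀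
  · intro σ _; group
  · intro c _; group

lemma haf_eq_matchSum {B : Matrix (Fin n) (Fin n) ℂ} (hB : ∀ i j, B i j = B j i) :
    haf B = matchSum B := by
  by_cases h : 2 ∣ n
  · rw [haf, dif_pos h]
    rw [Finset.sum_congr rfl (fun σ _ => wt_conj h hB σ)]
    rw [Finset.sum_comp (wt B) (fun σ : Equiv.Perm (Fin n) => σ * flip n * σ⁻¹)]
    rw [image_conj_flip h]
    have hcongr : ∀ τ ∈ univ.filter (fun τ : Equiv.Perm (Fin n) => FPF τ),
        #{σ ∈ (univ : Finset (Equiv.Perm (Fin n))) | σ * flip n * σ⁻¹ = τ} • wt B τ =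
          ((n / 2).factorial * 2 ^ (n / 2)) • wt B τ := by
      intro τ hτ
      simp only [Finset.mem_filter, Finset.mem_univ, true_and] at hτ
      rw [show #{σ ∈ (univ : Finset (Equiv.Perm (Fin n))) | σ * flip n * σ⁻¹ = τ} =
        (n / 2).factorial * 2 ^ (n / 2) from card_fiber h hτ]
    rw [Finset.sum_congr rfl hcongr]
    rw [← Finset.smul_sum, nsmul_eq_mul]
    rw [← mul_assoc, inv_mul_cancel₀, one_mul]
    · rfl
    · have : 0 < (n / 2).factorial * 2 ^ (n / 2) := by positivity
      exact_mod_cast Nat.cast_ne_zero.mpr this.ne'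
  · rw [haf, dif_neg h]
    rw [matchSum, filter_FPF_empty h, Finset.sum_empty]

noncomputable def matchOn (A : Matrix (Fin M) (Fin M) ℂ) (S : Finset (Fin M)) : ℂ :=
  ∑ τ ∈ univ.filter
      (fun τ : Equiv.Perm (Fin M) => (∀ a, τ (τ a) = a) ∧ ∀ a, (τ a ≠ a ↔ a ∈ S)), wt A τ

lemma matchSum_subm (A : Matrix (Fin M) (Fin M) ℂ) (S : Finset (Fin M)) :
    matchSum (subm A S) = matchOn A S := by
  classical
  set f : Fin S.card ≃ {x : Fin M // x ∈ S} := (S.orderIsoOfFin rfl).toEquiv with hf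
  have hcoe : ∀ j, ((f j : {x : Fin M // x ∈ S}) : Fin M) = S.orderEmbOfFin rfl j := by
    intro j
    exact Finset.coe_orderIsoOfFin_apply S rfl j
  have hlt : ∀ j j', j < j' ↔ ((f j : {x : Fin M // x ∈ S}) : Fin M) < (f j' : Fin M) := by
    intro j j'
    constructor
    · intro hh; exact Subtype.coe_lt_coe.mpr ((S.orderIsoOfFin rfl).lt_iff_lt.mpr hh)
    · intro hh; exact (S.orderIsoOfFin rfl).lt_iff_lt.mp (Subtype.coe_lt_coe.mp hh)
  set E : Equiv.Perm (Fin S.card) → Equiv.Perm (Fin M) :=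
    fun θ => θ.extendDomain f with hE
  have hEimg : ∀ θ (j : Fin S.card), E θ ((f j : {x : Fin M // x ∈ S}) : Fin M) = (f (θ j) : Fin M) := by
    intro θ j
    exact Equiv.Perm.extendDomain_apply_image θ f j
  have hEnot : ∀ θ (a : Fin M), a ∉ S → E θ a = a := by
    intro θ a ha
    exact Equiv.Perm.extendDomain_apply_not_subtype θ f ha
  have hEin : ∀ θ (a : Fin M) (ha : a ∈ S), E θ a = (f (θ (f.symm ⟨a, ha⟩)) : Fin M) := by
    intro θ a ha
    exact Equiv.Perm.extendDomain_apply_subtype θ f ha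
  rw [matchSum, matchOn]
  apply Finset.sum_bij (fun θ _ => E θ)
  · intro θ hθ
    simp only [Finset.mem_filter, Finset.mem_univ, true_and] at hθ ⊢
    constructor
    · intro a
      by_cases ha : a ∈ S
      · have h1 : E θ a = (f (θ (f.symm ⟨a, ha⟩)) : Fin M) := hEin θ a ha
        rw [h1, hEimg, hθ.1]
        simp
      · rw [hEnot θ a ha, hEnot θ a ha]
    · intro a
      constructor
      · intro hne
        by_contra ha
        exact hne (hEnot θ a ha)
      · intro ha
        rw [hEin θ a ha]
        intro hc
        have h2 : f (θ (f.symm ⟨a, ha⟩)) = f (f.symm ⟨a, ha⟩) := by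
          rw [Equiv.apply_symm_apply]; exact Subtype.ext hc
        exact hθ.2 _ (f.injective h2)
  · intro θ _ θ' _ hEθ
    apply Equiv.ext
    intro j
    have h1 : E θ ((f j : {x : Fin M // x ∈ S}) : Fin M) = E θ' ((f j : {x : Fin M // x ∈ S}) : Fin M) := by rw [hEθ]
    rw [hEimg, hEimg] at h1
    exact f.injective (Subtype.ext h1)
  · intro τ hτ
    simp only [Finset.mem_filter, Finset.mem_univ, true_and] at hτ
    obtain ⟨hτ1, hτ2⟩ := hτ
    have hτS : ∀ a (ha : a ∈ S), τ a ∈ S := by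
      intro a ha
      apply (hτ2 (τ a)).mp
      rw [hτ1 a]
      exact fun hc => ((hτ2 a).mpr ha) hc.symm
    set θf : Fin S.card → Fin S.card :=
      fun j => f.symm ⟨τ ((f j : {x : Fin M // x ∈ S}) : Fin M), hτS _ (f j).2⟩ with hθf
    have hθinj : Function.Injective θf := by
      intro j j' hjj
      simp only [hθf] at hjj
      have := f.symm.injective hjj
      have := congrArg Subtype.val this
      simp only at this
      exact f.injective (Subtype.ext (τ.injective this))
    set θ : Equiv.Perm (Fin S.card) :=
      Equiv.ofBijective θf (Finite.injective_iff_bijective.mp hθinj) with hθ'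
    have hθval : ∀ j, ((f (θ j) : {x : Fin M // x ∈ S}) : Fin M) = τ ((f j : {x : Fin M // x ∈ S}) : Fin M) := by
      intro j
      show ((f (θf j) : {x : Fin M // x ∈ S}) : Fin M) = _
      simp only [hθf]
      rw [Equiv.apply_symm_apply]
    have hEτ : E θ = τ := by
      apply Equiv.ext
      intro a
      by_cases ha : a ∈ S
      · rw [hEin θ a ha, hθval]
        congr 1
        have : f (f.symm ⟨a, ha⟩) = ⟨a, ha⟩ := f.apply_symm_apply _
        rw [this]
      · rw [hEnot θ a ha]
        by_contra hc
        exact ha ((hτ2 a).mp (fun h => hc h.symm))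
    refine ⟨θ, ?_, hEτ⟩
    simp only [Finset.mem_filter, Finset.mem_univ, true_and]
    constructor
    · intro j
      apply f.injective
      apply Subtype.ext
      rw [hθval, hθval, hτ1]
    · intro j hc
      have h1 := hθval j
      rw [hc] at h1
      exact (hτ2 _).mpr (f j).2 h1.symm
  · intro θ hθ
    simp only [Finset.mem_filter, Finset.mem_univ, true_and] at hθ
    unfold wt subm
    apply Finset.prod_bij (fun j _ => ((f j : {x : Fin M // x ∈ S}) : Fin M))
    · intro j hj
      simp only [Finset.mem_filter, Finset.mem_univ, true_and] at hj ⊢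
      rw [hEimg]
      exact (hlt j (θ j)).mp hj
    · intro j _ j' _ hjj
      exact f.injective (Subtype.ext hjj)
    · intro a ha
      simp only [Finset.mem_filter, Finset.mem_univ, true_and] at ha
      have haS : a ∈ S := by
        by_contra hc
        rw [hEnot θ a hc] at ha
        exact lt_irrefl _ ha
      refine ⟨f.symm ⟨a, haS⟩, ?_, ?_⟩
      · simp only [Finset.mem_filter, Finset.mem_univ, true_and]
        rw [hlt]
        have h1 : ((f (f.symm ⟨a, haS⟩) : {x : Fin M // x ∈ S}) : Fin M) = a := by
          rw [Equiv.apply_symm_apply]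
        rw [h1]
        have h2 := hEimg θ (f.symm ⟨a, haS⟩)
        rw [h1] at h2
        rw [← h2]
        exact ha
      · rw [Equiv.apply_symm_apply]
    · intro j hj
      simp only [Finset.mem_filter, Finset.mem_univ, true_and] at hj
      rw [hEimg, ← hcoe, ← hcoe]

lemma prism_ll (A : Matrix (Fin M) (Fin M) ℂ) (w : ℂ) (i j : Fin M) :
    prism A w (Fin.castAdd M i) (Fin.castAdd M j) = A i j := by
  simp [prism, Matrix.submatrix_apply, finSumFinEquiv_symm_apply_castAdd]

lemma prism_rr (A : Matrix (Fin M) (Fin M) ℂ) (w : ℂ) (i j : Fin M) :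
    prism A w (Fin.natAdd M i) (Fin.natAdd M j) = A i j := by
  simp only [prism, Matrix.submatrix_apply]
  rw [finSumFinEquiv_symm_apply_natAdd, finSumFinEquiv_symm_apply_natAdd,
    Matrix.fromBlocks_apply₂₂]

lemma prism_lr (A : Matrix (Fin M) (Fin M) ℂ) (w : ℂ) (i j : Fin M) :
    prism A w (Fin.castAdd M i) (Fin.natAdd M j) = if i = j then w else 0 := by
  simp only [prism, Matrix.submatrix_apply]
  rw [finSumFinEquiv_symm_apply_castAdd, finSumFinEquiv_symm_apply_natAdd,
    Matrix.fromBlocks_apply₁₂]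
  simp [Matrix.smul_apply, Matrix.one_apply, mul_ite]

lemma prism_rl (A : Matrix (Fin M) (Fin M) ℂ) (w : ℂ) (i j : Fin M) :
    prism A w (Fin.natAdd M i) (Fin.castAdd M j) = if i = j then w else 0 := by
  simp only [prism, Matrix.submatrix_apply]
  rw [finSumFinEquiv_symm_apply_castAdd, finSumFinEquiv_symm_apply_natAdd,
    Matrix.fromBlocks_apply₂₁]
  simp [Matrix.smul_apply, Matrix.one_apply, mul_ite]

lemma fin_cases' (a : Fin (M + M)) :
    (∃ i, a = Fin.castAdd M i) ∨ (∃ i, a = Fin.natAdd M i) := by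
  by_cases h : a.1 < M
  · exact Or.inl ⟨⟨a.1, h⟩, Fin.ext rfl⟩
  · refine Or.inr ⟨⟨a.1 - M, by have := a.isLt; omega⟩, Fin.ext ?_⟩
    show a.1 = M + (a.1 - M)
    omega

lemma hlfrt_ne (i j : Fin M) : Fin.castAdd M i ≠ Fin.natAdd M j := by
  intro hc
  have h1 := congrArg Fin.val hc
  have h2 := i.isLt
  simp only [Fin.coe_castAdd, Fin.coe_natAdd] at h1
  omega

lemma hlt_lfrt (i j : Fin M) : Fin.castAdd M i < Fin.natAdd M j := by
  rw [Fin.lt_def]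
  have := i.isLt
  simp only [Fin.coe_castAdd, Fin.coe_natAdd]
  omega

lemma hnlt_rtlf (i j : Fin M) : ¬ (Fin.natAdd M i < Fin.castAdd M j) := by
  rw [Fin.lt_def]
  have := j.isLt
  simp only [Fin.coe_castAdd, Fin.coe_natAdd]
  omega

lemma hlt_ll (i j : Fin M) : (Fin.castAdd M i < Fin.castAdd M j) ↔ i < j := by
  rw [Fin.lt_def, Fin.lt_def]
  simp only [Fin.coe_castAdd]

lemma hlt_rr (i j : Fin M) : (Fin.natAdd M i < Fin.natAdd M j) ↔ i < j := by
  rw [Fin.lt_def, Fin.lt_def]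
  simp only [Fin.coe_natAdd]
  omega

lemma hlf_inj (i j : Fin M) (h : Fin.castAdd M i = Fin.castAdd M j) : i = j := by
  have := congrArg Fin.val h
  simp only [Fin.coe_castAdd] at this
  exact Fin.ext this

lemma hrt_inj (i j : Fin M) (h : Fin.natAdd M i = Fin.natAdd M j) : i = j := by
  have := congrArg Fin.val h
  simp only [Fin.coe_natAdd] at this
  exact Fin.ext (by omega)

lemma per_S (A : Matrix (Fin M) (Fin M) ℂ) (w : ℂ) (S : Finset (Fin M)) :
    ∑ τ ∈ (univ.filter (fun τ : Equiv.Perm (Fin (M+M)) => FPF τ)).filter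
        (fun τ => (univ.filter (fun i : Fin M => τ (Fin.castAdd M i) ≠ Fin.natAdd M i)) = S),
      wt (prism A w) τ = w ^ (M - S.card) * (matchOn A S) ^ 2 := by
  classical
  set JS := univ.filter (fun τ : Equiv.Perm (Fin M) =>
    (∀ a, τ (τ a) = a) ∧ ∀ a, (τ a ≠ a ↔ a ∈ S)) with hJS
  set Good : Equiv.Perm (Fin (M+M)) → Prop :=
    fun τ => ∀ i j : Fin M, i ≠ j → τ (Fin.castAdd M i) ≠ Fin.natAdd M j with hGood
  have hJSmem : ∀ τ : Equiv.Perm (Fin M), τ ∈ JS → ∀ i, i ∈ S → τ i ∈ S := by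
    intro τ hτ i hi
    rw [hJS, Finset.mem_filter] at hτ
    obtain ⟨-, h1, h2⟩ := hτ
    apply (h2 (τ i)).mp
    rw [h1 i]
    exact fun hc => (h2 i).mpr hi hc.symm
  -- split off bad permutations
  rw [← Finset.sum_filter_add_sum_filter_not _ Good (wt (prism A w))]
  have hbad : ∑ τ ∈ ((univ.filter (fun τ : Equiv.Perm (Fin (M+M)) => FPF τ)).filter
        (fun τ => (univ.filter (fun i : Fin M => τ (Fin.castAdd M i) ≠ Fin.natAdd M i)) = S)).filter
        (fun τ => ¬ Good τ), wt (prism A w) τ = 0 := by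
    apply Finset.sum_eq_zero
    intro τ hτ
    rw [Finset.mem_filter] at hτ
    obtain ⟨-, hτbad⟩ := hτ
    obtain ⟨i, j, hij, hτij⟩ : ∃ i j : Fin M, i ≠ j ∧ τ (Fin.castAdd M i) = Fin.natAdd M j := by
      by_contra hc
      push_neg at hc
      apply hτbad
      rw [hGood]
      intro i j hij
      exact hc i j hij
    unfold wt
    apply Finset.prod_eq_zero (i := Fin.castAdd M i)
    · simp only [Finset.mem_filter, Finset.mem_univ, true_and]
      rw [hτij]
      exact hlt_lfrt i j
    · rw [hτij, prism_lr, if_neg hij]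
  rw [hbad, add_zero]
  -- the sum-type involution construction
  set tsum : Equiv.Perm (Fin M) → Equiv.Perm (Fin M) → (Fin M ⊕ Fin M) → (Fin M ⊕ Fin M) :=
    fun τ₁ τ₂ => Sum.elim (fun i => if i ∈ S then Sum.inl (τ₁ i) else Sum.inr i)
      (fun i => if i ∈ S then Sum.inr (τ₂ i) else Sum.inl i) with htsum
  set Ψf : Equiv.Perm (Fin M) → Equiv.Perm (Fin M) → Fin (M+M) → Fin (M+M) :=
    fun τ₁ τ₂ a => finSumFinEquiv (tsum τ₁ τ₂ (finSumFinEquiv.symm a)) with hΨf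
  have hΨinv : ∀ pr : Equiv.Perm (Fin M) × Equiv.Perm (Fin M), pr ∈ JS ×ˢ JS →
      Function.Involutive (Ψf pr.1 pr.2) := by
    rintro ⟨τ₁, τ₂⟩ hpr
    rw [Finset.mem_product] at hpr
    have h1S := hJSmem _ hpr.1
    have h2S := hJSmem _ hpr.2
    have h1inv : ∀ a, τ₁ (τ₁ a) = a := ((Finset.mem_filter.mp hpr.1).2).1
    have h2inv : ∀ a, τ₂ (τ₂ a) = a := ((Finset.mem_filter.mp hpr.2).2).1
    have htinv : ∀ x, tsum τ₁ τ₂ (tsum τ₁ τ₂ x) = x := by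
      intro x
      rcases x with i | i
      · simp only [htsum, Sum.elim_inl]
        by_cases hi : i ∈ S
        · rw [if_pos hi]
          simp only [Sum.elim_inl]
          rw [if_pos (h1S i hi), h1inv]
        · rw [if_neg hi]
          simp only [Sum.elim_inr]
          rw [if_neg hi]
      · simp only [htsum, Sum.elim_inr]
        by_cases hi : i ∈ S
        · rw [if_pos hi]
          simp only [Sum.elim_inr]
          rw [if_pos (h2S i hi), h2inv]
        · rw [if_neg hi]
          simp only [Sum.elim_inl]
          rw [if_neg hi]
    intro a
    simp only [hΨf, Equiv.symm_apply_apply]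
    rw [htinv, Equiv.apply_symm_apply]
  set Ψ : Equiv.Perm (Fin M) × Equiv.Perm (Fin M) → Equiv.Perm (Fin (M+M)) :=
    fun pr => if h : pr ∈ JS ×ˢ JS then Function.Involutive.toPerm _ (hΨinv pr h) else 1 with hΨ
  have hΨapp : ∀ pr (h : pr ∈ JS ×ˢ JS) (a), Ψ pr a = Ψf pr.1 pr.2 a := by
    intro pr h a
    rw [hΨ]
    simp only [dif_pos h]
    rfl
  have hΨlf : ∀ pr (h : pr ∈ JS ×ˢ JS) (i : Fin M), i ∈ S →
      Ψ pr (Fin.castAdd M i) = Fin.castAdd M (pr.1 i) := by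
    intro pr h i hi
    rw [hΨapp pr h]
    simp only [hΨf, finSumFinEquiv_symm_apply_castAdd, htsum, Sum.elim_inl, if_pos hi,
      finSumFinEquiv_apply_left]
  have hΨlf' : ∀ pr (h : pr ∈ JS ×ˢ JS) (i : Fin M), i ∉ S →
      Ψ pr (Fin.castAdd M i) = Fin.natAdd M i := by
    intro pr h i hi
    rw [hΨapp pr h]
    simp only [hΨf, finSumFinEquiv_symm_apply_castAdd, htsum, Sum.elim_inl, if_neg hi,
      finSumFinEquiv_apply_right]
  have hΨrt : ∀ pr (h : pr ∈ JS ×ˢ JS) (i : Fin M), i ∈ S →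
      Ψ pr (Fin.natAdd M i) = Fin.natAdd M (pr.2 i) := by
    intro pr h i hi
    rw [hΨapp pr h]
    simp only [hΨf, finSumFinEquiv_symm_apply_natAdd, htsum, Sum.elim_inr, if_pos hi,
      finSumFinEquiv_apply_right]
  have hΨrt' : ∀ pr (h : pr ∈ JS ×ˢ JS) (i : Fin M), i ∉ S →
      Ψ pr (Fin.natAdd M i) = Fin.castAdd M i := by
    intro pr h i hi
    rw [hΨapp pr h]
    simp only [hΨf, finSumFinEquiv_symm_apply_natAdd, htsum, Sum.elim_inr, if_neg hi,
      finSumFinEquiv_apply_left]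
  set T := ((univ.filter (fun τ : Equiv.Perm (Fin (M+M)) => FPF τ)).filter
      (fun τ => (univ.filter (fun i : Fin M => τ (Fin.castAdd M i) ≠ Fin.natAdd M i)) = S)).filter
      Good with hT
  have hTmem : ∀ τ, τ ∈ T ↔ (FPF τ ∧
      (univ.filter (fun i : Fin M => τ (Fin.castAdd M i) ≠ Fin.natAdd M i)) = S ∧ Good τ) := by
    intro τ
    simp only [hT, Finset.mem_filter, Finset.mem_univ, true_and, and_assoc]
  have hΨT : ∀ pr (h : pr ∈ JS ×ˢ JS), Ψ pr ∈ T := by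
    intro pr h
    have h1 := (Finset.mem_filter.mp (Finset.mem_product.mp h).1).2
    have h2 := (Finset.mem_filter.mp (Finset.mem_product.mp h).2).2
    rw [hTmem]
    refine ⟨⟨?_, ?_⟩, ?_, ?_⟩
    · intro a
      rw [hΨ]
      simp only [dif_pos h]
      exact (hΨinv pr h) a
    · intro a hc
      rcases fin_cases' a with ⟨i, rfl⟩ | ⟨i, rfl⟩
      · by_cases hi : i ∈ S
        · rw [hΨlf pr h i hi] at hc
          exact (h1.2 i).mpr hi (hlf_inj _ _ hc)
        · rw [hΨlf' pr h i hi] at hc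
          exact hlfrt_ne i i hc.symm
      · by_cases hi : i ∈ S
        · rw [hΨrt pr h i hi] at hc
          exact (h2.2 i).mpr hi (hrt_inj _ _ hc)
        · rw [hΨrt' pr h i hi] at hc
          exact hlfrt_ne i i hc
    · ext i
      simp only [Finset.mem_filter, Finset.mem_univ, true_and]
      by_cases hi : i ∈ S
      · simp only [hi, iff_true]
        rw [hΨlf pr h i hi]
        exact hlfrt_ne _ _
      · simp only [hi, iff_false, not_not]
        exact hΨlf' pr h i hi
    · rw [hGood]
      intro i j hij
      by_cases hi : i ∈ S
      · rw [hΨlf pr h i hi]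
        exact hlfrt_ne _ _
      · rw [hΨlf' pr h i hi]
        intro hc
        exact hij (hrt_inj _ _ hc)
  have hTfacts : ∀ τ, τ ∈ T → (∀ a, τ (τ a) = a) ∧ (∀ a : Fin (M+M), τ a ≠ a) ∧
      (∀ i : Fin M, (τ (Fin.castAdd M i) ≠ Fin.natAdd M i) ↔ i ∈ S) ∧
      (∀ i j : Fin M, i ≠ j → τ (Fin.castAdd M i) ≠ Fin.natAdd M j) := by
    intro τ hτ
    rw [hTmem] at hτ
    refine ⟨hτ.1.1, hτ.1.2, ?_, ?_⟩
    · intro i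
      constructor
      · intro hne
        have : i ∈ univ.filter (fun i : Fin M => τ (Fin.castAdd M i) ≠ Fin.natAdd M i) := by
          simp only [Finset.mem_filter, Finset.mem_univ, true_and]
          exact hne
        rwa [hτ.2.1] at this
      · intro hi
        have : i ∈ univ.filter (fun i : Fin M => τ (Fin.castAdd M i) ≠ Fin.natAdd M i) := by
          rw [hτ.2.1]
          exact hi
        simpa using this
    · exact fun i j hij => hτ.2.2 i j hij
  have hLS : ∀ τ, τ ∈ T → ∀ i ∈ S, (τ (Fin.castAdd M i)).1 < M := by
    intro τ hτ i hi
    obtain ⟨hinv, hfpf, hD, hg⟩ := hTfacts τ hτ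
    rcases fin_cases' (τ (Fin.castAdd M i)) with ⟨j, hj⟩ | ⟨j, hj⟩
    · rw [hj]
      exact j.isLt
    · exfalso
      by_cases hij : i = j
      · exact (hD i).mpr hi (hij ▸ hj)
      · exact hg i j hij hj
  have hRS : ∀ τ, τ ∈ T → ∀ i ∈ S, M ≤ (τ (Fin.natAdd M i)).1 := by
    intro τ hτ i hi
    obtain ⟨hinv, hfpf, hD, hg⟩ := hTfacts τ hτ
    rcases fin_cases' (τ (Fin.natAdd M i)) with ⟨j, hj⟩ | ⟨j, hj⟩
    · exfalso
      have hji : τ (Fin.castAdd M j) = Fin.natAdd M i := by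
        rw [← hj, hinv]
      by_cases hij : j = i
      · exact (hD i).mpr hi (hij ▸ hji)
      · exact hg j i hij hji
    · rw [hj]
      simp only [Fin.coe_natAdd]
      omega
  have hLnot : ∀ τ, τ ∈ T → ∀ i ∉ S, τ (Fin.castAdd M i) = Fin.natAdd M i := by
    intro τ hτ i hi
    obtain ⟨-, -, hD, -⟩ := hTfacts τ hτ
    by_contra hc
    exact hi ((hD i).mp hc)
  have hRnot : ∀ τ, τ ∈ T → ∀ i ∉ S, τ (Fin.natAdd M i) = Fin.castAdd M i := by
    intro τ hτ i hi
    obtain ⟨hinv, -, -, -⟩ := hTfacts τ hτ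
    rw [← hLnot τ hτ i hi, hinv]
  set Φ1 : Equiv.Perm (Fin (M+M)) → Fin M → Fin M := fun τ i =>
    if h : (τ (Fin.castAdd M i)).1 < M then ⟨(τ (Fin.castAdd M i)).1, h⟩ else i with hΦ1
  set Φ2 : Equiv.Perm (Fin (M+M)) → Fin M → Fin M := fun τ i =>
    if h : M ≤ (τ (Fin.natAdd M i)).1
    then ⟨(τ (Fin.natAdd M i)).1 - M, by have := (τ (Fin.natAdd M i)).isLt; omega⟩
    else i with hΦ2
  have hΦ1app : ∀ τ (hτ : τ ∈ T) (i : Fin M), i ∈ S →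
      Fin.castAdd M (Φ1 τ i) = τ (Fin.castAdd M i) := by
    intro τ hτ i hi
    simp only [hΦ1, dif_pos (hLS τ hτ i hi)]
    apply Fin.ext
    rfl
  have hΦ1not : ∀ τ (hτ : τ ∈ T) (i : Fin M), i ∉ S → Φ1 τ i = i := by
    intro τ hτ i hi
    have hcond : ¬ (τ (Fin.castAdd M i)).1 < M := by
      rw [hLnot τ hτ i hi]
      simp only [Fin.coe_natAdd]
      omega
    simp only [hΦ1, dif_neg hcond]
  have hΦ2app : ∀ τ (hτ : τ ∈ T) (i : Fin M), i ∈ S →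
      Fin.natAdd M (Φ2 τ i) = τ (Fin.natAdd M i) := by
    intro τ hτ i hi
    simp only [hΦ2, dif_pos (hRS τ hτ i hi)]
    apply Fin.ext
    simp only [Fin.coe_natAdd]
    have := hRS τ hτ i hi
    omega
  have hΦ2not : ∀ τ (hτ : τ ∈ T) (i : Fin M), i ∉ S → Φ2 τ i = i := by
    intro τ hτ i hi
    have hcond : ¬ M ≤ (τ (Fin.natAdd M i)).1 := by
      rw [hRnot τ hτ i hi]
      simp only [Fin.coe_castAdd, not_le]
      exact i.isLt
    simp only [hΦ2, dif_neg hcond]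
  have hΦ1S : ∀ τ (hτ : τ ∈ T) (i : Fin M), i ∈ S → Φ1 τ i ∈ S := by
    intro τ hτ i hi
    obtain ⟨hinv, -, hD, -⟩ := hTfacts τ hτ
    apply (hD _).mp
    rw [hΦ1app τ hτ i hi, hinv]
    exact hlfrt_ne _ _
  have hΦ2S : ∀ τ (hτ : τ ∈ T) (i : Fin M), i ∈ S → Φ2 τ i ∈ S := by
    intro τ hτ i hi
    by_contra hc
    have h1 := hLnot τ hτ _ hc
    rw [hΦ2app τ hτ i hi] at h1
    exact hlfrt_ne _ _ (τ.injective h1)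
  have hΦ1inv : ∀ τ, τ ∈ T → Function.Involutive (Φ1 τ) := by
    intro τ hτ i
    by_cases hi : i ∈ S
    · apply hlf_inj
      rw [hΦ1app τ hτ _ (hΦ1S τ hτ i hi), hΦ1app τ hτ i hi, (hTfacts τ hτ).1]
    · rw [hΦ1not τ hτ i hi, hΦ1not τ hτ i hi]
  have hΦ2inv : ∀ τ, τ ∈ T → Function.Involutive (Φ2 τ) := by
    intro τ hτ i
    by_cases hi : i ∈ S
    · apply hrt_inj
      rw [hΦ2app τ hτ _ (hΦ2S τ hτ i hi), hΦ2app τ hτ i hi, (hTfacts τ hτ).1]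
    · rw [hΦ2not τ hτ i hi, hΦ2not τ hτ i hi]
  set Φ : Equiv.Perm (Fin (M+M)) → Equiv.Perm (Fin M) × Equiv.Perm (Fin M) := fun τ =>
    if h : τ ∈ T then
      (Function.Involutive.toPerm _ (hΦ1inv τ h), Function.Involutive.toPerm _ (hΦ2inv τ h))
    else 1 with hΦ
  have hΦfst : ∀ τ (h : τ ∈ T) (i : Fin M), (Φ τ).1 i = Φ1 τ i := by
    intro τ h i
    rw [hΦ]
    simp only [dif_pos h]
    rfl
  have hΦsnd : ∀ τ (h : τ ∈ T) (i : Fin M), (Φ τ).2 i = Φ2 τ i := by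
    intro τ h i
    rw [hΦ]
    simp only [dif_pos h]
    rfl
  have hΦmem : ∀ τ (hτ : τ ∈ T), Φ τ ∈ JS ×ˢ JS := by
    intro τ hτ
    obtain ⟨hinv, hfpf, hD, hg⟩ := hTfacts τ hτ
    rw [Finset.mem_product]
    constructor
    · rw [hJS, Finset.mem_filter]
      refine ⟨Finset.mem_univ _, ?_, ?_⟩
      · intro a
        rw [hΦfst τ hτ, hΦfst τ hτ]
        exact hΦ1inv τ hτ a
      · intro a
        rw [hΦfst τ hτ]
        constructor
        · intro hne
          by_contra ha
          exact hne (hΦ1not τ hτ a ha)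
        · intro ha hc
          have h1 := hΦ1app τ hτ a ha
          rw [hc] at h1
          exact hfpf _ h1.symm
    · rw [hJS, Finset.mem_filter]
      refine ⟨Finset.mem_univ _, ?_, ?_⟩
      · intro a
        rw [hΦsnd τ hτ, hΦsnd τ hτ]
        exact hΦ2inv τ hτ a
      · intro a
        rw [hΦsnd τ hτ]
        constructor
        · intro hne
          by_contra ha
          exact hne (hΦ2not τ hτ a ha)
        · intro ha hc
          have h1 := hΦ2app τ hτ a ha
          rw [hc] at h1
          exact hfpf _ h1.symm
  have hleft : ∀ pr ∈ JS ×ˢ JS, Φ (Ψ pr) = pr := by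
    intro pr h
    have hT' := hΨT pr h
    have h1 := (Finset.mem_filter.mp (Finset.mem_product.mp h).1).2
    have h2 := (Finset.mem_filter.mp (Finset.mem_product.mp h).2).2
    have e1 : (Φ (Ψ pr)).1 = pr.1 := by
      apply Equiv.ext
      intro i
      rw [hΦfst _ hT']
      by_cases hi : i ∈ S
      · apply hlf_inj
        rw [hΦ1app _ hT' i hi, hΨlf pr h i hi]
      · rw [hΦ1not _ hT' i hi]
        by_contra hc
        exact hi ((h1.2 i).mp (Ne.symm hc))
    have e2 : (Φ (Ψ pr)).2 = pr.2 := by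
      apply Equiv.ext
      intro i
      rw [hΦsnd _ hT']
      by_cases hi : i ∈ S
      · apply hrt_inj
        rw [hΦ2app _ hT' i hi, hΨrt pr h i hi]
      · rw [hΦ2not _ hT' i hi]
        by_contra hc
        exact hi ((h2.2 i).mp (Ne.symm hc))
    exact Prod.ext e1 e2
  have hright : ∀ τ ∈ T, Ψ (Φ τ) = τ := by
    intro τ hτ
    have hm := hΦmem τ hτ
    apply Equiv.ext
    intro a
    rcases fin_cases' a with ⟨i, rfl⟩ | ⟨i, rfl⟩
    · by_cases hi : i ∈ S
      · rw [hΨlf _ hm i hi, hΦfst τ hτ, hΦ1app τ hτ i hi]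
      · rw [hΨlf' _ hm i hi, hLnot τ hτ i hi]
    · by_cases hi : i ∈ S
      · rw [hΨrt _ hm i hi, hΦsnd τ hτ, hΦ2app τ hτ i hi]
      · rw [hΨrt' _ hm i hi, hRnot τ hτ i hi]
  have hweight : ∀ pr ∈ JS ×ˢ JS,
      w ^ (M - S.card) * (wt A pr.1 * wt A pr.2) = wt (prism A w) (Ψ pr) := by
    intro pr h
    have h1 := (Finset.mem_filter.mp (Finset.mem_product.mp h).1).2
    have h2 := (Finset.mem_filter.mp (Finset.mem_product.mp h).2).2
    conv_rhs => rw [wt, Finset.prod_filter, Fin.prod_univ_add]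
    have hL : (∏ i : Fin M, if (Fin.castAdd M i) < Ψ pr (Fin.castAdd M i) then
        prism A w (Fin.castAdd M i) (Ψ pr (Fin.castAdd M i)) else 1) =
        (∏ i ∈ S, if i < pr.1 i then A i (pr.1 i) else 1) * w ^ (M - S.card) := by
      have step : ∀ i : Fin M, (if (Fin.castAdd M i) < Ψ pr (Fin.castAdd M i) then
          prism A w (Fin.castAdd M i) (Ψ pr (Fin.castAdd M i)) else 1) =
          if i ∈ S then (if i < pr.1 i then A i (pr.1 i) else 1) else w := by
        intro i
        by_cases hi : i ∈ S
        · rw [if_pos hi, hΨlf pr h i hi]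
          by_cases hlt : i < pr.1 i
          · rw [if_pos ((hlt_ll i (pr.1 i)).mpr hlt), if_pos hlt, prism_ll]
          · rw [if_neg (fun hc => hlt ((hlt_ll i (pr.1 i)).mp hc)), if_neg hlt]
        · rw [if_neg hi, hΨlf' pr h i hi, if_pos (hlt_lfrt i i), prism_lr, if_pos rfl]
      rw [Finset.prod_congr rfl (fun i _ => step i),
        Finset.prod_ite (fun i => if i < pr.1 i then A i (pr.1 i) else 1) (fun _ => w),
        Finset.filter_univ_mem]
      congr 1
      rw [Finset.prod_const]
      congr 1
      rw [show (univ.filter (fun i : Fin M => ¬ i ∈ S)) = Sᶜ by ext i; simp,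
        Finset.card_compl, Fintype.card_fin]
    have hR : (∏ i : Fin M, if (Fin.natAdd M i) < Ψ pr (Fin.natAdd M i) then
        prism A w (Fin.natAdd M i) (Ψ pr (Fin.natAdd M i)) else 1) =
        ∏ i ∈ S, if i < pr.2 i then A i (pr.2 i) else 1 := by
      have step : ∀ i : Fin M, (if (Fin.natAdd M i) < Ψ pr (Fin.natAdd M i) then
          prism A w (Fin.natAdd M i) (Ψ pr (Fin.natAdd M i)) else 1) =
          if i ∈ S then (if i < pr.2 i then A i (pr.2 i) else 1) else 1 := by
        intro i
        by_cases hi : i ∈ S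
        · rw [if_pos hi, hΨrt pr h i hi]
          by_cases hlt : i < pr.2 i
          · rw [if_pos ((hlt_rr i (pr.2 i)).mpr hlt), if_pos hlt, prism_rr]
          · rw [if_neg (fun hc => hlt ((hlt_rr i (pr.2 i)).mp hc)), if_neg hlt]
        · rw [if_neg hi, hΨrt' pr h i hi, if_neg (hnlt_rtlf i i)]
      rw [Finset.prod_congr rfl (fun i _ => step i),
        Finset.prod_ite (fun i => if i < pr.2 i then A i (pr.2 i) else 1) (fun _ => (1 : ℂ)),
        Finset.filter_univ_mem, Finset.prod_const_one, mul_one]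
    rw [hL, hR]
    have hw1 : (∏ i ∈ S, if i < pr.1 i then A i (pr.1 i) else 1) = wt A pr.1 := by
      rw [← Finset.prod_filter (fun i => i < pr.1 i) (fun i => A i (pr.1 i)), wt]
      congr 1
      ext i
      simp only [Finset.mem_filter, Finset.mem_univ, true_and]
      exact ⟨fun ⟨_, hh⟩ => hh, fun hh => ⟨(h1.2 i).mp hh.ne', hh⟩⟩
    have hw2 : (∏ i ∈ S, if i < pr.2 i then A i (pr.2 i) else 1) = wt A pr.2 := by
      rw [← Finset.prod_filter (fun i => i < pr.2 i) (fun i => A i (pr.2 i)), wt]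
      congr 1
      ext i
      simp only [Finset.mem_filter, Finset.mem_univ, true_and]
      exact ⟨fun ⟨_, hh⟩ => hh, fun hh => ⟨(h2.2 i).mp hh.ne', hh⟩⟩
    rw [hw1, hw2]
    ring
  have key : ∑ τ ∈ T, wt (prism A w) τ =
      ∑ pr ∈ JS ×ˢ JS, w ^ (M - S.card) * (wt A pr.1 * wt A pr.2) :=
    (Finset.sum_nbij' Ψ Φ hΨT hΦmem hleft hright hweight).symm
  rw [key, sq, matchOn, ← hJS, Finset.sum_mul_sum, Finset.mul_sum, Finset.sum_product]
  apply Finset.sum_congr rfl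
  intro τ₁ _
  rw [Finset.mul_sum]



lemma prism_symm {A : Matrix (Fin M) (Fin M) ℂ} (hA : ∀ i j, A i j = A j i) (w : ℂ)
    (a b : Fin (M + M)) : prism A w a b = prism A w b a := by
  rcases fin_cases' a with ⟨i, rfl⟩ | ⟨i, rfl⟩ <;> rcases fin_cases' b with ⟨j, rfl⟩ | ⟨j, rfl⟩
  · rw [prism_ll, prism_ll, hA]
  · rw [prism_lr, prism_rl]; simp [eq_comm]
  · rw [prism_rl, prism_lr]; simp [eq_comm]
  · rw [prism_rr, prism_rr, hA]

lemma matchSum_prism (A : Matrix (Fin M) (Fin M) ℂ) (w : ℂ) :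
    matchSum (prism A w) = ∑ S : Finset (Fin M), w ^ (M - S.card) * (matchOn A S) ^ 2 := by
  classical
  rw [matchSum, ← Finset.sum_fiberwise (univ.filter (fun τ : Equiv.Perm (Fin (M+M)) => FPF τ))
    (fun τ => univ.filter (fun i : Fin M => τ (Fin.castAdd M i) ≠ Fin.natAdd M i))
    (wt (prism A w))]
  exact Finset.sum_congr rfl (fun S _ => per_S A w S)


end GbsAux

/-- `GBS_G(x) = (−i)^M · haf(G □ P₂(ix))`. -/
theorem gbs_eq_haf_prism_I {M : ℕ} (G : SimpleGraph (Fin M)) [DecidableRel G.Adj]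
    (x : ℂ) :
    Polynomial.eval x (GBS (G.adjMatrix ℂ)) =
      (-Complex.I) ^ M * haf (prism (G.adjMatrix ℂ) (Complex.I * x)) := by
  classical
  set A := G.adjMatrix ℂ with hAdef
  have hA : ∀ i j, A i j = A j i := by
    intro i j
    simp only [hAdef, SimpleGraph.adjMatrix_apply]
    exact if_congr (G.adj_comm i j) rfl rfl
  have hsub : ∀ S : Finset (Fin M), ∀ i j, subm A S i j = subm A S j i := by
    intro S i j
    exact hA _ _
  have hhaf : haf (prism A (Complex.I * x)) =
      ∑ S : Finset (Fin M), (Complex.I * x) ^ (M - S.card) * (haf (subm A S)) ^ 2 := by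
    rw [GbsAux.haf_eq_matchSum (fun a b => GbsAux.prism_symm hA (Complex.I * x) a b),
      GbsAux.matchSum_prism]
    apply Finset.sum_congr rfl
    intro S _
    rw [← GbsAux.matchSum_subm, ← GbsAux.haf_eq_matchSum (hsub S)]
  rw [hhaf, GBS, Polynomial.eval_finset_sum, Finset.mul_sum]
  apply Finset.sum_congr rfl
  intro S _
  rw [Polynomial.eval_mul, Polynomial.eval_C, Polynomial.eval_pow, Polynomial.eval_X]
  have hcard : S.card ≤ M := by
    have := Finset.card_le_univ S
    simpa using this
  by_cases hs : 2 ∣ S.card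
  · obtain ⟨t, ht⟩ := hs
    have hM : M = (M - S.card) + 2 * t := by omega
    set h0 := haf (subm A S) with hh0
    rw [show S.card / 2 = t by omega]
    have e2 : ((-Complex.I : ℂ))^2 = -1 := by
      rw [neg_sq, Complex.I_sq]
    have e1 : (-Complex.I : ℂ)^M = (-Complex.I)^(M - S.card) * ((-Complex.I)^2)^t := by
      rw [← pow_mul, ← pow_add, ← hM]
    have e3 : (-Complex.I : ℂ)^(M - S.card) * Complex.I^(M - S.card) = 1 := by
      rw [← mul_pow, neg_mul, Complex.I_mul_I, neg_neg, one_pow]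
    have e4 : (-Complex.I : ℂ)^M * ((Complex.I*x)^(M - S.card) * h0^2) =
        ((-Complex.I)^(M-S.card) * Complex.I^(M-S.card)) * ((-1:ℂ)^t * (x^(M-S.card) * h0^2)) := by
      rw [e1, e2, mul_pow]
      ring
    rw [e4, e3, one_mul]
    ring
  · have h0 : haf (subm A S) = 0 := by
      rw [haf, dif_neg hs]
    rw [h0]
    ring
end

section
/- If Y and Z are m × m symmetric matrices over a commutative ring, then haf(Y + Z) = Σ_{T ⊆ [m]} haf(Y_{T,T}) · haf(Z_{T^c,T^c}), where the sum is over all subsets T of [m], T^c is the complement of T, and haf of the empty matrix is 1. -/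
open Finset Polynomial

/-!
Write `haf A = (p! 2^p)⁻¹ ∑_e ∏_j A (e (j, 0)) (e (j, 1))`, the sum running over the bijections
`e : Fin p × Fin 2 ≃ Fin m` (`p = m / 2`). Expanding each product for `Y + Z` over the set `S` of
labels `j` whose pair takes its entry from `Y`, the bijections with a given `S` correspond to a set
`T`, a pairing of `T` labelled by `S` and a pairing of `Tᶜ` labelled by `Sᶜ`. Only `S` with
`2 |S| = |T|` contribute, and the `C(p, |T|/2)` of them turn the normalisation `p! 2^p` into
`k! 2^k (p-k)! 2^(p-k)` with `k = |T|/2`.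
-/

section SumComplEquiv

variable {ι α β : Type*} [Fintype ι] [DecidableEq ι] [Fintype α]

def Finset.sumComplEquiv (T : Finset ι) : T ⊕ ↥Tᶜ ≃ ι :=
  ((Equiv.refl _).sumCongr (Equiv.subtypeEquivRight fun _ => mem_compl)).trans
    (Equiv.sumCompl (· ∈ T))

@[simp]
theorem Finset.sumComplEquiv_inl (T : Finset ι) (x : T) : T.sumComplEquiv (Sum.inl x) = x :=
  rfl

@[simp]
theorem Finset.sumComplEquiv_inr (T : Finset ι) (x : ↥Tᶜ) : T.sumComplEquiv (Sum.inr x) = x :=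
  rfl

theorem image_sumCongr_trans_sumComplEquiv_inl (T : Finset ι) (e₁ : α ≃ T) (e₂ : β ≃ ↥Tᶜ) :
    univ.image ((e₁.sumCongr e₂).trans T.sumComplEquiv ∘ Sum.inl) = T := by
  ext x
  simp only [mem_image, mem_univ, true_and, Function.comp_apply, Equiv.trans_apply,
    Equiv.sumCongr_apply, Sum.map_inl, Finset.sumComplEquiv_inl]
  exact ⟨by rintro ⟨a, rfl⟩; exact (e₁ a).2, fun hx => ⟨e₁.symm ⟨x, hx⟩, by simp⟩⟩

theorem sumCongr_trans_sumComplEquiv_injective :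
    Function.Injective fun x : Σ T : Finset ι, (α ≃ T) × (β ≃ ↥Tᶜ) =>
      (x.2.1.sumCongr x.2.2).trans x.1.sumComplEquiv := by
  rintro ⟨T, e₁, e₂⟩ ⟨T', e₁', e₂'⟩ h
  obtain rfl : T = T' := by
    rw [← image_sumCongr_trans_sumComplEquiv_inl T e₁ e₂,
      ← image_sumCongr_trans_sumComplEquiv_inl T' e₁' e₂']
    exact congrArg (fun E : α ⊕ β ≃ ι => univ.image (E ∘ Sum.inl)) h
  obtain rfl : e₁ = e₁' := Equiv.ext fun a => Subtype.ext (Equiv.congr_fun h (Sum.inl a))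
  obtain rfl : e₂ = e₂' := Equiv.ext fun b => Subtype.ext (Equiv.congr_fun h (Sum.inr b))
  rfl

theorem sumCongr_trans_sumComplEquiv_surjective :
    Function.Surjective fun x : Σ T : Finset ι, (α ≃ T) × (β ≃ ↥Tᶜ) =>
      (x.2.1.sumCongr x.2.2).trans x.1.sumComplEquiv := by
  intro E
  set T := univ.image (E ∘ Sum.inl)
  have hT (a : α) : E (Sum.inl a) ∈ T := mem_image_of_mem _ (mem_univ a)
  have hTc (b : β) : E (Sum.inr b) ∈ Tᶜ := by simp [T]
  let e₁ : α ≃ T := Equiv.ofBijective (fun a => ⟨E (Sum.inl a), hT a⟩)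
    ⟨fun a a' h => by simpa using h, fun ⟨x, hx⟩ => by
      obtain ⟨a, -, rfl⟩ := mem_image.1 hx
      exact ⟨a, rfl⟩⟩
  let e₂ : β ≃ ↥Tᶜ := Equiv.ofBijective (fun b => ⟨E (Sum.inr b), hTc b⟩)
    ⟨fun b b' h => by simpa using h, fun ⟨x, hx⟩ => by
      obtain ⟨a | b, rfl⟩ := E.surjective x
      · exact absurd (hT a) (mem_compl.1 hx)
      · exact ⟨b, rfl⟩⟩
  exact ⟨⟨T, e₁, e₂⟩, Equiv.ext <| by rintro (a | b) <;> rfl⟩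

end SumComplEquiv

section PairingSum

variable {R : Type*} [CommSemiring R] {ι κ : Type*} [Fintype ι] [DecidableEq ι]
  [Fintype κ] [DecidableEq κ] (J : Type*) [Fintype J] [DecidableEq J]

/-- An `e : J × Fin 2 ≃ ι` is a perfect matching of `ι` whose pairs are labelled by `J` and
ordered. -/
def pairingSum (A : Matrix ι ι R) : R :=
  ∑ e : J × Fin 2 ≃ ι, ∏ j, A (e (j, 0)) (e (j, 1))

variable {J}

theorem pairingSum_submatrix (f : κ ≃ ι) (A : Matrix ι ι R) :
    pairingSum J (A.submatrix f f) = pairingSum J A :=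
  Fintype.sum_equiv (Equiv.equivCongr (Equiv.refl _) f) _ _ fun _ => by simp

theorem pairingSum_eq_pairingSum_fin (A : Matrix ι ι R) :
    pairingSum J A = pairingSum (Fin (Fintype.card J)) A := by
  let g := (Fintype.equivFin J).prodCongr (Equiv.refl (Fin 2))
  refine Fintype.sum_equiv (Equiv.equivCongr g (Equiv.refl _)) _ _ fun e => ?_
  exact Fintype.prod_equiv (Fintype.equivFin J) _ _ fun j => by simp [g]

theorem pairingSum_eq_zero_of_card_ne (A : Matrix ι ι R)
    (h : Fintype.card ι ≠ 2 * Fintype.card J) : pairingSum J A = 0 := by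
  have : IsEmpty (J × Fin 2 ≃ ι) :=
    ⟨fun e => h (by rw [← Fintype.card_congr e]; simp [mul_comm])⟩
  exact Fintype.sum_empty _

theorem sum_equiv_sum_eq_sum_finset {α β : Type*} [Fintype α] [DecidableEq α] [Fintype β]
    [DecidableEq β] (G : (α → ι) → R) (H : (β → ι) → R) :
    ∑ E : α ⊕ β ≃ ι, G (E ∘ Sum.inl) * H (E ∘ Sum.inr) =
      ∑ T : Finset ι, (∑ e : α ≃ T, G ((↑) ∘ e)) * ∑ e : β ≃ ↥Tᶜ, H ((↑) ∘ e) := by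
  rw [← Fintype.sum_bijective _
    ⟨sumCongr_trans_sumComplEquiv_injective, sumCongr_trans_sumComplEquiv_surjective⟩ _ _
    fun _ => rfl, Fintype.sum_sigma]
  simp_rw [Fintype.sum_mul_sum, Fintype.sum_prod_type]
  rfl

theorem pairingSum_add (Y Z : Matrix ι ι R) :
    pairingSum J (Y + Z) = ∑ S : Finset J, ∑ T : Finset ι,
      pairingSum S (Y.submatrix ((↑) : T → ι) (↑)) *
        pairingSum ↥Sᶜ (Z.submatrix ((↑) : ↥Tᶜ → ι) (↑)) := by
  simp only [pairingSum, Matrix.add_apply, prod_add]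
  rw [Finset.sum_comm, powerset_univ]
  refine Fintype.sum_congr _ _ fun S => ?_
  let d : J × Fin 2 ≃ (S × Fin 2) ⊕ (↥Sᶜ × Fin 2) :=
    (S.sumComplEquiv.symm.prodCongr (Equiv.refl _)).trans (Equiv.sumProdDistrib _ _ _)
  refine (Fintype.sum_equiv (Equiv.equivCongr d (Equiv.refl _)) _ _ fun E => ?_).trans
    (sum_equiv_sum_eq_sum_finset (fun f => ∏ j : S, Y (f (j, 0)) (f (j, 1)))
      (fun f => ∏ j : ↥Sᶜ, Z (f (j, 0)) (f (j, 1))))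
  rw [← compl_eq_univ_sdiff, ← prod_coe_sort S, ← prod_coe_sort Sᶜ]
  simp [d]

theorem sum_finset_pairingSum_mul_pairingSum_compl (A : Matrix ι ι R) (B : Matrix κ κ R) :
    ∑ S : Finset J, pairingSum S A * pairingSum ↥Sᶜ B =
      (Fintype.card J).choose (Fintype.card ι / 2) * pairingSum (Fin (Fintype.card ι / 2)) A *
        pairingSum (Fin (Fintype.card J - Fintype.card ι / 2)) B := by
  have h (S : Finset J) : pairingSum S A * pairingSum ↥Sᶜ B =
      pairingSum (Fin #S) A * pairingSum (Fin (Fintype.card J - #S)) B := by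
    rw [pairingSum_eq_pairingSum_fin, pairingSum_eq_pairingSum_fin (J := ↥Sᶜ),
      Fintype.card_coe, Fintype.card_coe, card_compl]
  rw [Fintype.sum_congr _ _ h, ← powerset_univ]
  refine (sum_powerset_apply_card
    fun k => pairingSum (Fin k) A * pairingSum (Fin (Fintype.card J - k)) B).trans ?_
  rw [card_univ, sum_eq_single (Fintype.card ι / 2)]
  · rw [nsmul_eq_mul, mul_assoc]
  · intro k _ hk
    rw [pairingSum_eq_zero_of_card_ne A (by rw [Fintype.card_fin]; omega), zero_mul, smul_zero]
  · intro hk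
    rw [Nat.choose_eq_zero_of_lt (by simpa using hk), zero_smul]

end PairingSum

theorem haf_eq_pairingSum {F : Type*} [Field F] {n : ℕ} (A : Matrix (Fin n) (Fin n) F) :
    haf A = (((n / 2).factorial * 2 ^ (n / 2) : ℕ) : F)⁻¹ * pairingSum (Fin (n / 2)) A := by
  by_cases h : 2 ∣ n
  · rw [haf, dif_pos h]
    congr 1
    let g : Fin (n / 2) × Fin 2 ≃ Fin n :=
      finProdFinEquiv.trans (finCongr (Nat.div_mul_cancel h))
    refine Fintype.sum_equiv (Equiv.equivCongr g.symm (Equiv.refl _)) _ _ fun σ => ?_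
    refine Fintype.prod_congr _ _ fun j => ?_
    simp [g, finProdFinEquiv, add_comm]
  · rw [haf, dif_neg h, pairingSum_eq_zero_of_card_ne _ (by simp; omega), mul_zero]

theorem haf_subm {F : Type*} [Field F] {M : ℕ} (A : Matrix (Fin M) (Fin M) F)
    (S : Finset (Fin M)) :
    haf (subm A S) = (((#S / 2).factorial * 2 ^ (#S / 2) : ℕ) : F)⁻¹ *
      pairingSum (Fin (#S / 2)) (A.submatrix ((↑) : S → Fin M) (↑)) := by
  rw [haf_eq_pairingSum, ← pairingSum_submatrix (S.orderIsoOfFin rfl).toEquiv]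
  rfl

theorem inv_factorial_mul_two_pow_mul_choose {F : Type*} [Field F] [CharZero F] {p k : ℕ}
    (hk : k ≤ p) :
    ((p.factorial * 2 ^ p : ℕ) : F)⁻¹ * p.choose k =
      ((k.factorial * 2 ^ k : ℕ) : F)⁻¹ * (((p - k).factorial * 2 ^ (p - k) : ℕ) : F)⁻¹ := by
  have h2 : (2 : F) ^ p = 2 ^ k * 2 ^ (p - k) := by rw [← pow_add, Nat.add_sub_cancel' hk]
  have : (p.factorial : F) ≠ 0 := Nat.cast_ne_zero.2 p.factorial_ne_zero
  rw [Nat.cast_choose F hk]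
  push_cast
  rw [h2]
  field_simp

theorem haf_add_general {m : ℕ} (Y Z : Matrix (Fin m) (Fin m) ℝ) :
    haf (Y + Z) = ∑ T : Finset (Fin m), haf (subm Y T) * haf (subm Z Tᶜ) := by
  rw [haf_eq_pairingSum, pairingSum_add, Finset.sum_comm, Finset.mul_sum]
  refine Fintype.sum_congr _ _ fun T => ?_
  rw [sum_finset_pairingSum_mul_pairingSum_compl, haf_subm, haf_subm, Fintype.card_coe,
    Fintype.card_fin]
  by_cases hT : 2 ∣ #T
  · have hk : #T / 2 ≤ m / 2 := Nat.div_le_div_right (card_le_univ T |>.trans_eq (by simp))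
    have hc : #Tᶜ / 2 = m / 2 - #T / 2 := by rw [card_compl, Fintype.card_fin]; omega
    rw [hc]
    linear_combination pairingSum (Fin (#T / 2)) (Y.submatrix ((↑) : T → Fin m) (↑)) *
      pairingSum (Fin (m / 2 - #T / 2)) (Z.submatrix ((↑) : ↥Tᶜ → Fin m) (↑)) *
        inv_factorial_mul_two_pow_mul_choose (F := ℝ) hk
  · have hY : pairingSum (Fin (#T / 2)) (Y.submatrix ((↑) : T → Fin m) (↑)) = 0 :=
      pairingSum_eq_zero_of_card_ne _ (by rw [Fintype.card_coe, Fintype.card_fin]; omega)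
    rw [hY]
    ring

/-- `haf(Y+Z) = ∑_{T ⊆ [m]} haf(Y_{T,T}) · haf(Z_{T^c,T^c})` for symmetric matrices. -/
theorem haf_add {m : ℕ} (Y Z : Matrix (Fin m) (Fin m) ℝ)
    (hY : Y.IsSymm) (hZ : Z.IsSymm) :
    haf (Y + Z) = ∑ T : Finset (Fin m), haf (subm Y T) * haf (subm Z Tᶜ) :=
  haf_add_general Y Z
end
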